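/- arXiv:2207.04522 — 2 statements merged into one kernel-verified Lean document; each statement's English description precedes it below -/
import Mathlib

section
/- Define f(x) = x(1−x)(1.66 − 0.38·x(1−x)) and g(x) = x(1−x)(2 − (2/3)·x(1−x)). Let W be a balanced tetrahedral erasure channel. If E(W) ≥ f(H(W)), then E(W^s) ≥ f(H(W^s)) and E(W^p) ≥ f(H(W^p)); and if E(W) ≤ g(H(W)), then E(W^s) ≤ g(H(W^s)) and E(W^p) ≤ g(H(W^p)). (Thus y = f(x) is an inner bound and y = g(x) an outer bound of a trapping region tighter than the one bounded by (2√7−4)x(1−x) and 2x(1−x).) -/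
noncomputable section

/-- A quintuple of reals representing a candidate tetrahedral erasure channel
`W = (p, q, r, s, t)`. -/
structure TECQuint where
  p : ℝ
  q : ℝ
  r : ℝ
  s : ℝ
  t : ℝ

namespace TECQuint

/-- `W` is a tetrahedral erasure channel: all five entries are nonnegative and sum to 1. -/
def IsTEC (W : TECQuint) : Prop :=
  0 ≤ W.p ∧ 0 ≤ W.q ∧ 0 ≤ W.r ∧ 0 ≤ W.s ∧ 0 ≤ W.t ∧
    W.p + W.q + W.r + W.s + W.t = 1

/-- `W` is balanced: `q = r = s`. -/
def Balanced (W : TECQuint) : Prop := W.q = W.r ∧ W.r = W.s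

/-- The serial child `W^s`. -/
def ser (W : TECQuint) : TECQuint where
  p := W.p ^ 2
  q := W.p * W.s + W.s * W.q + W.q * W.p
  r := W.p * W.q + W.q * W.r + W.r * W.p
  s := W.p * W.r + W.r * W.s + W.s * W.p
  t := 1 - (W.p ^ 2 + (W.p * W.s + W.s * W.q + W.q * W.p)
      + (W.p * W.q + W.q * W.r + W.r * W.p)
      + (W.p * W.r + W.r * W.s + W.s * W.p))

/-- The parallel child `W^p`. -/
def par (W : TECQuint) : TECQuint where
  p := 1 - ((W.t * W.s + W.s * W.q + W.q * W.t)
      + (W.t * W.q + W.q * W.r + W.r * W.t)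
      + (W.t * W.r + W.r * W.s + W.s * W.t) + W.t ^ 2)
  q := W.t * W.s + W.s * W.q + W.q * W.t
  r := W.t * W.q + W.q * W.r + W.r * W.t
  s := W.t * W.r + W.r * W.s + W.s * W.t
  t := W.t ^ 2

/-- The moment of inertia `A(W) = (q−r)² + (r−s)² + (s−q)²`. -/
def inertia (W : TECQuint) : ℝ :=
  (W.q - W.r) ^ 2 + (W.r - W.s) ^ 2 + (W.s - W.q) ^ 2

/-- The (conditional) entropy `H(W) = (q+r+s)/2 + t`. -/
def entropy (W : TECQuint) : ℝ := (W.q + W.r + W.s) / 2 + W.t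

/-- The edge mass `E(W) = q + r + s`. -/
def edgeMass (W : TECQuint) : ℝ := W.q + W.r + W.s

/-- The Quetelet index `Q(W) = E(W) / (H(W)(1−H(W)))`. -/
def quetelet (W : TECQuint) : ℝ :=
  edgeMass W / (entropy W * (1 - entropy W))

/-- One step of the channel process: `true` picks the serial child, `false` the parallel child. -/
def child (W : TECQuint) (b : Bool) : TECQuint := if b then ser W else par W

/-- The descendant `W^c` of `W` along the string `c ∈ {s,p}^n`. -/
def descend : TECQuint → {n : ℕ} → (Fin n → Bool) → TECQuint
  | W, 0, _ => W
  | W, _ + 1, c => descend (child W (c 0)) (fun i => c i.succ)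

end TECQuint

open TECQuint

/-- The inner bound `f(x) = x(1−x)(1.66 − 0.38·x(1−x))`. -/
noncomputable def fInner (x : ℝ) : ℝ := x * (1 - x) * (1.66 - 0.38 * (x * (1 - x)))

/-- The outer bound `g(x) = x(1−x)(2 − (2/3)·x(1−x))`. -/
noncomputable def gOuter (x : ℝ) : ℝ := x * (1 - x) * (2 - (2 / 3) * (x * (1 - x)))

lemma fInner_eq (x : ℝ) : fInner x = x * (1 - x) * (83/50 - 19/50 * (x * (1 - x))) := by
  unfold fInner; norm_num

lemma gOuter_eq (x : ℝ) : gOuter x = x * (1 - x) * (2 - 2/3 * (x * (1 - x))) := by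
  unfold gOuter; norm_num

lemma fInner_symm (x : ℝ) : fInner (1 - x) = fInner x := by
  unfold fInner; ring

lemma gOuter_symm (x : ℝ) : gOuter (1 - x) = gOuter x := by
  unfold gOuter; ring

set_option maxHeartbeats 4000000 in
lemma core_f (p q : ℝ) (hp : 0 ≤ p) (hq : 0 ≤ q) (ht : 0 ≤ 1-p-3*q)
    (h : fInner (3*q/2 + (1-p-3*q)) ≤ 3*q) :
    fInner (1 - p^2 - 3*q*(2*p+q)/2) ≤ 3*q*(2*p+q) := by
  rw [fInner_eq] at h ⊢
  have hh : (0:ℝ) ≤ (3*q - ((3*q/2 + (1-p-3*q)) * (1 - (3*q/2 + (1-p-3*q))) * (83/50 - 19/50 * ((3*q/2 + (1-p-3*q)) * (1 - (3*q/2 + (1-p-3*q))))))) := sub_nonneg.2 h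
  rcases le_or_gt ((3*q/2 + (1-p-3*q))) (1/10) with hc0 | hc0
  · -- band [0,1/10]
    have hA : (0:ℝ) ≤ (3*q/2 + (1-p-3*q)) - 0 := by linarith
    have hB : (0:ℝ) ≤ 1/10 - (3*q/2 + (1-p-3*q)) := by linarith
    have hS : (0:ℝ) ≤ (1180386501227570373529292330035752121613539502631173/898032400225195475588914874148251120729140144244670:ℝ) * (3*q - ((3*q/2 + (1-p-3*q)) * (1 - (3*q/2 + (1-p-3*q))) * (83/50 - 19/50 * ((3*q/2 + (1-p-3*q)) * (1 - (3*q/2 + (1-p-3*q))))))) +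
        (197422745844774325930674268239400958432085950627161/718425920180156380471131899318600896583312115395736:ℝ) * p * p * (3*q - ((3*q/2 + (1-p-3*q)) * (1 - (3*q/2 + (1-p-3*q))) * (83/50 - 19/50 * ((3*q/2 + (1-p-3*q)) * (1 - (3*q/2 + (1-p-3*q))))))) +
        (12012908876011794421134831997823313978827940081947/39912551121119798915062883295477827587961784188652:ℝ) * p * p * p * (1-p-3*q) * (3*q - ((3*q/2 + (1-p-3*q)) * (1 - (3*q/2 + (1-p-3*q))) * (83/50 - 19/50 * ((3*q/2 + (1-p-3*q)) * (1 - (3*q/2 + (1-p-3*q))))))) +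
        (13160568730689147746930723772644428052726546958179/89803240022519547558891487414825112072914014424467:ℝ) * p * p * p * ((3*q/2 + (1-p-3*q)) - 0) * (3*q - ((3*q/2 + (1-p-3*q)) * (1 - (3*q/2 + (1-p-3*q))) * (83/50 - 19/50 * ((3*q/2 + (1-p-3*q)) * (1 - (3*q/2 + (1-p-3*q))))))) +
        (43006402098078365242956759741067123472894443876657/239475306726718793490377299772866965527770705131912:ℝ) * p * p * q * (3*q - ((3*q/2 + (1-p-3*q)) * (1 - (3*q/2 + (1-p-3*q))) * (83/50 - 19/50 * ((3*q/2 + (1-p-3*q)) * (1 - (3*q/2 + (1-p-3*q))))))) +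
        (955977472331544556009133500735606691673848736139/239475306726718793490377299772866965527770705131912:ℝ) * p * (1-p-3*q) * (1-p-3*q) * (3*q - ((3*q/2 + (1-p-3*q)) * (1 - (3*q/2 + (1-p-3*q))) * (83/50 - 19/50 * ((3*q/2 + (1-p-3*q)) * (1 - (3*q/2 + (1-p-3*q))))))) +
        (34926988651065688938537509769270594309262561462709/179606480045039095117782974829650224145828028848934:ℝ) * p * (1-p-3*q) * (1-p-3*q) * (1-p-3*q) * (3*q - ((3*q/2 + (1-p-3*q)) * (1 - (3*q/2 + (1-p-3*q))) * (83/50 - 19/50 * ((3*q/2 + (1-p-3*q)) * (1 - (3*q/2 + (1-p-3*q))))))) +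
        (46772751048367296798039069440128676901999970700179/89803240022519547558891487414825112072914014424467:ℝ) * p * ((3*q/2 + (1-p-3*q)) - 0) * ((3*q/2 + (1-p-3*q)) - 0) * (3*q - ((3*q/2 + (1-p-3*q)) * (1 - (3*q/2 + (1-p-3*q))) * (83/50 - 19/50 * ((3*q/2 + (1-p-3*q)) * (1 - (3*q/2 + (1-p-3*q))))))) +
        (986188329294501977865360947812536925485630691222877/359212960090078190235565949659300448291656057697868:ℝ) * (1-p-3*q) * (3*q - ((3*q/2 + (1-p-3*q)) * (1 - (3*q/2 + (1-p-3*q))) * (83/50 - 19/50 * ((3*q/2 + (1-p-3*q)) * (1 - (3*q/2 + (1-p-3*q))))))) +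
        (28294762104725346148209751809352454968733827191377/239475306726718793490377299772866965527770705131912:ℝ) * (1-p-3*q) * (1-p-3*q) * (1-p-3*q) * (3*q - ((3*q/2 + (1-p-3*q)) * (1 - (3*q/2 + (1-p-3*q))) * (83/50 - 19/50 * ((3*q/2 + (1-p-3*q)) * (1 - (3*q/2 + (1-p-3*q))))))) +
        (54346952079551379057461898145025503176388244322131/359212960090078190235565949659300448291656057697868:ℝ) * (1-p-3*q) * (1-p-3*q) * (1-p-3*q) * (1-p-3*q) * (3*q - ((3*q/2 + (1-p-3*q)) * (1 - (3*q/2 + (1-p-3*q))) * (83/50 - 19/50 * ((3*q/2 + (1-p-3*q)) * (1 - (3*q/2 + (1-p-3*q))))))) +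
        (1475599467667410680940778331845995687218533390296863/359212960090078190235565949659300448291656057697868:ℝ) * (1/10 - (3*q/2 + (1-p-3*q))) * (3*q - ((3*q/2 + (1-p-3*q)) * (1 - (3*q/2 + (1-p-3*q))) * (83/50 - 19/50 * ((3*q/2 + (1-p-3*q)) * (1 - (3*q/2 + (1-p-3*q))))))) +
        (303870510897137244049726052140419500291346223053779/7982510224223959783012576659095565517592356837730400:ℝ) * p * p * p * p * p * p * q * q +
        (469400294327640769653290863175164607875880102525630651/191580245381375034792301839818293572422216564105529600:ℝ) * p * p * p * p * p * q * (1-p-3*q) * (1-p-3*q) +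
        (1173499470481008788594082654847050645344301058845827269/2873703680720625521884527597274403586333248461582944000:ℝ) * p * p * p * p * p * (1-p-3*q) * (1-p-3*q) +
        (410738226567240273530356287581587095722041039850190491/287370368072062552188452759727440358633324846158294400:ℝ) * p * p * p * p * p * (1-p-3*q) * (1-p-3*q) * (1/10 - (3*q/2 + (1-p-3*q))) +
        (718682903082627419189850141173131772542897654857931/2245081000562988688972287185370627801822850360611675:ℝ) * p * p * p * p * p * (1-p-3*q) * ((3*q/2 + (1-p-3*q)) - 0) +
        (32064516082427815452497392439399346710035596435329/1496720667041992459314858123580418534548566907074450:ℝ) * p * p * p * p * p * ((3*q/2 + (1-p-3*q)) - 0) * ((3*q/2 + (1-p-3*q)) - 0) * ((3*q/2 + (1-p-3*q)) - 0) +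
        (2259795996218459264205377807536672413307478989005119/5986882668167969837259432494321674138194267628297800:ℝ) * p * p * p * p * q * (1-p-3*q) +
        (2227707937141381816726521067316150911958848433650567/638600817937916782641006132727645241407388547018432:ℝ) * p * p * p * p * (1-p-3*q) * (1-p-3*q) * (1-p-3*q) * (1/10 - (3*q/2 + (1-p-3*q))) +
        (304111141351206604846738879018157245756070109135371/8980324002251954755889148741482511207291401442446700:ℝ) * p * p * p * p * ((3*q/2 + (1-p-3*q)) - 0) * ((3*q/2 + (1-p-3*q)) - 0) +
        (60772338169834602097749589974943649421348069667631/4490162001125977377944574370741255603645700721223350:ℝ) * p * p * p * p * ((3*q/2 + (1-p-3*q)) - 0) * ((3*q/2 + (1-p-3*q)) - 0) * ((3*q/2 + (1-p-3*q)) - 0) +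
        (2413755414071763510283510265456805214466077280767403/14368518403603127609422637986372017931666242307914720:ℝ) * p * p * p * (1-p-3*q) * (1-p-3*q) * (1-p-3*q) +
        (164241044685895535497314572588427653567430166924576349/71842592018015638047113189931860089658331211539573600:ℝ) * p * p * p * (1-p-3*q) * (1-p-3*q) * (1-p-3*q) * (1-p-3*q) +
        (69012098246313573723167316866933376534973533605443981/47895061345343758698075459954573393105554141026382400:ℝ) * p * p * p * (1-p-3*q) * (1-p-3*q) * (1-p-3*q) * (1-p-3*q) * (1-p-3*q) +
        (88338023324496424316466459667303446760619531489477539/28737036807206255218845275972744035863332484615829440:ℝ) * p * p * p * (1-p-3*q) * (1-p-3*q) * (1-p-3*q) * (1-p-3*q) * (1/10 - (3*q/2 + (1-p-3*q))) +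
        (710203297142360750709013637737806916899288426685681/1796064800450390951177829748296502241458280288489340:ℝ) * p * p * p * ((3*q/2 + (1-p-3*q)) - 0) * ((3*q/2 + (1-p-3*q)) - 0) * (1/10 - (3*q/2 + (1-p-3*q))) +
        (16557924057360978471597700318111031696068183882416521/17960648004503909511778297482965022414582802884893400:ℝ) * p * p * (1-p-3*q) * (1-p-3*q) * (1-p-3*q) +
        (90929604517985592263212597095871008405649743003523/212866939312638927547002044242548413802462849006144:ℝ) * p * p * (1-p-3*q) * (1-p-3*q) * (1-p-3*q) * (1-p-3*q) * (1-p-3*q) * (1/10 - (3*q/2 + (1-p-3*q))) +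
        (117716786785806121577598541907859056903614746163107/110868197558666108097396898042993965522116067190700:ℝ) * p * p * (1-p-3*q) * ((3*q/2 + (1-p-3*q)) - 0) * ((3*q/2 + (1-p-3*q)) - 0) * ((3*q/2 + (1-p-3*q)) - 0) * ((3*q/2 + (1-p-3*q)) - 0) * ((3*q/2 + (1-p-3*q)) - 0) +
        (2037990203714610110621204854124403608860443501577543/11973765336335939674518864988643348276388535256595600:ℝ) * p * (1-p-3*q) * (1-p-3*q) * (1-p-3*q) * (1-p-3*q) * (1-p-3*q) * (1-p-3*q) * (1-p-3*q) +
        (9550908054804183397596206570068858875585874206871321/28737036807206255218845275972744035863332484615829440:ℝ) * p * (1-p-3*q) * (1-p-3*q) * (1-p-3*q) * (1-p-3*q) * (1-p-3*q) * (1-p-3*q) * (1/10 - (3*q/2 + (1-p-3*q))) +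
        (14654465284289048385487168196670105587653352547593569/35921296009007819023556594965930044829165605769786800:ℝ) * p * (1-p-3*q) * (1-p-3*q) * (1-p-3*q) * (1-p-3*q) * (1-p-3*q) * ((3*q/2 + (1-p-3*q)) - 0) +
        (43676910359398091562356741885214139147376703659663/598688266816796983725943249432167413819426762829780:ℝ) * p * ((3*q/2 + (1-p-3*q)) - 0) * ((3*q/2 + (1-p-3*q)) - 0) * (1/10 - (3*q/2 + (1-p-3*q))) +
        (670608181458318075339748904864009335610407812309701/1330418370703993297168762776515927586265392806288400:ℝ) * q * (1-p-3*q) * (1-p-3*q) * (1-p-3*q) * (1-p-3*q) * (1-p-3*q) +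
        (5457061103504554947598636501646560277610603976008059/23947530672671879349037729977286696552777070513191200:ℝ) * (1-p-3*q) * (1-p-3*q) * (1-p-3*q) +
        (7064616393163532624042800901040072419345393945576209/71842592018015638047113189931860089658331211539573600:ℝ) * (1-p-3*q) * (1-p-3*q) * (1-p-3*q) * (1-p-3*q) * (1-p-3*q) * (1-p-3*q) +
        (2902169068567868629046774920534756669475648663284181/287370368072062552188452759727440358633324846158294400:ℝ) * (1-p-3*q) * (1-p-3*q) * (1-p-3*q) * (1-p-3*q) * (1-p-3*q) * (1-p-3*q) * (1-p-3*q) * (1-p-3*q) +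
        (300378553428603513922665098480077307928616065043543/9579012269068751739615091990914678621110828205276480:ℝ) * (1-p-3*q) * (1-p-3*q) * (1-p-3*q) * (1-p-3*q) * (1-p-3*q) * (1-p-3*q) * (1-p-3*q) * (1/10 - (3*q/2 + (1-p-3*q))) +
        (172249729731267222885674926188841267741045821201631/1496720667041992459314858123580418534548566907074450:ℝ) * (1-p-3*q) * (1-p-3*q) * ((3*q/2 + (1-p-3*q)) - 0) * ((3*q/2 + (1-p-3*q)) - 0) * ((3*q/2 + (1-p-3*q)) - 0) * ((3*q/2 + (1-p-3*q)) - 0) * ((3*q/2 + (1-p-3*q)) - 0) * ((3*q/2 + (1-p-3*q)) - 0) +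
        (390572742064372058930527422522465360471524705832217/898032400225195475588914874148251120729140144244670:ℝ) * ((3*q/2 + (1-p-3*q)) - 0) * ((3*q/2 + (1-p-3*q)) - 0) * ((3*q/2 + (1-p-3*q)) - 0) * ((3*q/2 + (1-p-3*q)) - 0) * ((3*q/2 + (1-p-3*q)) - 0) * ((3*q/2 + (1-p-3*q)) - 0) * (1/10 - (3*q/2 + (1-p-3*q))) +
        (1407738477556869975701751084456663881881716171689/39912551121119798915062883295477827587961784188652:ℝ) * ((3*q/2 + (1-p-3*q)) - 0) * ((3*q/2 + (1-p-3*q)) - 0) * (1/10 - (3*q/2 + (1-p-3*q))) +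
        (76691293241270056065607953383418282368912142774800/89803240022519547558891487414825112072914014424467:ℝ) * (3*q - ((3*q/2 + (1-p-3*q)) * (1 - (3*q/2 + (1-p-3*q))) * (83/50 - 19/50 * ((3*q/2 + (1-p-3*q)) * (1 - (3*q/2 + (1-p-3*q))))))) * (3*q - ((3*q/2 + (1-p-3*q)) * (1 - (3*q/2 + (1-p-3*q))) * (83/50 - 19/50 * ((3*q/2 + (1-p-3*q)) * (1 - (3*q/2 + (1-p-3*q))))))) :=
      (add_nonneg (add_nonneg (add_nonneg (add_nonneg (add_nonneg (add_nonneg (add_nonneg (add_nonneg (add_nonneg (add_nonneg (add_nonneg (add_nonneg (add_nonneg (add_nonneg (add_nonneg (add_nonneg (add_nonneg (add_nonneg (add_nonneg (add_nonneg (add_nonneg (add_nonneg (add_nonneg (add_nonneg (add_nonneg (add_nonneg (add_nonneg (add_nonneg (add_nonneg (add_nonneg (add_nonneg (add_nonneg (add_nonneg (add_nonneg (add_nonneg (add_nonneg (add_nonneg (add_nonneg (add_nonneg (add_nonneg (add_nonneg (add_nonneg (mul_nonneg (by norm_num : (0:ℝ) ≤ (1180386501227570373529292330035752121613539502631173/898032400225195475588914874148251120729140144244670:ℝ))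 hh) (mul_nonneg (mul_nonneg (mul_nonneg (by norm_num : (0:ℝ) ≤ (197422745844774325930674268239400958432085950627161/718425920180156380471131899318600896583312115395736:ℝ)) hp) hp) hh)) (mul_nonneg (mul_nonneg (mul_nonneg (mul_nonneg (mul_nonneg (by norm_num : (0:ℝ) ≤ (12012908876011794421134831997823313978827940081947/39912551121119798915062883295477827587961784188652:ℝ)) hp) hp) hp) ht) hh)) (mul_nonneg (mul_nonneg (mul_nonneg (mul_nonneg (mul_nonneg (by norm_num : (0:ℝ) ≤ (13160568730689147746930723772644428052726546958179/89803240022519547558891487414825112072914014424467:ℝ)) hp) hp) hp) hA) hh)) (mul_nonneg (mul_nonneg (mul_nonneg (mul_nonneg (by norm_num : (0:ℝ) ≤ (43006402098078365242956759741067123472894443876657/239475306726718793490377299772866965527770705131912:ℝ)) hp) hp) hq) hh)) (mul_nonneg (mul_nonneg (mul_nonneg (mul_nonneg (by norm_num : (0:ℝ) ≤ (955977472331544556009133500735606691673848736139/239475306726718793490377299772866965527770705131912:ℝ)) hp) ht) ht) hh)) (mul_nonneg (mul_nonneg (mul_nonneg (mul_nonneg (mul_nonneg (by norm_num : (0:ℝ)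 ≤ (34926988651065688938537509769270594309262561462709/179606480045039095117782974829650224145828028848934:ℝ)) hp) ht) ht) ht) hh)) (mul_nonneg (mul_nonneg (mul_nonneg (mul_nonneg (by norm_num : (0:ℝ) ≤ (46772751048367296798039069440128676901999970700179/89803240022519547558891487414825112072914014424467:ℝ)) hp) hA) hA) hh)) (mul_nonneg (mul_nonneg (by norm_num : (0:ℝ) ≤ (986188329294501977865360947812536925485630691222877/359212960090078190235565949659300448291656057697868:ℝ)) ht) hh)) (mul_nonneg (mul_nonneg (mul_nonneg (mul_nonneg (by norm_num : (0:ℝ) ≤ (28294762104725346148209751809352454968733827191377/239475306726718793490377299772866965527770705131912:ℝ)) ht) ht) ht) hh)) (mul_nonneg (mul_nonneg (mul_nonneg (mul_nonneg (mul_nonneg (by norm_num : (0:ℝ) ≤ (54346952079551379057461898145025503176388244322131/359212960090078190235565949659300448291656057697868:ℝ)) ht) ht) ht) ht) hh)) (mul_nonneg (mul_nonneg (by norm_num : (0:ℝ) ≤ (1475599467667410680940778331845995687218533390296863/359212960090078190235565949659300448291656057697868:ℝ)) hB) hh)) (mul_nonneg (mul_nonneg (mul_nonneg (mul_nonneg (mul_nonneg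 (mul_nonneg (mul_nonneg (mul_nonneg (by norm_num : (0:ℝ) ≤ (303870510897137244049726052140419500291346223053779/7982510224223959783012576659095565517592356837730400:ℝ)) hp) hp) hp) hp) hp) hp) hq) hq)) (mul_nonneg (mul_nonneg (mul_nonneg (mul_nonneg (mul_nonneg (mul_nonneg (mul_nonneg (mul_nonneg (by norm_num : (0:ℝ) ≤ (469400294327640769653290863175164607875880102525630651/191580245381375034792301839818293572422216564105529600:ℝ)) hp) hp) hp) hp) hp) hq) ht) ht)) (mul_nonneg (mul_nonneg (mul_nonneg (mul_nonneg (mul_nonneg (mul_nonneg (mul_nonneg (by norm_num : (0:ℝ) ≤ (1173499470481008788594082654847050645344301058845827269/2873703680720625521884527597274403586333248461582944000:ℝ)) hp) hp) hp) hp) hp) ht) ht)) (mul_nonneg (mul_nonneg (mul_nonneg (mul_nonneg (mul_nonneg (mul_nonneg (mul_nonneg (mul_nonneg (by norm_num : (0:ℝ) ≤ (410738226567240273530356287581587095722041039850190491/287370368072062552188452759727440358633324846158294400:ℝ)) hp) hp) hp) hp) hp) ht) ht) hB)) (mul_nonneg (mul_nonneg (mul_nonneg (mul_nonneg (mul_nonneg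 (mul_nonneg (mul_nonneg (by norm_num : (0:ℝ) ≤ (718682903082627419189850141173131772542897654857931/2245081000562988688972287185370627801822850360611675:ℝ)) hp) hp) hp) hp) hp) ht) hA)) (mul_nonneg (mul_nonneg (mul_nonneg (mul_nonneg (mul_nonneg (mul_nonneg (mul_nonneg (mul_nonneg (by norm_num : (0:ℝ) ≤ (32064516082427815452497392439399346710035596435329/1496720667041992459314858123580418534548566907074450:ℝ)) hp) hp) hp) hp) hp) hA) hA) hA)) (mul_nonneg (mul_nonneg (mul_nonneg (mul_nonneg (mul_nonneg (mul_nonneg (by norm_num : (0:ℝ) ≤ (2259795996218459264205377807536672413307478989005119/5986882668167969837259432494321674138194267628297800:ℝ)) hp) hp) hp) hp) hq) ht)) (mul_nonneg (mul_nonneg (mul_nonneg (mul_nonneg (mul_nonneg (mul_nonneg (mul_nonneg (mul_nonneg (by norm_num : (0:ℝ) ≤ (2227707937141381816726521067316150911958848433650567/638600817937916782641006132727645241407388547018432:ℝ)) hp) hp) hp) hp) ht) ht) ht) hB)) (mul_nonneg (mul_nonneg (mul_nonneg (mul_nonneg (mul_nonneg (mul_nonneg (by norm_num : (0:ℝ)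 ≤ (304111141351206604846738879018157245756070109135371/8980324002251954755889148741482511207291401442446700:ℝ)) hp) hp) hp) hp) hA) hA)) (mul_nonneg (mul_nonneg (mul_nonneg (mul_nonneg (mul_nonneg (mul_nonneg (mul_nonneg (by norm_num : (0:ℝ) ≤ (60772338169834602097749589974943649421348069667631/4490162001125977377944574370741255603645700721223350:ℝ)) hp) hp) hp) hp) hA) hA) hA)) (mul_nonneg (mul_nonneg (mul_nonneg (mul_nonneg (mul_nonneg (mul_nonneg (by norm_num : (0:ℝ) ≤ (2413755414071763510283510265456805214466077280767403/14368518403603127609422637986372017931666242307914720:ℝ)) hp) hp) hp) ht) ht) ht)) (mul_nonneg (mul_nonneg (mul_nonneg (mul_nonneg (mul_nonneg (mul_nonneg (mul_nonneg (by norm_num : (0:ℝ) ≤ (164241044685895535497314572588427653567430166924576349/71842592018015638047113189931860089658331211539573600:ℝ)) hp) hp) hp) ht) ht) ht) ht)) (mul_nonneg (mul_nonneg (mul_nonneg (mul_nonneg (mul_nonneg (mul_nonneg (mul_nonneg (mul_nonneg (by norm_num : (0:ℝ) ≤ (69012098246313573723167316866933376534973533605443981/47895061345343758698075459954573393105554141026382400:ℝ))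 hp) hp) hp) ht) ht) ht) ht) ht)) (mul_nonneg (mul_nonneg (mul_nonneg (mul_nonneg (mul_nonneg (mul_nonneg (mul_nonneg (mul_nonneg (by norm_num : (0:ℝ) ≤ (88338023324496424316466459667303446760619531489477539/28737036807206255218845275972744035863332484615829440:ℝ)) hp) hp) hp) ht) ht) ht) ht) hB)) (mul_nonneg (mul_nonneg (mul_nonneg (mul_nonneg (mul_nonneg (mul_nonneg (by norm_num : (0:ℝ) ≤ (710203297142360750709013637737806916899288426685681/1796064800450390951177829748296502241458280288489340:ℝ)) hp) hp) hp) hA) hA) hB)) (mul_nonneg (mul_nonneg (mul_nonneg (mul_nonneg (mul_nonneg (by norm_num : (0:ℝ) ≤ (16557924057360978471597700318111031696068183882416521/17960648004503909511778297482965022414582802884893400:ℝ)) hp) hp) ht) ht) ht)) (mul_nonneg (mul_nonneg (mul_nonneg (mul_nonneg (mul_nonneg (mul_nonneg (mul_nonneg (mul_nonneg (by norm_num : (0:ℝ) ≤ (90929604517985592263212597095871008405649743003523/212866939312638927547002044242548413802462849006144:ℝ)) hp) hp) ht) ht) ht) ht) ht) hB)) (mul_nonneg (mul_nonneg (mul_nonneg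 (mul_nonneg (mul_nonneg (mul_nonneg (mul_nonneg (mul_nonneg (by norm_num : (0:ℝ) ≤ (117716786785806121577598541907859056903614746163107/110868197558666108097396898042993965522116067190700:ℝ)) hp) hp) ht) hA) hA) hA) hA) hA)) (mul_nonneg (mul_nonneg (mul_nonneg (mul_nonneg (mul_nonneg (mul_nonneg (mul_nonneg (mul_nonneg (by norm_num : (0:ℝ) ≤ (2037990203714610110621204854124403608860443501577543/11973765336335939674518864988643348276388535256595600:ℝ)) hp) ht) ht) ht) ht) ht) ht) ht)) (mul_nonneg (mul_nonneg (mul_nonneg (mul_nonneg (mul_nonneg (mul_nonneg (mul_nonneg (mul_nonneg (by norm_num : (0:ℝ) ≤ (9550908054804183397596206570068858875585874206871321/28737036807206255218845275972744035863332484615829440:ℝ)) hp) ht) ht) ht) ht) ht) ht) hB)) (mul_nonneg (mul_nonneg (mul_nonneg (mul_nonneg (mul_nonneg (mul_nonneg (mul_nonneg (by norm_num : (0:ℝ) ≤ (14654465284289048385487168196670105587653352547593569/35921296009007819023556594965930044829165605769786800:ℝ)) hp) ht) ht) ht) ht) ht) hA)) (mul_nonneg (mul_nonneg (mul_nonneg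 (mul_nonneg (by norm_num : (0:ℝ) ≤ (43676910359398091562356741885214139147376703659663/598688266816796983725943249432167413819426762829780:ℝ)) hp) hA) hA) hB)) (mul_nonneg (mul_nonneg (mul_nonneg (mul_nonneg (mul_nonneg (mul_nonneg (by norm_num : (0:ℝ) ≤ (670608181458318075339748904864009335610407812309701/1330418370703993297168762776515927586265392806288400:ℝ)) hq) ht) ht) ht) ht) ht)) (mul_nonneg (mul_nonneg (mul_nonneg (by norm_num : (0:ℝ) ≤ (5457061103504554947598636501646560277610603976008059/23947530672671879349037729977286696552777070513191200:ℝ)) ht) ht) ht)) (mul_nonneg (mul_nonneg (mul_nonneg (mul_nonneg (mul_nonneg (mul_nonneg (by norm_num : (0:ℝ) ≤ (7064616393163532624042800901040072419345393945576209/71842592018015638047113189931860089658331211539573600:ℝ)) ht) ht) ht) ht) ht) ht)) (mul_nonneg (mul_nonneg (mul_nonneg (mul_nonneg (mul_nonneg (mul_nonneg (mul_nonneg (mul_nonneg (by norm_num : (0:ℝ) ≤ (2902169068567868629046774920534756669475648663284181/287370368072062552188452759727440358633324846158294400:ℝ)) ht) ht) ht) ht) ht) ht) ht) ht)) (mul_nonneg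 (mul_nonneg (mul_nonneg (mul_nonneg (mul_nonneg (mul_nonneg (mul_nonneg (mul_nonneg (by norm_num : (0:ℝ) ≤ (300378553428603513922665098480077307928616065043543/9579012269068751739615091990914678621110828205276480:ℝ)) ht) ht) ht) ht) ht) ht) ht) hB)) (mul_nonneg (mul_nonneg (mul_nonneg (mul_nonneg (mul_nonneg (mul_nonneg (mul_nonneg (mul_nonneg (by norm_num : (0:ℝ) ≤ (172249729731267222885674926188841267741045821201631/1496720667041992459314858123580418534548566907074450:ℝ)) ht) ht) hA) hA) hA) hA) hA) hA)) (mul_nonneg (mul_nonneg (mul_nonneg (mul_nonneg (mul_nonneg (mul_nonneg (mul_nonneg (by norm_num : (0:ℝ) ≤ (390572742064372058930527422522465360471524705832217/898032400225195475588914874148251120729140144244670:ℝ)) hA) hA) hA) hA) hA) hA) hB)) (mul_nonneg (mul_nonneg (mul_nonneg (by norm_num : (0:ℝ) ≤ (1407738477556869975701751084456663881881716171689/39912551121119798915062883295477827587961784188652:ℝ)) hA) hA) hB)) (mul_nonneg (mul_nonneg (by norm_num : (0:ℝ) ≤ (76691293241270056065607953383418282368912142774800/89803240022519547558891487414825112072914014424467:ℝ))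 hh) hh))
    linarith [hS]
  rcases le_or_gt ((3*q/2 + (1-p-3*q))) (3/10) with hc1 | hc1
  · -- band [1/10,3/10]
    have hA : (0:ℝ) ≤ (3*q/2 + (1-p-3*q)) - 1/10 := by linarith
    have hB : (0:ℝ) ≤ 3/10 - (3*q/2 + (1-p-3*q)) := by linarith
    have hS : (0:ℝ) ≤ (207204220213239260004020673459086950843915580976163008555570639417520348097775416/135083721675506603702279385263169744164375883626007929453115113933195832503464725:ℝ) * p * (3*q - ((3*q/2 + (1-p-3*q)) * (1 - (3*q/2 + (1-p-3*q))) * (83/50 - 19/50 * ((3*q/2 + (1-p-3*q)) * (1 - (3*q/2 + (1-p-3*q))))))) +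
        (4578848349791976125835638554429467404489200540913128294298283326869400878011148/11578604715043423174481090165414549499803647167943536810267009765702499928868405:ℝ) * p * p * (3*q - ((3*q/2 + (1-p-3*q)) * (1 - (3*q/2 + (1-p-3*q))) * (83/50 - 19/50 * ((3*q/2 + (1-p-3*q)) * (1 - (3*q/2 + (1-p-3*q))))))) +
        (4326191167458252794777539523421802742472428756089542196307237322585597814916860/16210046601060792444273526231580369299725106035120951534373813671983499900415767:ℝ) * p * p * p * (1-p-3*q) * (3*q - ((3*q/2 + (1-p-3*q)) * (1 - (3*q/2 + (1-p-3*q))) * (83/50 - 19/50 * ((3*q/2 + (1-p-3*q)) * (1 - (3*q/2 + (1-p-3*q))))))) +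
        (358915890145459535461009715260442698654033779025195216525206129078520528545416/5403348867020264148091175410526789766575035345040317178124604557327833300138589:ℝ) * p * p * p * ((3*q/2 + (1-p-3*q)) - 1/10) * (3*q - ((3*q/2 + (1-p-3*q)) * (1 - (3*q/2 + (1-p-3*q))) * (83/50 - 19/50 * ((3*q/2 + (1-p-3*q)) * (1 - (3*q/2 + (1-p-3*q))))))) +
        (4509890618577432295618173164973691951346527400303631805427858516299705269729496/27016744335101320740455877052633948832875176725201585890623022786639166500692945:ℝ) * p * p * q * (3*q - ((3*q/2 + (1-p-3*q)) * (1 - (3*q/2 + (1-p-3*q))) * (83/50 - 19/50 * ((3*q/2 + (1-p-3*q)) * (1 - (3*q/2 + (1-p-3*q))))))) +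
        (9013081944887201079505838437687241343948808701864300056633408582229785935053488/27016744335101320740455877052633948832875176725201585890623022786639166500692945:ℝ) * p * q * (1-p-3*q) * (1-p-3*q) * (3*q - ((3*q/2 + (1-p-3*q)) * (1 - (3*q/2 + (1-p-3*q))) * (83/50 - 19/50 * ((3*q/2 + (1-p-3*q)) * (1 - (3*q/2 + (1-p-3*q))))))) +
        (1618139016481147911009875144317549145626109349376498082266648106380332632477792/16210046601060792444273526231580369299725106035120951534373813671983499900415767:ℝ) * p * (1-p-3*q) * (1-p-3*q) * (3/10 - (3*q/2 + (1-p-3*q))) * (3*q - ((3*q/2 + (1-p-3*q)) * (1 - (3*q/2 + (1-p-3*q))) * (83/50 - 19/50 * ((3*q/2 + (1-p-3*q)) * (1 - (3*q/2 + (1-p-3*q))))))) +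
        (8181241145351482476126070501218706251976616691381449989031570417552946465471008/16210046601060792444273526231580369299725106035120951534373813671983499900415767:ℝ) * p * ((3*q/2 + (1-p-3*q)) - 1/10) * ((3*q/2 + (1-p-3*q)) - 1/10) * (3*q - ((3*q/2 + (1-p-3*q)) * (1 - (3*q/2 + (1-p-3*q))) * (83/50 - 19/50 * ((3*q/2 + (1-p-3*q)) * (1 - (3*q/2 + (1-p-3*q))))))) +
        (3301590229407447212708851591178348266596384929159645008485991252358744774790760/5403348867020264148091175410526789766575035345040317178124604557327833300138589:ℝ) * q * (1-p-3*q) * (3*q - ((3*q/2 + (1-p-3*q)) * (1 - (3*q/2 + (1-p-3*q))) * (83/50 - 19/50 * ((3*q/2 + (1-p-3*q)) * (1 - (3*q/2 + (1-p-3*q))))))) +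
        (5104011713399609900066415372770791502024625248740585542019264925365524216223288/27016744335101320740455877052633948832875176725201585890623022786639166500692945:ℝ) * q * (1-p-3*q) * (1-p-3*q) * (3*q - ((3*q/2 + (1-p-3*q)) * (1 - (3*q/2 + (1-p-3*q))) * (83/50 - 19/50 * ((3*q/2 + (1-p-3*q)) * (1 - (3*q/2 + (1-p-3*q))))))) +
        (844333646655288772914055328696341049241776656127497060678017042901853868058676/81050233005303962221367631157901846498625530175604757671869068359917499502078835:ℝ) * (1-p-3*q) * (1-p-3*q) * (3*q - ((3*q/2 + (1-p-3*q)) * (1 - (3*q/2 + (1-p-3*q))) * (83/50 - 19/50 * ((3*q/2 + (1-p-3*q)) * (1 - (3*q/2 + (1-p-3*q))))))) +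
        (2476801265429507392210003450311913122421710696508574367413309093779143378296492/16210046601060792444273526231580369299725106035120951534373813671983499900415767:ℝ) * (1-p-3*q) * (1-p-3*q) * (1-p-3*q) * (1-p-3*q) * (3*q - ((3*q/2 + (1-p-3*q)) * (1 - (3*q/2 + (1-p-3*q))) * (83/50 - 19/50 * ((3*q/2 + (1-p-3*q)) * (1 - (3*q/2 + (1-p-3*q))))))) +
        (3269283553014268401977793088136000928035713562158510853257077737583228192739184/16210046601060792444273526231580369299725106035120951534373813671983499900415767:ℝ) * (3/10 - (3*q/2 + (1-p-3*q))) * (3*q - ((3*q/2 + (1-p-3*q)) * (1 - (3*q/2 + (1-p-3*q))) * (83/50 - 19/50 * ((3*q/2 + (1-p-3*q)) * (1 - (3*q/2 + (1-p-3*q))))))) +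
        (92179574953669828228371223782409636669227785665094274630962820672386344213977421/1852576754406947707916974426466327919968583546870965889642721562512399988618944800:ℝ) * p * p * p * p * p * p * (1-p-3*q) * ((3*q/2 + (1-p-3*q)) - 1/10) +
        (3744505734146112212544709642901522957320324922883252916616601587027637679942181/648401864042431697770941049263214771989004241404838061374952546879339996016630680:ℝ) * p * p * p * p * p * p * (3/10 - (3*q/2 + (1-p-3*q))) * (3/10 - (3*q/2 + (1-p-3*q))) +
        (2222362215554837852446193047348881005951303601088488719636781379806587975373805109/12350511696046318052779829509775519466457223645806439264284810416749333257459632000:ℝ) * p * p * p * p * p * q * (1-p-3*q) * (1-p-3*q) +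
        (1665323058607554454078359801997303324986419250730085096985687469500839642914898603/6861395386692398918211016394319733036920679803225799591269339120416296254144240000:ℝ) * p * p * p * p * p * (1-p-3*q) * (1-p-3*q) +
        (38562850985803584040277198781455004923250023480717044928404798237062455124664836611/129680372808486339554188209852642954397800848280967612274990509375867999203326136000:ℝ) * p * p * p * p * p * (1-p-3*q) * (1-p-3*q) * (3/10 - (3*q/2 + (1-p-3*q))) +
        (16059641577191008416258315625347290633106888906979427901356082639576924819090853/463144188601736926979243606616581979992145886717741472410680390628099997154736200:ℝ) * p * p * p * p * p * (1-p-3*q) * (3/10 - (3*q/2 + (1-p-3*q))) +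
        (1251040482088744105207768400012581969474103620006498585986285450863063692802107/46314418860173692697924360661658197999214588671774147241068039062809999715473620:ℝ) * p * p * p * p * p * ((3*q/2 + (1-p-3*q)) - 1/10) * (3/10 - (3*q/2 + (1-p-3*q))) +
        (657748916418423199085157941878114413720481371120736407286243113359750041212382429/900558144503377358015195901754464961095839224173386196354100759554638883356431500:ℝ) * p * p * p * p * q * (1-p-3*q) * (1-p-3*q) +
        (10639636496695427808543016559780557974173601298889063908908271458604905845005696039/64840186404243169777094104926321477198900424140483806137495254687933999601663068000:ℝ) * p * p * p * p * (1-p-3*q) * (1-p-3*q) * (1-p-3*q) * (1-p-3*q) +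
        (18090251891268580084378766865882685779292413919255279452760110284390238112364287/324200932021215848885470524631607385994502120702419030687476273439669998008315340:ℝ) * p * p * p * p * ((3*q/2 + (1-p-3*q)) - 1/10) * ((3*q/2 + (1-p-3*q)) - 1/10) * ((3*q/2 + (1-p-3*q)) - 1/10) * ((3*q/2 + (1-p-3*q)) - 1/10) +
        (73479323202140141958407336103379906189689102125839639647219394763119288109560877/2026255825132599055534190778947546162465638254390118941796726708997937487551970875:ℝ) * p * p * p * p * (3/10 - (3*q/2 + (1-p-3*q))) * (3/10 - (3*q/2 + (1-p-3*q))) +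
        (14534808762509361559554097699300740590237802280002702437279392482331124241363942427/32420093202121584888547052463160738599450212070241903068747627343966999800831534000:ℝ) * p * p * p * (1-p-3*q) * (1-p-3*q) * (1-p-3*q) * (1-p-3*q) +
        (32414142115544440456224727925617762481652809308480257180481970113004291893487717/405251165026519811106838155789509232493127650878023788359345341799587497510394175:ℝ) * p * p * p * (1-p-3*q) * (1-p-3*q) * (3/10 - (3*q/2 + (1-p-3*q))) +
        (22156439962105479310690916718987387236239351370534891967949159321036882905814459/16210046601060792444273526231580369299725106035120951534373813671983499900415767:ℝ) * p * p * p * (1-p-3*q) * ((3*q/2 + (1-p-3*q)) - 1/10) * (3/10 - (3*q/2 + (1-p-3*q))) +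
        (5521370617397165852796667659186515259179012890782473932923100827522162483871558/16210046601060792444273526231580369299725106035120951534373813671983499900415767:ℝ) * p * p * p * ((3*q/2 + (1-p-3*q)) - 1/10) * ((3*q/2 + (1-p-3*q)) - 1/10) * (3/10 - (3*q/2 + (1-p-3*q))) +
        (68218886101190630384897800707558994651312357045220974617682632803461936229009539/96488372625361859787342418045121245831697059732862806752225081380854166073903375:ℝ) * p * p * q * (1-p-3*q) * (1-p-3*q) * (1-p-3*q) +
        (2740947842875216104338870311198486904016967219102752491491475089110756443612146741/21613395468081056592364701642107159066300141380161268712498418229311333200554356000:ℝ) * p * p * q * (1-p-3*q) * (1-p-3*q) * (1-p-3*q) * (1-p-3*q) * (1-p-3*q) +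
        (39730013894970122631047296537972727974570138304780349392229922533156823566045667/370515350881389541583394885293265583993716709374193177928544312502479997723788960:ℝ) * p * p * (1-p-3*q) * (1-p-3*q) * (1-p-3*q) * (1-p-3*q) * (1-p-3*q) * (3/10 - (3*q/2 + (1-p-3*q))) +
        (3362777393939088817669158431667970113352345408508508732273077392329564889602389749/2701674433510132074045587705263394883287517672520158589062302278663916650069294500:ℝ) * p * q * (1-p-3*q) * (1-p-3*q) * (1-p-3*q) * (1-p-3*q) * (1-p-3*q) +
        (649936771623770348682315878922742411702232418015369342522152796284026834806068881/14408930312054037728243134428071439377533427586774179141665612152874222133702904000:ℝ) * p * (1-p-3*q) * (1-p-3*q) * (1-p-3*q) * (1-p-3*q) * (1-p-3*q) * (1-p-3*q) * (1-p-3*q) +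
        (8406136808719639964334202828667099094289265456730972222286250660502038420130250/16210046601060792444273526231580369299725106035120951534373813671983499900415767:ℝ) * p * ((3*q/2 + (1-p-3*q)) - 1/10) * ((3*q/2 + (1-p-3*q)) - 1/10) * ((3*q/2 + (1-p-3*q)) - 1/10) * ((3*q/2 + (1-p-3*q)) - 1/10) * ((3*q/2 + (1-p-3*q)) - 1/10) * ((3*q/2 + (1-p-3*q)) - 1/10) * ((3*q/2 + (1-p-3*q)) - 1/10) +
        (9328447321662113741841466607641715608940104405642374186889265229201902899028924/27016744335101320740455877052633948832875176725201585890623022786639166500692945:ℝ) * p * ((3*q/2 + (1-p-3*q)) - 1/10) * (3/10 - (3*q/2 + (1-p-3*q))) * (3/10 - (3*q/2 + (1-p-3*q))) +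
        (413212460845451456478916697260065839318409193307100181802628536531540531426040397/4052511650265198111068381557895092324931276508780237883593453417995874975103941750:ℝ) * (1-p-3*q) * (1-p-3*q) * (1-p-3*q) * (1-p-3*q) * (1-p-3*q) +
        (8759995337539272105531037953206750702592546279771500963025530930410182997078553251/81050233005303962221367631157901846498625530175604757671869068359917499502078835000:ℝ) * (1-p-3*q) * (1-p-3*q) * (1-p-3*q) * (1-p-3*q) * (1-p-3*q) * (1-p-3*q) +
        (3080404567518407674270491145311919067374654521228082210720399472654809667920531361/5403348867020264148091175410526789766575035345040317178124604557327833300138589000:ℝ) * (1-p-3*q) * (1-p-3*q) * (1-p-3*q) * (1-p-3*q) * (1-p-3*q) * (1-p-3*q) * (1-p-3*q) +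
        (47650541292439358216515013613266056019844877927026828652551420489106999353824423/2161339546808105659236470164210715906630014138016126871249841822931133320055435600:ℝ) * (1-p-3*q) * (1-p-3*q) * (1-p-3*q) * (1-p-3*q) * (1-p-3*q) * (1-p-3*q) * (1-p-3*q) * (3/10 - (3*q/2 + (1-p-3*q))) +
        (6523979672053259146184334348712893653665501780579146799882839523626299051151726607/5403348867020264148091175410526789766575035345040317178124604557327833300138589000:ℝ) * (1-p-3*q) * (1-p-3*q) * (1-p-3*q) * (1-p-3*q) * (1-p-3*q) * (1-p-3*q) * (3/10 - (3*q/2 + (1-p-3*q))) +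
        (113265036114239749971796677436744808601474825760056381791652207050771728503521833/270167443351013207404558770526339488328751767252015858906230227866391665006929450:ℝ) * (1-p-3*q) * (1-p-3*q) * (1-p-3*q) * (3/10 - (3*q/2 + (1-p-3*q))) +
        (7765848024753287914679831687919532937392553452254831690522178481980438589208250/16210046601060792444273526231580369299725106035120951534373813671983499900415767:ℝ) * (1-p-3*q) * (1-p-3*q) * ((3*q/2 + (1-p-3*q)) - 1/10) * ((3*q/2 + (1-p-3*q)) - 1/10) * ((3*q/2 + (1-p-3*q)) - 1/10) * ((3*q/2 + (1-p-3*q)) - 1/10) * ((3*q/2 + (1-p-3*q)) - 1/10) * ((3*q/2 + (1-p-3*q)) - 1/10) +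
        (2561728658460489797424126480425403454459279084101492365956078868905784673040000/16210046601060792444273526231580369299725106035120951534373813671983499900415767:ℝ) * ((3*q/2 + (1-p-3*q)) - 1/10) * ((3*q/2 + (1-p-3*q)) - 1/10) * ((3*q/2 + (1-p-3*q)) - 1/10) * ((3*q/2 + (1-p-3*q)) - 1/10) * ((3*q/2 + (1-p-3*q)) - 1/10) * ((3*q/2 + (1-p-3*q)) - 1/10) * ((3*q/2 + (1-p-3*q)) - 1/10) +
        (8509215951536478438265203873323124102863526569103126864139663215485670575804/85767442333654986477637704928996662961508497540322494890866739005203703176803:ℝ) * ((3*q/2 + (1-p-3*q)) - 1/10) * (3/10 - (3*q/2 + (1-p-3*q))) * (3/10 - (3*q/2 + (1-p-3*q))) +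
        (829966326827607861094531308290676926234139807999939043008336554014242664421600/2315720943008684634896218033082909899960729433588707362053401953140499985773681:ℝ) * (3*q - ((3*q/2 + (1-p-3*q)) * (1 - (3*q/2 + (1-p-3*q))) * (83/50 - 19/50 * ((3*q/2 + (1-p-3*q)) * (1 - (3*q/2 + (1-p-3*q))))))) * (3*q - ((3*q/2 + (1-p-3*q)) * (1 - (3*q/2 + (1-p-3*q))) * (83/50 - 19/50 * ((3*q/2 + (1-p-3*q)) * (1 - (3*q/2 + (1-p-3*q))))))) :=
      (add_nonneg (add_nonneg (add_nonneg (add_nonneg (add_nonneg (add_nonneg (add_nonneg (add_nonneg (add_nonneg (add_nonneg (add_nonneg (add_nonneg (add_nonneg (add_nonneg (add_nonneg (add_nonneg (add_nonneg (add_nonneg (add_nonneg (add_nonneg (add_nonneg (add_nonneg (add_nonneg (add_nonneg (add_nonneg (add_nonneg (add_nonneg (add_nonneg (add_nonneg (add_nonneg (add_nonneg (add_nonneg (add_nonneg (add_nonneg (add_nonneg (add_nonneg (add_nonneg (add_nonneg (add_nonneg (add_nonneg (add_nonneg (add_nonneg (add_nonneg (add_nonneg (mul_nonneg (mul_nonneg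 (by norm_num : (0:ℝ) ≤ (207204220213239260004020673459086950843915580976163008555570639417520348097775416/135083721675506603702279385263169744164375883626007929453115113933195832503464725:ℝ)) hp) hh) (mul_nonneg (mul_nonneg (mul_nonneg (by norm_num : (0:ℝ) ≤ (4578848349791976125835638554429467404489200540913128294298283326869400878011148/11578604715043423174481090165414549499803647167943536810267009765702499928868405:ℝ)) hp) hp) hh)) (mul_nonneg (mul_nonneg (mul_nonneg (mul_nonneg (mul_nonneg (by norm_num : (0:ℝ) ≤ (4326191167458252794777539523421802742472428756089542196307237322585597814916860/16210046601060792444273526231580369299725106035120951534373813671983499900415767:ℝ)) hp) hp) hp) ht) hh)) (mul_nonneg (mul_nonneg (mul_nonneg (mul_nonneg (mul_nonneg (by norm_num : (0:ℝ) ≤ (358915890145459535461009715260442698654033779025195216525206129078520528545416/5403348867020264148091175410526789766575035345040317178124604557327833300138589:ℝ)) hp) hp) hp) hA) hh)) (mul_nonneg (mul_nonneg (mul_nonneg (mul_nonneg (by norm_num : (0:ℝ) ≤ (4509890618577432295618173164973691951346527400303631805427858516299705269729496/27016744335101320740455877052633948832875176725201585890623022786639166500692945:ℝ)) hp) hp)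 hq) hh)) (mul_nonneg (mul_nonneg (mul_nonneg (mul_nonneg (mul_nonneg (by norm_num : (0:ℝ) ≤ (9013081944887201079505838437687241343948808701864300056633408582229785935053488/27016744335101320740455877052633948832875176725201585890623022786639166500692945:ℝ)) hp) hq) ht) ht) hh)) (mul_nonneg (mul_nonneg (mul_nonneg (mul_nonneg (mul_nonneg (by norm_num : (0:ℝ) ≤ (1618139016481147911009875144317549145626109349376498082266648106380332632477792/16210046601060792444273526231580369299725106035120951534373813671983499900415767:ℝ)) hp) ht) ht) hB) hh)) (mul_nonneg (mul_nonneg (mul_nonneg (mul_nonneg (by norm_num : (0:ℝ) ≤ (8181241145351482476126070501218706251976616691381449989031570417552946465471008/16210046601060792444273526231580369299725106035120951534373813671983499900415767:ℝ)) hp) hA) hA) hh)) (mul_nonneg (mul_nonneg (mul_nonneg (by norm_num : (0:ℝ) ≤ (3301590229407447212708851591178348266596384929159645008485991252358744774790760/5403348867020264148091175410526789766575035345040317178124604557327833300138589:ℝ)) hq) ht) hh)) (mul_nonneg (mul_nonneg (mul_nonneg (mul_nonneg (by norm_num : (0:ℝ) ≤ (5104011713399609900066415372770791502024625248740585542019264925365524216223288/27016744335101320740455877052633948832875176725201585890623022786639166500692945:ℝ))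 hq) ht) ht) hh)) (mul_nonneg (mul_nonneg (mul_nonneg (by norm_num : (0:ℝ) ≤ (844333646655288772914055328696341049241776656127497060678017042901853868058676/81050233005303962221367631157901846498625530175604757671869068359917499502078835:ℝ)) ht) ht) hh)) (mul_nonneg (mul_nonneg (mul_nonneg (mul_nonneg (mul_nonneg (by norm_num : (0:ℝ) ≤ (2476801265429507392210003450311913122421710696508574367413309093779143378296492/16210046601060792444273526231580369299725106035120951534373813671983499900415767:ℝ)) ht) ht) ht) ht) hh)) (mul_nonneg (mul_nonneg (by norm_num : (0:ℝ) ≤ (3269283553014268401977793088136000928035713562158510853257077737583228192739184/16210046601060792444273526231580369299725106035120951534373813671983499900415767:ℝ)) hB) hh)) (mul_nonneg (mul_nonneg (mul_nonneg (mul_nonneg (mul_nonneg (mul_nonneg (mul_nonneg (mul_nonneg (by norm_num : (0:ℝ) ≤ (92179574953669828228371223782409636669227785665094274630962820672386344213977421/1852576754406947707916974426466327919968583546870965889642721562512399988618944800:ℝ)) hp) hp) hp) hp) hp) hp) ht) hA)) (mul_nonneg (mul_nonneg (mul_nonneg (mul_nonneg (mul_nonneg (mul_nonneg (mul_nonneg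 (mul_nonneg (by norm_num : (0:ℝ) ≤ (3744505734146112212544709642901522957320324922883252916616601587027637679942181/648401864042431697770941049263214771989004241404838061374952546879339996016630680:ℝ)) hp) hp) hp) hp) hp) hp) hB) hB)) (mul_nonneg (mul_nonneg (mul_nonneg (mul_nonneg (mul_nonneg (mul_nonneg (mul_nonneg (mul_nonneg (by norm_num : (0:ℝ) ≤ (2222362215554837852446193047348881005951303601088488719636781379806587975373805109/12350511696046318052779829509775519466457223645806439264284810416749333257459632000:ℝ)) hp) hp) hp) hp) hp) hq) ht) ht)) (mul_nonneg (mul_nonneg (mul_nonneg (mul_nonneg (mul_nonneg (mul_nonneg (mul_nonneg (by norm_num : (0:ℝ) ≤ (1665323058607554454078359801997303324986419250730085096985687469500839642914898603/6861395386692398918211016394319733036920679803225799591269339120416296254144240000:ℝ)) hp) hp) hp) hp) hp) ht) ht)) (mul_nonneg (mul_nonneg (mul_nonneg (mul_nonneg (mul_nonneg (mul_nonneg (mul_nonneg (mul_nonneg (by norm_num : (0:ℝ) ≤ (38562850985803584040277198781455004923250023480717044928404798237062455124664836611/129680372808486339554188209852642954397800848280967612274990509375867999203326136000:ℝ)) hp)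 hp) hp) hp) hp) ht) ht) hB)) (mul_nonneg (mul_nonneg (mul_nonneg (mul_nonneg (mul_nonneg (mul_nonneg (mul_nonneg (by norm_num : (0:ℝ) ≤ (16059641577191008416258315625347290633106888906979427901356082639576924819090853/463144188601736926979243606616581979992145886717741472410680390628099997154736200:ℝ)) hp) hp) hp) hp) hp) ht) hB)) (mul_nonneg (mul_nonneg (mul_nonneg (mul_nonneg (mul_nonneg (mul_nonneg (mul_nonneg (by norm_num : (0:ℝ) ≤ (1251040482088744105207768400012581969474103620006498585986285450863063692802107/46314418860173692697924360661658197999214588671774147241068039062809999715473620:ℝ)) hp) hp) hp) hp) hp) hA) hB)) (mul_nonneg (mul_nonneg (mul_nonneg (mul_nonneg (mul_nonneg (mul_nonneg (mul_nonneg (by norm_num : (0:ℝ) ≤ (657748916418423199085157941878114413720481371120736407286243113359750041212382429/900558144503377358015195901754464961095839224173386196354100759554638883356431500:ℝ)) hp) hp) hp) hp) hq) ht) ht)) (mul_nonneg (mul_nonneg (mul_nonneg (mul_nonneg (mul_nonneg (mul_nonneg (mul_nonneg (mul_nonneg (by norm_num : (0:ℝ) ≤ (10639636496695427808543016559780557974173601298889063908908271458604905845005696039/64840186404243169777094104926321477198900424140483806137495254687933999601663068000:ℝ))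 hp) hp) hp) hp) ht) ht) ht) ht)) (mul_nonneg (mul_nonneg (mul_nonneg (mul_nonneg (mul_nonneg (mul_nonneg (mul_nonneg (mul_nonneg (by norm_num : (0:ℝ) ≤ (18090251891268580084378766865882685779292413919255279452760110284390238112364287/324200932021215848885470524631607385994502120702419030687476273439669998008315340:ℝ)) hp) hp) hp) hp) hA) hA) hA) hA)) (mul_nonneg (mul_nonneg (mul_nonneg (mul_nonneg (mul_nonneg (mul_nonneg (by norm_num : (0:ℝ) ≤ (73479323202140141958407336103379906189689102125839639647219394763119288109560877/2026255825132599055534190778947546162465638254390118941796726708997937487551970875:ℝ)) hp) hp) hp) hp) hB) hB)) (mul_nonneg (mul_nonneg (mul_nonneg (mul_nonneg (mul_nonneg (mul_nonneg (mul_nonneg (by norm_num : (0:ℝ) ≤ (14534808762509361559554097699300740590237802280002702437279392482331124241363942427/32420093202121584888547052463160738599450212070241903068747627343966999800831534000:ℝ)) hp) hp) hp) ht) ht) ht) ht)) (mul_nonneg (mul_nonneg (mul_nonneg (mul_nonneg (mul_nonneg (mul_nonneg (by norm_num : (0:ℝ) ≤ (32414142115544440456224727925617762481652809308480257180481970113004291893487717/405251165026519811106838155789509232493127650878023788359345341799587497510394175:ℝ))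 hp) hp) hp) ht) ht) hB)) (mul_nonneg (mul_nonneg (mul_nonneg (mul_nonneg (mul_nonneg (mul_nonneg (by norm_num : (0:ℝ) ≤ (22156439962105479310690916718987387236239351370534891967949159321036882905814459/16210046601060792444273526231580369299725106035120951534373813671983499900415767:ℝ)) hp) hp) hp) ht) hA) hB)) (mul_nonneg (mul_nonneg (mul_nonneg (mul_nonneg (mul_nonneg (mul_nonneg (by norm_num : (0:ℝ) ≤ (5521370617397165852796667659186515259179012890782473932923100827522162483871558/16210046601060792444273526231580369299725106035120951534373813671983499900415767:ℝ)) hp) hp) hp) hA) hA) hB)) (mul_nonneg (mul_nonneg (mul_nonneg (mul_nonneg (mul_nonneg (mul_nonneg (by norm_num : (0:ℝ) ≤ (68218886101190630384897800707558994651312357045220974617682632803461936229009539/96488372625361859787342418045121245831697059732862806752225081380854166073903375:ℝ)) hp) hp) hq) ht) ht) ht)) (mul_nonneg (mul_nonneg (mul_nonneg (mul_nonneg (mul_nonneg (mul_nonneg (mul_nonneg (mul_nonneg (by norm_num : (0:ℝ) ≤ (2740947842875216104338870311198486904016967219102752491491475089110756443612146741/21613395468081056592364701642107159066300141380161268712498418229311333200554356000:ℝ))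 hp) hp) hq) ht) ht) ht) ht) ht)) (mul_nonneg (mul_nonneg (mul_nonneg (mul_nonneg (mul_nonneg (mul_nonneg (mul_nonneg (mul_nonneg (by norm_num : (0:ℝ) ≤ (39730013894970122631047296537972727974570138304780349392229922533156823566045667/370515350881389541583394885293265583993716709374193177928544312502479997723788960:ℝ)) hp) hp) ht) ht) ht) ht) ht) hB)) (mul_nonneg (mul_nonneg (mul_nonneg (mul_nonneg (mul_nonneg (mul_nonneg (mul_nonneg (by norm_num : (0:ℝ) ≤ (3362777393939088817669158431667970113352345408508508732273077392329564889602389749/2701674433510132074045587705263394883287517672520158589062302278663916650069294500:ℝ)) hp) hq) ht) ht) ht) ht) ht)) (mul_nonneg (mul_nonneg (mul_nonneg (mul_nonneg (mul_nonneg (mul_nonneg (mul_nonneg (mul_nonneg (by norm_num : (0:ℝ) ≤ (649936771623770348682315878922742411702232418015369342522152796284026834806068881/14408930312054037728243134428071439377533427586774179141665612152874222133702904000:ℝ)) hp) ht) ht) ht) ht) ht) ht) ht)) (mul_nonneg (mul_nonneg (mul_nonneg (mul_nonneg (mul_nonneg (mul_nonneg (mul_nonneg (mul_nonneg (by norm_num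 : (0:ℝ) ≤ (8406136808719639964334202828667099094289265456730972222286250660502038420130250/16210046601060792444273526231580369299725106035120951534373813671983499900415767:ℝ)) hp) hA) hA) hA) hA) hA) hA) hA)) (mul_nonneg (mul_nonneg (mul_nonneg (mul_nonneg (by norm_num : (0:ℝ) ≤ (9328447321662113741841466607641715608940104405642374186889265229201902899028924/27016744335101320740455877052633948832875176725201585890623022786639166500692945:ℝ)) hp) hA) hB) hB)) (mul_nonneg (mul_nonneg (mul_nonneg (mul_nonneg (mul_nonneg (by norm_num : (0:ℝ) ≤ (413212460845451456478916697260065839318409193307100181802628536531540531426040397/4052511650265198111068381557895092324931276508780237883593453417995874975103941750:ℝ)) ht) ht) ht) ht) ht)) (mul_nonneg (mul_nonneg (mul_nonneg (mul_nonneg (mul_nonneg (mul_nonneg (by norm_num : (0:ℝ) ≤ (8759995337539272105531037953206750702592546279771500963025530930410182997078553251/81050233005303962221367631157901846498625530175604757671869068359917499502078835000:ℝ)) ht) ht) ht) ht) ht) ht)) (mul_nonneg (mul_nonneg (mul_nonneg (mul_nonneg (mul_nonneg (mul_nonneg (mul_nonneg (by norm_num : (0:ℝ) ≤ (3080404567518407674270491145311919067374654521228082210720399472654809667920531361/5403348867020264148091175410526789766575035345040317178124604557327833300138589000:ℝ))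 ht) ht) ht) ht) ht) ht) ht)) (mul_nonneg (mul_nonneg (mul_nonneg (mul_nonneg (mul_nonneg (mul_nonneg (mul_nonneg (mul_nonneg (by norm_num : (0:ℝ) ≤ (47650541292439358216515013613266056019844877927026828652551420489106999353824423/2161339546808105659236470164210715906630014138016126871249841822931133320055435600:ℝ)) ht) ht) ht) ht) ht) ht) ht) hB)) (mul_nonneg (mul_nonneg (mul_nonneg (mul_nonneg (mul_nonneg (mul_nonneg (mul_nonneg (by norm_num : (0:ℝ) ≤ (6523979672053259146184334348712893653665501780579146799882839523626299051151726607/5403348867020264148091175410526789766575035345040317178124604557327833300138589000:ℝ)) ht) ht) ht) ht) ht) ht) hB)) (mul_nonneg (mul_nonneg (mul_nonneg (mul_nonneg (by norm_num : (0:ℝ) ≤ (113265036114239749971796677436744808601474825760056381791652207050771728503521833/270167443351013207404558770526339488328751767252015858906230227866391665006929450:ℝ)) ht) ht) ht) hB)) (mul_nonneg (mul_nonneg (mul_nonneg (mul_nonneg (mul_nonneg (mul_nonneg (mul_nonneg (mul_nonneg (by norm_num : (0:ℝ) ≤ (7765848024753287914679831687919532937392553452254831690522178481980438589208250/16210046601060792444273526231580369299725106035120951534373813671983499900415767:ℝ))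 ht) ht) hA) hA) hA) hA) hA) hA)) (mul_nonneg (mul_nonneg (mul_nonneg (mul_nonneg (mul_nonneg (mul_nonneg (mul_nonneg (by norm_num : (0:ℝ) ≤ (2561728658460489797424126480425403454459279084101492365956078868905784673040000/16210046601060792444273526231580369299725106035120951534373813671983499900415767:ℝ)) hA) hA) hA) hA) hA) hA) hA)) (mul_nonneg (mul_nonneg (mul_nonneg (by norm_num : (0:ℝ) ≤ (8509215951536478438265203873323124102863526569103126864139663215485670575804/85767442333654986477637704928996662961508497540322494890866739005203703176803:ℝ)) hA) hB) hB)) (mul_nonneg (mul_nonneg (by norm_num : (0:ℝ) ≤ (829966326827607861094531308290676926234139807999939043008336554014242664421600/2315720943008684634896218033082909899960729433588707362053401953140499985773681:ℝ)) hh) hh))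
    linarith [hS]
  rcases le_or_gt ((3*q/2 + (1-p-3*q))) (2/5) with hc2 | hc2
  · -- band [3/10,2/5]
    have hA : (0:ℝ) ≤ (3*q/2 + (1-p-3*q)) - 3/10 := by linarith
    have hB : (0:ℝ) ≤ 2/5 - (3*q/2 + (1-p-3*q)) := by linarith
    have hS : (0:ℝ) ≤ (4533013486496936340356497672498830217327909900157992726817547822669510778/13212396605315033009795162347012233591812432239862153957833085053117618863:ℝ) * (3*q - ((3*q/2 + (1-p-3*q)) * (1 - (3*q/2 + (1-p-3*q))) * (83/50 - 19/50 * ((3*q/2 + (1-p-3*q)) * (1 - (3*q/2 + (1-p-3*q))))))) +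
        (9765674072133918061642353636065202176609468269396238486716299005388326045056/80265309377288825534505611258099319070260525857162585293835991697689534592725:ℝ) * p * p * (3*q - ((3*q/2 + (1-p-3*q)) * (1 - (3*q/2 + (1-p-3*q))) * (83/50 - 19/50 * ((3*q/2 + (1-p-3*q)) * (1 - (3*q/2 + (1-p-3*q))))))) +
        (169686228170326405541724651848848707134510262633571390525128802471944803906/3210612375091553021380224450323972762810421034286503411753439667907581383709:ℝ) * p * p * p * p * (3*q - ((3*q/2 + (1-p-3*q)) * (1 - (3*q/2 + (1-p-3*q))) * (83/50 - 19/50 * ((3*q/2 + (1-p-3*q)) * (1 - (3*q/2 + (1-p-3*q))))))) +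
        (2633328177988065578521691727883926188039145604556388662935954971092908885736/5351020625152588368967040750539954604684035057144172352922399446512635639515:ℝ) * p * p * q * (3*q - ((3*q/2 + (1-p-3*q)) * (1 - (3*q/2 + (1-p-3*q))) * (83/50 - 19/50 * ((3*q/2 + (1-p-3*q)) * (1 - (3*q/2 + (1-p-3*q))))))) +
        (1594226323000977478430399226239905003480300172937674802356949003246847120132/3210612375091553021380224450323972762810421034286503411753439667907581383709:ℝ) * p * p * (1-p-3*q) * ((3*q/2 + (1-p-3*q)) - 3/10) * (3*q - ((3*q/2 + (1-p-3*q)) * (1 - (3*q/2 + (1-p-3*q))) * (83/50 - 19/50 * ((3*q/2 + (1-p-3*q)) * (1 - (3*q/2 + (1-p-3*q))))))) +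
        (9777468971700881113344587842142963117524912609585058736330395098795102959472/16053061875457765106901122251619863814052105171432517058767198339537906918545:ℝ) * p * p * (2/5 - (3*q/2 + (1-p-3*q))) * (3*q - ((3*q/2 + (1-p-3*q)) * (1 - (3*q/2 + (1-p-3*q))) * (83/50 - 19/50 * ((3*q/2 + (1-p-3*q)) * (1 - (3*q/2 + (1-p-3*q))))))) +
        (352895314488562624351109393979073408946628906410819302201791906933442241597/1070204125030517673793408150107990920936807011428834470584479889302527127903:ℝ) * p * q * (1-p-3*q) * (1-p-3*q) * (3*q - ((3*q/2 + (1-p-3*q)) * (1 - (3*q/2 + (1-p-3*q))) * (83/50 - 19/50 * ((3*q/2 + (1-p-3*q)) * (1 - (3*q/2 + (1-p-3*q))))))) +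
        (595595177745576237373821832911739529160133050087799833667349981063758606802/16053061875457765106901122251619863814052105171432517058767198339537906918545:ℝ) * p * (1-p-3*q) * (1-p-3*q) * (3*q - ((3*q/2 + (1-p-3*q)) * (1 - (3*q/2 + (1-p-3*q))) * (83/50 - 19/50 * ((3*q/2 + (1-p-3*q)) * (1 - (3*q/2 + (1-p-3*q))))))) +
        (1004065641210639832976903893816054026801616145308269259264827058838811078178/1070204125030517673793408150107990920936807011428834470584479889302527127903:ℝ) * p * (1-p-3*q) * (1-p-3*q) * (2/5 - (3*q/2 + (1-p-3*q))) * (3*q - ((3*q/2 + (1-p-3*q)) * (1 - (3*q/2 + (1-p-3*q))) * (83/50 - 19/50 * ((3*q/2 + (1-p-3*q)) * (1 - (3*q/2 + (1-p-3*q))))))) +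
        (620553737414000075116039503645235129372957519271987215339421209513039684/7280300170275630433968762925904700142427258581148533813499863192534198149:ℝ) * q * (1-p-3*q) * (3*q - ((3*q/2 + (1-p-3*q)) * (1 - (3*q/2 + (1-p-3*q))) * (83/50 - 19/50 * ((3*q/2 + (1-p-3*q)) * (1 - (3*q/2 + (1-p-3*q))))))) +
        (5227409537224858035754362231196206192020577137126420558417477905175821668616/3210612375091553021380224450323972762810421034286503411753439667907581383709:ℝ) * (1-p-3*q) * (3*q - ((3*q/2 + (1-p-3*q)) * (1 - (3*q/2 + (1-p-3*q))) * (83/50 - 19/50 * ((3*q/2 + (1-p-3*q)) * (1 - (3*q/2 + (1-p-3*q))))))) +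
        (1444025547783571606115109438177391017246150991736239886849522552971767052/21840900510826891301906288777714100427281775743445601440499589577602594447:ℝ) * (1-p-3*q) * (1-p-3*q) * (1-p-3*q) * (3*q - ((3*q/2 + (1-p-3*q)) * (1 - (3*q/2 + (1-p-3*q))) * (83/50 - 19/50 * ((3*q/2 + (1-p-3*q)) * (1 - (3*q/2 + (1-p-3*q))))))) +
        (655845840079074391692476804172267142323935465512316337158621379250474151414/3210612375091553021380224450323972762810421034286503411753439667907581383709:ℝ) * (1-p-3*q) * (1-p-3*q) * (1-p-3*q) * (1-p-3*q) * (3*q - ((3*q/2 + (1-p-3*q)) * (1 - (3*q/2 + (1-p-3*q))) * (83/50 - 19/50 * ((3*q/2 + (1-p-3*q)) * (1 - (3*q/2 + (1-p-3*q))))))) +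
        (10465592101134480810911247340378807781514498901599948172520389443253058704720/3210612375091553021380224450323972762810421034286503411753439667907581383709:ℝ) * (2/5 - (3*q/2 + (1-p-3*q))) * (3*q - ((3*q/2 + (1-p-3*q)) * (1 - (3*q/2 + (1-p-3*q))) * (83/50 - 19/50 * ((3*q/2 + (1-p-3*q)) * (1 - (3*q/2 + (1-p-3*q))))))) +
        (432255676975107682551085034356304162617642276130962419849756712683793537/109204502554134456509531443888570502136408878717228007202497947888012972235:ℝ) * p * p * p * p * p * p * p * (2/5 - (3*q/2 + (1-p-3*q))) +
        (32650092266564298062365302747547142981379351611342837259755957803113436997/873636020433075652076251551108564017091271029737824057619983583104103777880:ℝ) * p * p * p * p * p * p * (1-p-3*q) * (2/5 - (3*q/2 + (1-p-3*q))) +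
        (675284315745976796597334492799754495797297127847831280427983076684840971/8089222411417367148854181028783000158252509534609482014999847991704664610:ℝ) * p * p * p * p * p * q * q * q +
        (3696641901489457944603108337451730912739781923299722269526795989312762066/109204502554134456509531443888570502136408878717228007202497947888012972235:ℝ) * p * p * p * p * p * (1-p-3*q) * (1-p-3*q) * (2/5 - (3*q/2 + (1-p-3*q))) +
        (1148829932609674678311200054377049339263017068393464197832448431196921521/109204502554134456509531443888570502136408878717228007202497947888012972235:ℝ) * p * p * p * p * (1-p-3*q) * (1-p-3*q) * (1-p-3*q) * ((3*q/2 + (1-p-3*q)) - 3/10) +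
        (438281260161050406499612453034169265176135838892392612978230462274904320/7280300170275630433968762925904700142427258581148533813499863192534198149:ℝ) * p * p * p * p * ((3*q/2 + (1-p-3*q)) - 3/10) * ((3*q/2 + (1-p-3*q)) - 3/10) * ((3*q/2 + (1-p-3*q)) - 3/10) +
        (18605358625112109875774782377034505241722227075838387628074263308949531112/327613507662403369528594331665711506409226636151684021607493843664038916705:ℝ) * p * p * p * p * (2/5 - (3*q/2 + (1-p-3*q))) * (2/5 - (3*q/2 + (1-p-3*q))) +
        (95185166795646034193024657477078984474055009541788046344733021086108161/1438083984251976382018521071783644472578223917263907913777750754080829264:ℝ) * p * p * p * q * q * q * (1-p-3*q) +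
        (29106258328903651872628131587291423631537671093539419191684459240871791527/109204502554134456509531443888570502136408878717228007202497947888012972235:ℝ) * p * p * p * q * (2/5 - (3*q/2 + (1-p-3*q))) * (2/5 - (3*q/2 + (1-p-3*q))) +
        (30454417046036726587488441931690201802667185941871905953662448426859934249/174727204086615130415250310221712803418254205947564811523996716620820755576:ℝ) * p * p * p * (1-p-3*q) * (1-p-3*q) * (1-p-3*q) * (1-p-3*q) * (2/5 - (3*q/2 + (1-p-3*q))) +
        (32200139797634746660995076397659083841218639123287672340851664192710265977/109204502554134456509531443888570502136408878717228007202497947888012972235:ℝ) * p * p * p * (1-p-3*q) * (1-p-3*q) * (1-p-3*q) * ((3*q/2 + (1-p-3*q)) - 3/10) +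
        (108650075076865029887721834178299908584126829248691034094194156126993064043/436818010216537826038125775554282008545635514868912028809991791552051888940:ℝ) * p * p * p * (1-p-3*q) * ((3*q/2 + (1-p-3*q)) - 3/10) * (2/5 - (3*q/2 + (1-p-3*q))) +
        (12486422683968834728141274711677098437674982779861152146566717289841862068/21840900510826891301906288777714100427281775743445601440499589577602594447:ℝ) * p * p * p * (1-p-3*q) * ((3*q/2 + (1-p-3*q)) - 3/10) * (2/5 - (3*q/2 + (1-p-3*q))) * (2/5 - (3*q/2 + (1-p-3*q))) +
        (2429631603666773568408676569413412379581979232207984353135537307082000044/65522701532480673905718866333142301281845327230336804321498768732807783341:ℝ) * p * p * p * (2/5 - (3*q/2 + (1-p-3*q))) * (2/5 - (3*q/2 + (1-p-3*q))) * (2/5 - (3*q/2 + (1-p-3*q))) +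
        (4975883553950374175598657386231018995353402154505218629266926083243668989/121338336171260507232812715431745002373787643019142230224997719875569969150:ℝ) * p * p * (1-p-3*q) * (1-p-3*q) * (1-p-3*q) * (1-p-3*q) * (1-p-3*q) * (1-p-3*q) +
        (70607126741582805172091294677116536422515901658326696970937521277454885949/2184090051082689130190628877771410042728177574344560144049958957760259444700:ℝ) * p * p * (1-p-3*q) * (1-p-3*q) * (1-p-3*q) * (1-p-3*q) * (1-p-3*q) * ((3*q/2 + (1-p-3*q)) - 3/10) +
        (2169374759477490889237800302602692744982320024052662998666039972784692764/21840900510826891301906288777714100427281775743445601440499589577602594447:ℝ) * p * p * (1-p-3*q) * (1-p-3*q) * ((3*q/2 + (1-p-3*q)) - 3/10) * ((3*q/2 + (1-p-3*q)) - 3/10) +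
        (158136297157323957560368880986976140929837075651921016148866177556514783163/2730112563853361412738286097214262553410221967930700180062448697200324305875:ℝ) * p * (1-p-3*q) * (1-p-3*q) * (1-p-3*q) * (1-p-3*q) * (1-p-3*q) * (2/5 - (3*q/2 + (1-p-3*q))) +
        (13087525936410701527341752267775402495439831698307637168962583240985353605/14560600340551260867937525851809400284854517162297067626999726385068396298:ℝ) * p * (1-p-3*q) * (1-p-3*q) * (1-p-3*q) * (2/5 - (3*q/2 + (1-p-3*q))) * (2/5 - (3*q/2 + (1-p-3*q))) +
        (3427305315281880167449718748571175809415074196027208609662266054912645593409/48535334468504202893125086172698000949515057207656892089999087950227987660000:ℝ) * q * (1-p-3*q) * (1-p-3*q) * (1-p-3*q) * (1-p-3*q) * (1-p-3*q) +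
        (246938534359004451309062319312671156377732195949100378101013508086655149643/2912120068110252173587505170361880056970903432459413525399945277013679259600:ℝ) * q * (1-p-3*q) * (1-p-3*q) * (1-p-3*q) * (1-p-3*q) * (1-p-3*q) * (1-p-3*q) +
        (3162101290454157463888388861464939423182202892845261125862443655096606952/182007504256890760849219073147617503560681464528713345337496579813354953725:ℝ) * q * (1-p-3*q) * (1-p-3*q) * (1-p-3*q) * (1-p-3*q) * (1-p-3*q) * (1-p-3*q) * (1-p-3*q) +
        (337031350436943114816139580427705300265727119185052005792079153131364969561/10920450255413445650953144388857050213640887871722800720249794788801297223500:ℝ) * (1-p-3*q) * (1-p-3*q) * (1-p-3*q) * (1-p-3*q) * (1-p-3*q) * (1-p-3*q) * (1-p-3*q) +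
        (91635642160076852286080991320771624914518419694013502319154466390555844539/2184090051082689130190628877771410042728177574344560144049958957760259444700:ℝ) * (1-p-3*q) * (1-p-3*q) * (1-p-3*q) * (1-p-3*q) * (1-p-3*q) * (1-p-3*q) * ((3*q/2 + (1-p-3*q)) - 3/10) * ((3*q/2 + (1-p-3*q)) - 3/10) +
        (5413096095692045295636895556857154299036060625772913850762773239393470753927/43681801021653782603812577555428200854563551486891202880999179155205188894000:ℝ) * (1-p-3*q) * (1-p-3*q) * (1-p-3*q) * (1-p-3*q) * (1-p-3*q) * (2/5 - (3*q/2 + (1-p-3*q))) +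
        (34003438271057005422712706833404285744532163741505688190384873947992122524/21840900510826891301906288777714100427281775743445601440499589577602594447:ℝ) * (1-p-3*q) * (1-p-3*q) * ((3*q/2 + (1-p-3*q)) - 3/10) * ((3*q/2 + (1-p-3*q)) - 3/10) * ((3*q/2 + (1-p-3*q)) - 3/10) +
        (4383021087161518436285716964973371222677760161992270862986082388152989500/7280300170275630433968762925904700142427258581148533813499863192534198149:ℝ) * (1-p-3*q) * (1-p-3*q) * ((3*q/2 + (1-p-3*q)) - 3/10) * ((3*q/2 + (1-p-3*q)) - 3/10) * ((3*q/2 + (1-p-3*q)) - 3/10) * ((3*q/2 + (1-p-3*q)) - 3/10) * ((3*q/2 + (1-p-3*q)) - 3/10) * (2/5 - (3*q/2 + (1-p-3*q))) +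
        (17398161027218740524222642593118577509151355168058638337519676463008270355/7280300170275630433968762925904700142427258581148533813499863192534198149:ℝ) * (1-p-3*q) * (2/5 - (3*q/2 + (1-p-3*q))) * (2/5 - (3*q/2 + (1-p-3*q))) * (2/5 - (3*q/2 + (1-p-3*q))) +
        (638366391384606086985959294874808928361229160016229060352987258280110032/21840900510826891301906288777714100427281775743445601440499589577602594447:ℝ) * ((3*q/2 + (1-p-3*q)) - 3/10) * ((3*q/2 + (1-p-3*q)) - 3/10) * ((3*q/2 + (1-p-3*q)) - 3/10) +
        (1612035271275459551828565314307668760235026649878250982918264940579288854/7280300170275630433968762925904700142427258581148533813499863192534198149:ℝ) * ((3*q/2 + (1-p-3*q)) - 3/10) * (2/5 - (3*q/2 + (1-p-3*q))) * (2/5 - (3*q/2 + (1-p-3*q))) +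
        (857806234265209878004320221488194564809650313184851315277519427618993517600/3210612375091553021380224450323972762810421034286503411753439667907581383709:ℝ) * (3*q - ((3*q/2 + (1-p-3*q)) * (1 - (3*q/2 + (1-p-3*q))) * (83/50 - 19/50 * ((3*q/2 + (1-p-3*q)) * (1 - (3*q/2 + (1-p-3*q))))))) * (3*q - ((3*q/2 + (1-p-3*q)) * (1 - (3*q/2 + (1-p-3*q))) * (83/50 - 19/50 * ((3*q/2 + (1-p-3*q)) * (1 - (3*q/2 + (1-p-3*q))))))) :=
      (add_nonneg (add_nonneg (add_nonneg (add_nonneg (add_nonneg (add_nonneg (add_nonneg (add_nonneg (add_nonneg (add_nonneg (add_nonneg (add_nonneg (add_nonneg (add_nonneg (add_nonneg (add_nonneg (add_nonneg (add_nonneg (add_nonneg (add_nonneg (add_nonneg (add_nonneg (add_nonneg (add_nonneg (add_nonneg (add_nonneg (add_nonneg (add_nonneg (add_nonneg (add_nonneg (add_nonneg (add_nonneg (add_nonneg (add_nonneg (add_nonneg (add_nonneg (add_nonneg (add_nonneg (add_nonneg (add_nonneg (add_nonneg (add_nonneg (add_nonneg (add_nonneg (mul_nonneg (by norm_num : (0:ℝ)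 ≤ (4533013486496936340356497672498830217327909900157992726817547822669510778/13212396605315033009795162347012233591812432239862153957833085053117618863:ℝ)) hh) (mul_nonneg (mul_nonneg (mul_nonneg (by norm_num : (0:ℝ) ≤ (9765674072133918061642353636065202176609468269396238486716299005388326045056/80265309377288825534505611258099319070260525857162585293835991697689534592725:ℝ)) hp) hp) hh)) (mul_nonneg (mul_nonneg (mul_nonneg (mul_nonneg (mul_nonneg (by norm_num : (0:ℝ) ≤ (169686228170326405541724651848848707134510262633571390525128802471944803906/3210612375091553021380224450323972762810421034286503411753439667907581383709:ℝ)) hp) hp) hp) hp) hh)) (mul_nonneg (mul_nonneg (mul_nonneg (mul_nonneg (by norm_num : (0:ℝ) ≤ (2633328177988065578521691727883926188039145604556388662935954971092908885736/5351020625152588368967040750539954604684035057144172352922399446512635639515:ℝ)) hp) hp) hq) hh)) (mul_nonneg (mul_nonneg (mul_nonneg (mul_nonneg (mul_nonneg (by norm_num : (0:ℝ) ≤ (1594226323000977478430399226239905003480300172937674802356949003246847120132/3210612375091553021380224450323972762810421034286503411753439667907581383709:ℝ)) hp) hp) ht) hA) hh)) (mul_nonneg (mul_nonneg (mul_nonneg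 (mul_nonneg (by norm_num : (0:ℝ) ≤ (9777468971700881113344587842142963117524912609585058736330395098795102959472/16053061875457765106901122251619863814052105171432517058767198339537906918545:ℝ)) hp) hp) hB) hh)) (mul_nonneg (mul_nonneg (mul_nonneg (mul_nonneg (mul_nonneg (by norm_num : (0:ℝ) ≤ (352895314488562624351109393979073408946628906410819302201791906933442241597/1070204125030517673793408150107990920936807011428834470584479889302527127903:ℝ)) hp) hq) ht) ht) hh)) (mul_nonneg (mul_nonneg (mul_nonneg (mul_nonneg (by norm_num : (0:ℝ) ≤ (595595177745576237373821832911739529160133050087799833667349981063758606802/16053061875457765106901122251619863814052105171432517058767198339537906918545:ℝ)) hp) ht) ht) hh)) (mul_nonneg (mul_nonneg (mul_nonneg (mul_nonneg (mul_nonneg (by norm_num : (0:ℝ) ≤ (1004065641210639832976903893816054026801616145308269259264827058838811078178/1070204125030517673793408150107990920936807011428834470584479889302527127903:ℝ)) hp) ht) ht) hB) hh)) (mul_nonneg (mul_nonneg (mul_nonneg (by norm_num : (0:ℝ) ≤ (620553737414000075116039503645235129372957519271987215339421209513039684/7280300170275630433968762925904700142427258581148533813499863192534198149:ℝ)) hq)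 ht) hh)) (mul_nonneg (mul_nonneg (by norm_num : (0:ℝ) ≤ (5227409537224858035754362231196206192020577137126420558417477905175821668616/3210612375091553021380224450323972762810421034286503411753439667907581383709:ℝ)) ht) hh)) (mul_nonneg (mul_nonneg (mul_nonneg (mul_nonneg (by norm_num : (0:ℝ) ≤ (1444025547783571606115109438177391017246150991736239886849522552971767052/21840900510826891301906288777714100427281775743445601440499589577602594447:ℝ)) ht) ht) ht) hh)) (mul_nonneg (mul_nonneg (mul_nonneg (mul_nonneg (mul_nonneg (by norm_num : (0:ℝ) ≤ (655845840079074391692476804172267142323935465512316337158621379250474151414/3210612375091553021380224450323972762810421034286503411753439667907581383709:ℝ)) ht) ht) ht) ht) hh)) (mul_nonneg (mul_nonneg (by norm_num : (0:ℝ) ≤ (10465592101134480810911247340378807781514498901599948172520389443253058704720/3210612375091553021380224450323972762810421034286503411753439667907581383709:ℝ)) hB) hh)) (mul_nonneg (mul_nonneg (mul_nonneg (mul_nonneg (mul_nonneg (mul_nonneg (mul_nonneg (mul_nonneg (by norm_num : (0:ℝ) ≤ (432255676975107682551085034356304162617642276130962419849756712683793537/109204502554134456509531443888570502136408878717228007202497947888012972235:ℝ))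 hp) hp) hp) hp) hp) hp) hp) hB)) (mul_nonneg (mul_nonneg (mul_nonneg (mul_nonneg (mul_nonneg (mul_nonneg (mul_nonneg (mul_nonneg (by norm_num : (0:ℝ) ≤ (32650092266564298062365302747547142981379351611342837259755957803113436997/873636020433075652076251551108564017091271029737824057619983583104103777880:ℝ)) hp) hp) hp) hp) hp) hp) ht) hB)) (mul_nonneg (mul_nonneg (mul_nonneg (mul_nonneg (mul_nonneg (mul_nonneg (mul_nonneg (mul_nonneg (by norm_num : (0:ℝ) ≤ (675284315745976796597334492799754495797297127847831280427983076684840971/8089222411417367148854181028783000158252509534609482014999847991704664610:ℝ)) hp) hp) hp) hp) hp) hq) hq) hq)) (mul_nonneg (mul_nonneg (mul_nonneg (mul_nonneg (mul_nonneg (mul_nonneg (mul_nonneg (mul_nonneg (by norm_num : (0:ℝ) ≤ (3696641901489457944603108337451730912739781923299722269526795989312762066/109204502554134456509531443888570502136408878717228007202497947888012972235:ℝ)) hp) hp) hp) hp) hp) ht) ht) hB)) (mul_nonneg (mul_nonneg (mul_nonneg (mul_nonneg (mul_nonneg (mul_nonneg (mul_nonneg (mul_nonneg (by norm_num : (0:ℝ)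 ≤ (1148829932609674678311200054377049339263017068393464197832448431196921521/109204502554134456509531443888570502136408878717228007202497947888012972235:ℝ)) hp) hp) hp) hp) ht) ht) ht) hA)) (mul_nonneg (mul_nonneg (mul_nonneg (mul_nonneg (mul_nonneg (mul_nonneg (mul_nonneg (by norm_num : (0:ℝ) ≤ (438281260161050406499612453034169265176135838892392612978230462274904320/7280300170275630433968762925904700142427258581148533813499863192534198149:ℝ)) hp) hp) hp) hp) hA) hA) hA)) (mul_nonneg (mul_nonneg (mul_nonneg (mul_nonneg (mul_nonneg (mul_nonneg (by norm_num : (0:ℝ) ≤ (18605358625112109875774782377034505241722227075838387628074263308949531112/327613507662403369528594331665711506409226636151684021607493843664038916705:ℝ)) hp) hp) hp) hp) hB) hB)) (mul_nonneg (mul_nonneg (mul_nonneg (mul_nonneg (mul_nonneg (mul_nonneg (mul_nonneg (by norm_num : (0:ℝ) ≤ (95185166795646034193024657477078984474055009541788046344733021086108161/1438083984251976382018521071783644472578223917263907913777750754080829264:ℝ)) hp) hp) hp) hq) hq) hq) ht)) (mul_nonneg (mul_nonneg (mul_nonneg (mul_nonneg (mul_nonneg (mul_nonneg (by norm_num : (0:ℝ)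 ≤ (29106258328903651872628131587291423631537671093539419191684459240871791527/109204502554134456509531443888570502136408878717228007202497947888012972235:ℝ)) hp) hp) hp) hq) hB) hB)) (mul_nonneg (mul_nonneg (mul_nonneg (mul_nonneg (mul_nonneg (mul_nonneg (mul_nonneg (mul_nonneg (by norm_num : (0:ℝ) ≤ (30454417046036726587488441931690201802667185941871905953662448426859934249/174727204086615130415250310221712803418254205947564811523996716620820755576:ℝ)) hp) hp) hp) ht) ht) ht) ht) hB)) (mul_nonneg (mul_nonneg (mul_nonneg (mul_nonneg (mul_nonneg (mul_nonneg (mul_nonneg (by norm_num : (0:ℝ) ≤ (32200139797634746660995076397659083841218639123287672340851664192710265977/109204502554134456509531443888570502136408878717228007202497947888012972235:ℝ)) hp) hp) hp) ht) ht) ht) hA)) (mul_nonneg (mul_nonneg (mul_nonneg (mul_nonneg (mul_nonneg (mul_nonneg (by norm_num : (0:ℝ) ≤ (108650075076865029887721834178299908584126829248691034094194156126993064043/436818010216537826038125775554282008545635514868912028809991791552051888940:ℝ)) hp) hp) hp) ht) hA) hB)) (mul_nonneg (mul_nonneg (mul_nonneg (mul_nonneg (mul_nonneg (mul_nonneg (mul_nonneg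 (by norm_num : (0:ℝ) ≤ (12486422683968834728141274711677098437674982779861152146566717289841862068/21840900510826891301906288777714100427281775743445601440499589577602594447:ℝ)) hp) hp) hp) ht) hA) hB) hB)) (mul_nonneg (mul_nonneg (mul_nonneg (mul_nonneg (mul_nonneg (mul_nonneg (by norm_num : (0:ℝ) ≤ (2429631603666773568408676569413412379581979232207984353135537307082000044/65522701532480673905718866333142301281845327230336804321498768732807783341:ℝ)) hp) hp) hp) hB) hB) hB)) (mul_nonneg (mul_nonneg (mul_nonneg (mul_nonneg (mul_nonneg (mul_nonneg (mul_nonneg (mul_nonneg (by norm_num : (0:ℝ) ≤ (4975883553950374175598657386231018995353402154505218629266926083243668989/121338336171260507232812715431745002373787643019142230224997719875569969150:ℝ)) hp) hp) ht) ht) ht) ht) ht) ht)) (mul_nonneg (mul_nonneg (mul_nonneg (mul_nonneg (mul_nonneg (mul_nonneg (mul_nonneg (mul_nonneg (by norm_num : (0:ℝ) ≤ (70607126741582805172091294677116536422515901658326696970937521277454885949/2184090051082689130190628877771410042728177574344560144049958957760259444700:ℝ)) hp) hp) ht) ht) ht) ht) ht) hA)) (mul_nonneg (mul_nonneg (mul_nonneg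 (mul_nonneg (mul_nonneg (mul_nonneg (by norm_num : (0:ℝ) ≤ (2169374759477490889237800302602692744982320024052662998666039972784692764/21840900510826891301906288777714100427281775743445601440499589577602594447:ℝ)) hp) hp) ht) ht) hA) hA)) (mul_nonneg (mul_nonneg (mul_nonneg (mul_nonneg (mul_nonneg (mul_nonneg (mul_nonneg (by norm_num : (0:ℝ) ≤ (158136297157323957560368880986976140929837075651921016148866177556514783163/2730112563853361412738286097214262553410221967930700180062448697200324305875:ℝ)) hp) ht) ht) ht) ht) ht) hB)) (mul_nonneg (mul_nonneg (mul_nonneg (mul_nonneg (mul_nonneg (mul_nonneg (by norm_num : (0:ℝ) ≤ (13087525936410701527341752267775402495439831698307637168962583240985353605/14560600340551260867937525851809400284854517162297067626999726385068396298:ℝ)) hp) ht) ht) ht) hB) hB)) (mul_nonneg (mul_nonneg (mul_nonneg (mul_nonneg (mul_nonneg (mul_nonneg (by norm_num : (0:ℝ) ≤ (3427305315281880167449718748571175809415074196027208609662266054912645593409/48535334468504202893125086172698000949515057207656892089999087950227987660000:ℝ)) hq) ht) ht) ht) ht) ht)) (mul_nonneg (mul_nonneg (mul_nonneg (mul_nonneg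 (mul_nonneg (mul_nonneg (mul_nonneg (by norm_num : (0:ℝ) ≤ (246938534359004451309062319312671156377732195949100378101013508086655149643/2912120068110252173587505170361880056970903432459413525399945277013679259600:ℝ)) hq) ht) ht) ht) ht) ht) ht)) (mul_nonneg (mul_nonneg (mul_nonneg (mul_nonneg (mul_nonneg (mul_nonneg (mul_nonneg (mul_nonneg (by norm_num : (0:ℝ) ≤ (3162101290454157463888388861464939423182202892845261125862443655096606952/182007504256890760849219073147617503560681464528713345337496579813354953725:ℝ)) hq) ht) ht) ht) ht) ht) ht) ht)) (mul_nonneg (mul_nonneg (mul_nonneg (mul_nonneg (mul_nonneg (mul_nonneg (mul_nonneg (by norm_num : (0:ℝ) ≤ (337031350436943114816139580427705300265727119185052005792079153131364969561/10920450255413445650953144388857050213640887871722800720249794788801297223500:ℝ)) ht) ht) ht) ht) ht) ht) ht)) (mul_nonneg (mul_nonneg (mul_nonneg (mul_nonneg (mul_nonneg (mul_nonneg (mul_nonneg (mul_nonneg (by norm_num : (0:ℝ) ≤ (91635642160076852286080991320771624914518419694013502319154466390555844539/2184090051082689130190628877771410042728177574344560144049958957760259444700:ℝ)) ht) ht) ht)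 ht) ht) ht) hA) hA)) (mul_nonneg (mul_nonneg (mul_nonneg (mul_nonneg (mul_nonneg (mul_nonneg (by norm_num : (0:ℝ) ≤ (5413096095692045295636895556857154299036060625772913850762773239393470753927/43681801021653782603812577555428200854563551486891202880999179155205188894000:ℝ)) ht) ht) ht) ht) ht) hB)) (mul_nonneg (mul_nonneg (mul_nonneg (mul_nonneg (mul_nonneg (by norm_num : (0:ℝ) ≤ (34003438271057005422712706833404285744532163741505688190384873947992122524/21840900510826891301906288777714100427281775743445601440499589577602594447:ℝ)) ht) ht) hA) hA) hA)) (mul_nonneg (mul_nonneg (mul_nonneg (mul_nonneg (mul_nonneg (mul_nonneg (mul_nonneg (mul_nonneg (by norm_num : (0:ℝ) ≤ (4383021087161518436285716964973371222677760161992270862986082388152989500/7280300170275630433968762925904700142427258581148533813499863192534198149:ℝ)) ht) ht) hA) hA) hA) hA) hA) hB)) (mul_nonneg (mul_nonneg (mul_nonneg (mul_nonneg (by norm_num : (0:ℝ) ≤ (17398161027218740524222642593118577509151355168058638337519676463008270355/7280300170275630433968762925904700142427258581148533813499863192534198149:ℝ)) ht) hB) hB) hB)) (mul_nonneg (mul_nonneg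 (mul_nonneg (by norm_num : (0:ℝ) ≤ (638366391384606086985959294874808928361229160016229060352987258280110032/21840900510826891301906288777714100427281775743445601440499589577602594447:ℝ)) hA) hA) hA)) (mul_nonneg (mul_nonneg (mul_nonneg (by norm_num : (0:ℝ) ≤ (1612035271275459551828565314307668760235026649878250982918264940579288854/7280300170275630433968762925904700142427258581148533813499863192534198149:ℝ)) hA) hB) hB)) (mul_nonneg (mul_nonneg (by norm_num : (0:ℝ) ≤ (857806234265209878004320221488194564809650313184851315277519427618993517600/3210612375091553021380224450323972762810421034286503411753439667907581383709:ℝ)) hh) hh))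
    linarith [hS]
  rcases le_or_gt ((3*q/2 + (1-p-3*q))) (1/2) with hc3 | hc3
  · -- band [2/5,1/2]
    have hA : (0:ℝ) ≤ (3*q/2 + (1-p-3*q)) - 2/5 := by linarith
    have hB : (0:ℝ) ≤ 1/2 - (3*q/2 + (1-p-3*q)) := by linarith
    have hS : (0:ℝ) ≤ (1562752987004315198155757172759194576561829538007184184388651149/8078687894107463812252717406522848855358784427971122179625373825:ℝ) * p * p * (3*q - ((3*q/2 + (1-p-3*q)) * (1 - (3*q/2 + (1-p-3*q))) * (83/50 - 19/50 * ((3*q/2 + (1-p-3*q)) * (1 - (3*q/2 + (1-p-3*q))))))) +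
        (40285633805531460456584401194614644858512229403825894495831002/141731366563288838811451182570576295708048849613528459291673225:ℝ) * p * p * p * q * (3*q - ((3*q/2 + (1-p-3*q)) * (1 - (3*q/2 + (1-p-3*q))) * (83/50 - 19/50 * ((3*q/2 + (1-p-3*q)) * (1 - (3*q/2 + (1-p-3*q))))))) +
        (10469556178985980691195477315318677754984147503573707539549956/28346273312657767762290236514115259141609769922705691858334645:ℝ) * p * p * p * (1/2 - (3*q/2 + (1-p-3*q))) * (3*q - ((3*q/2 + (1-p-3*q)) * (1 - (3*q/2 + (1-p-3*q))) * (83/50 - 19/50 * ((3*q/2 + (1-p-3*q)) * (1 - (3*q/2 + (1-p-3*q))))))) +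
        (37797317406008615998569710043792803107947436576254252480902981/141731366563288838811451182570576295708048849613528459291673225:ℝ) * p * p * q * (3*q - ((3*q/2 + (1-p-3*q)) * (1 - (3*q/2 + (1-p-3*q))) * (83/50 - 19/50 * ((3*q/2 + (1-p-3*q)) * (1 - (3*q/2 + (1-p-3*q))))))) +
        (6104162765386788389116910890421965790387923991998012239628226/141731366563288838811451182570576295708048849613528459291673225:ℝ) * p * p * (1/2 - (3*q/2 + (1-p-3*q))) * (3*q - ((3*q/2 + (1-p-3*q)) * (1 - (3*q/2 + (1-p-3*q))) * (83/50 - 19/50 * ((3*q/2 + (1-p-3*q)) * (1 - (3*q/2 + (1-p-3*q))))))) +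
        (1874447786913367482761702455667693597066857260258474922791764/47243788854429612937150394190192098569349616537842819763891075:ℝ) * p * q * (1-p-3*q) * (1-p-3*q) * (3*q - ((3*q/2 + (1-p-3*q)) * (1 - (3*q/2 + (1-p-3*q))) * (83/50 - 19/50 * ((3*q/2 + (1-p-3*q)) * (1 - (3*q/2 + (1-p-3*q))))))) +
        (22589173982569543950990144592141977756912912939046027153498520/17007763987594660657374141908469155484965861953623415115000787:ℝ) * p * (1-p-3*q) * (1-p-3*q) * (1/2 - (3*q/2 + (1-p-3*q))) * (3*q - ((3*q/2 + (1-p-3*q)) * (1 - (3*q/2 + (1-p-3*q))) * (83/50 - 19/50 * ((3*q/2 + (1-p-3*q)) * (1 - (3*q/2 + (1-p-3*q))))))) +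
        (1048835146721767260007471653377996845632092877456669366106079344/4488159941170813229029287448068249364088213571095067877569652125:ℝ) * q * (1-p-3*q) * (3*q - ((3*q/2 + (1-p-3*q)) * (1 - (3*q/2 + (1-p-3*q))) * (83/50 - 19/50 * ((3*q/2 + (1-p-3*q)) * (1 - (3*q/2 + (1-p-3*q))))))) +
        (2169613398966358033046505921411303675554307852538802733514502/47243788854429612937150394190192098569349616537842819763891075:ℝ) * q * (1-p-3*q) * (1-p-3*q) * (3*q - ((3*q/2 + (1-p-3*q)) * (1 - (3*q/2 + (1-p-3*q))) * (83/50 - 19/50 * ((3*q/2 + (1-p-3*q)) * (1 - (3*q/2 + (1-p-3*q))))))) +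
        (328562376407743321894095377814198253582873652646226417475322627992/201967197352686595306317935163071221383969610699278054490634345625:ℝ) * (1-p-3*q) * (3*q - ((3*q/2 + (1-p-3*q)) * (1 - (3*q/2 + (1-p-3*q))) * (83/50 - 19/50 * ((3*q/2 + (1-p-3*q)) * (1 - (3*q/2 + (1-p-3*q))))))) +
        (118814567048671498819648059369088931457942208071735257157054868/425194099689866516434353547711728887124146548840585377875019675:ℝ) * (1-p-3*q) * (1-p-3*q) * (1-p-3*q) * (1-p-3*q) * (3*q - ((3*q/2 + (1-p-3*q)) * (1 - (3*q/2 + (1-p-3*q))) * (83/50 - 19/50 * ((3*q/2 + (1-p-3*q)) * (1 - (3*q/2 + (1-p-3*q))))))) +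
        (149092715295357340406228891715273313979178026985443079392700532/425194099689866516434353547711728887124146548840585377875019675:ℝ) * (1-p-3*q) * (1-p-3*q) * ((3*q/2 + (1-p-3*q)) - 2/5) * (3*q - ((3*q/2 + (1-p-3*q)) * (1 - (3*q/2 + (1-p-3*q))) * (83/50 - 19/50 * ((3*q/2 + (1-p-3*q)) * (1 - (3*q/2 + (1-p-3*q))))))) +
        (2815009148957511762363154212459694629445662249994842038355083696/40393439470537319061263587032614244276793922139855610898126869125:ℝ) * (1-p-3*q) * ((3*q/2 + (1-p-3*q)) - 2/5) * (3*q - ((3*q/2 + (1-p-3*q)) * (1 - (3*q/2 + (1-p-3*q))) * (83/50 - 19/50 * ((3*q/2 + (1-p-3*q)) * (1 - (3*q/2 + (1-p-3*q))))))) +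
        (5320546469821061281377797273578899470448135191296963879907902592/1615737578821492762450543481304569771071756885594224435925074765:ℝ) * (1/2 - (3*q/2 + (1-p-3*q))) * (3*q - ((3*q/2 + (1-p-3*q)) * (1 - (3*q/2 + (1-p-3*q))) * (83/50 - 19/50 * ((3*q/2 + (1-p-3*q)) * (1 - (3*q/2 + (1-p-3*q))))))) +
        (4678545275404099342107088182102988538871485034866704841347/153173421121029762035503277391739215074082837580815367223250:ℝ) * p * p * p * p * p * p * p * q +
        (3755017470926256286999743288387208049167092670142764831208/229760131681544643053254916087608822611124256371223050834875:ℝ) * p * p * p * p * p * p * p * (1/2 - (3*q/2 + (1-p-3*q))) +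
        (13867695757583221354137421397891805508793621714620938753902/229760131681544643053254916087608822611124256371223050834875:ℝ) * p * p * p * p * p * p * (1-p-3*q) * (1/2 - (3*q/2 + (1-p-3*q))) +
        (5643312449379687598090540785464359103842252779832844015041/459520263363089286106509832175217645222248512742446101669750:ℝ) * p * p * p * p * p * p * ((3*q/2 + (1-p-3*q)) - 2/5) +
        (18245412342783978356502898873714402103035407111738772823893/153173421121029762035503277391739215074082837580815367223250:ℝ) * p * p * p * p * p * (1-p-3*q) * ((3*q/2 + (1-p-3*q)) - 2/5) +
        (71084331405910572483542492340456247637552271088905423366211/1746177000779739287204737362265827051844544348421295186345050:ℝ) * p * p * p * p * p * ((3*q/2 + (1-p-3*q)) - 2/5) +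
        (23235135172755730754953142128521126045275600616160878231343/153173421121029762035503277391739215074082837580815367223250:ℝ) * p * p * p * p * q * (1-p-3*q) * (1-p-3*q) +
        (2813506794678605473827392423618494624790031397343294627623/76586710560514881017751638695869607537041418790407683611625:ℝ) * p * p * p * p * q * (1-p-3*q) * (1-p-3*q) * (1-p-3*q) +
        (292594725901433356765532464394826806419044131897317635677369/8730885003898696436023686811329135259222721742106475931725250:ℝ) * p * p * p * p * (1-p-3*q) * (1-p-3*q) +
        (2999768556082596975680895236387665136147821104335572218838/25528903520171627005917212898623202512347139596802561203875:ℝ) * p * p * p * p * (1-p-3*q) * (1-p-3*q) * (1-p-3*q) * (1/2 - (3*q/2 + (1-p-3*q))) +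
        (16365942268262147567735604250268990184919644705559160740237/291029500129956547867456227044304508640757391403549197724175:ℝ) * p * p * p * p * (1-p-3*q) * ((3*q/2 + (1-p-3*q)) - 2/5) +
        (6353919246350873200140107700529236184157598035350327016797/459520263363089286106509832175217645222248512742446101669750:ℝ) * p * p * p * (1-p-3*q) * (1-p-3*q) * (1-p-3*q) * (1-p-3*q) +
        (51355956881040624034310610353702185535167333406811581662661/459520263363089286106509832175217645222248512742446101669750:ℝ) * p * p * p * (1-p-3*q) * (1-p-3*q) * (1-p-3*q) * (1-p-3*q) * (1-p-3*q) +
        (9125461638430525608415536942310503362663990457938737465421/9190405267261785722130196643504352904444970254848922033395:ℝ) * p * p * p * (1-p-3*q) * (1-p-3*q) * ((3*q/2 + (1-p-3*q)) - 2/5) * ((3*q/2 + (1-p-3*q)) - 2/5) +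
        (22742920772416050968791984466248141464362347795235940049729/58205900025991309573491245408860901728151478280709839544835:ℝ) * p * p * p * ((3*q/2 + (1-p-3*q)) - 2/5) * ((3*q/2 + (1-p-3*q)) - 2/5) +
        (3233548552740496338422178689222907466807088701589818566467/38803933350660873048994163605907267818767652187139893029890:ℝ) * p * p * q * (1-p-3*q) * (1-p-3*q) * (1-p-3*q) +
        (10873217216274755327213589046353146372844533179274519720819/25528903520171627005917212898623202512347139596802561203875:ℝ) * p * p * (1-p-3*q) * (1-p-3*q) * (1-p-3*q) * (1-p-3*q) * (1/2 - (3*q/2 + (1-p-3*q))) +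
        (8729360655883076351597730783839004109209004520262166822732/45952026336308928610650983217521764522224851274244610166975:ℝ) * p * (1-p-3*q) * (1-p-3*q) * (1-p-3*q) * (1-p-3*q) * (1-p-3*q) * (1-p-3*q) * ((3*q/2 + (1-p-3*q)) - 2/5) +
        (226181635604875882759778001392270199286261744054825654043068/174617700077973928720473736226582705184454434842129518634505:ℝ) * p * (1-p-3*q) * (1-p-3*q) * (1-p-3*q) * ((3*q/2 + (1-p-3*q)) - 2/5) * ((3*q/2 + (1-p-3*q)) - 2/5) +
        (77599680647661766754698620037627789592128396544022708488678/663547260296300929137800197661014279700926852400092170811119:ℝ) * p * ((3*q/2 + (1-p-3*q)) - 2/5) * ((3*q/2 + (1-p-3*q)) - 2/5) +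
        (39487122281758060197399904323945668625344131991170212962539/2910295001299565478674562270443045086407573914035491977241750:ℝ) * q * (1-p-3*q) * (1-p-3*q) * (1-p-3*q) * (1-p-3*q) * (1-p-3*q) +
        (3284741145791687609575609963916942626180547605142979996248/76586710560514881017751638695869607537041418790407683611625:ℝ) * q * (1-p-3*q) * (1-p-3*q) * (1-p-3*q) * (1-p-3*q) * (1-p-3*q) * (1-p-3*q) +
        (12798649930768045714577377009955650276864548168626178363568/76586710560514881017751638695869607537041418790407683611625:ℝ) * q * (1-p-3*q) * (1-p-3*q) * (1-p-3*q) * (1-p-3*q) * (1-p-3*q) * (1-p-3*q) * (1-p-3*q) +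
        (11302767323295447286455604194786498569562745579709301465451/229760131681544643053254916087608822611124256371223050834875:ℝ) * (1-p-3*q) * (1-p-3*q) * (1-p-3*q) * (1-p-3*q) * (1-p-3*q) * (1-p-3*q) * (1-p-3*q) * (1-p-3*q) +
        (21852047457850426877448712926101375779981769498283670124936/229760131681544643053254916087608822611124256371223050834875:ℝ) * (1-p-3*q) * (1-p-3*q) * (1-p-3*q) * (1-p-3*q) * (1-p-3*q) * (1-p-3*q) * (1/2 - (3*q/2 + (1-p-3*q))) +
        (548708563197275673830733739298765113321602734585254286347522/2425245834416304565562135225369204238672978261696243314368125:ℝ) * (1-p-3*q) * (1-p-3*q) * (1-p-3*q) * (1-p-3*q) * (1-p-3*q) * (1/2 - (3*q/2 + (1-p-3*q))) +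
        (32595289622233686640071808923761795472702380504639094525662/34923540015594785744094747245316541036890886968425903726901:ℝ) * (1-p-3*q) * (1-p-3*q) * (1-p-3*q) * ((3*q/2 + (1-p-3*q)) - 2/5) * ((3*q/2 + (1-p-3*q)) - 2/5) +
        (400083254484553617723551721564195195380172538467624160466867/165886815074075232284450049415253569925231713100023042702779750:ℝ) * ((3*q/2 + (1-p-3*q)) - 2/5) +
        (34588148220272066011340433222516183215477547907770608779013656/16588681507407523228445004941525356992523171310002304270277975:ℝ) * ((3*q/2 + (1-p-3*q)) - 2/5) * ((3*q/2 + (1-p-3*q)) - 2/5) * ((3*q/2 + (1-p-3*q)) - 2/5) * (1/2 - (3*q/2 + (1-p-3*q))) +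
        (358253173902738405444787195969994271904145673542174454710737/138239012561729360237041707846044641604359760916685868918983125:ℝ) * ((3*q/2 + (1-p-3*q)) - 2/5) * (1/2 - (3*q/2 + (1-p-3*q))) +
        (95805299145848708385972265565206843535921292259032662975598304/323147515764298552490108696260913954214351377118844887185014953:ℝ) * (3*q - ((3*q/2 + (1-p-3*q)) * (1 - (3*q/2 + (1-p-3*q))) * (83/50 - 19/50 * ((3*q/2 + (1-p-3*q)) * (1 - (3*q/2 + (1-p-3*q))))))) * (3*q - ((3*q/2 + (1-p-3*q)) * (1 - (3*q/2 + (1-p-3*q))) * (83/50 - 19/50 * ((3*q/2 + (1-p-3*q)) * (1 - (3*q/2 + (1-p-3*q))))))) :=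
      (add_nonneg (add_nonneg (add_nonneg (add_nonneg (add_nonneg (add_nonneg (add_nonneg (add_nonneg (add_nonneg (add_nonneg (add_nonneg (add_nonneg (add_nonneg (add_nonneg (add_nonneg (add_nonneg (add_nonneg (add_nonneg (add_nonneg (add_nonneg (add_nonneg (add_nonneg (add_nonneg (add_nonneg (add_nonneg (add_nonneg (add_nonneg (add_nonneg (add_nonneg (add_nonneg (add_nonneg (add_nonneg (add_nonneg (add_nonneg (add_nonneg (add_nonneg (add_nonneg (add_nonneg (add_nonneg (add_nonneg (add_nonneg (add_nonneg (add_nonneg (add_nonneg (mul_nonneg (mul_nonneg (mul_nonneg (by norm_num : (0:ℝ) ≤ (1562752987004315198155757172759194576561829538007184184388651149/8078687894107463812252717406522848855358784427971122179625373825:ℝ)) hp) hp) hh) (mul_nonneg (mul_nonneg (mul_nonneg (mul_nonneg (mul_nonneg (by norm_num : (0:ℝ) ≤ (40285633805531460456584401194614644858512229403825894495831002/141731366563288838811451182570576295708048849613528459291673225:ℝ)) hp) hp) hp) hq) hh)) (mul_nonneg (mul_nonneg (mul_nonneg (mul_nonneg (mul_nonneg (by norm_num : (0:ℝ) ≤ (10469556178985980691195477315318677754984147503573707539549956/28346273312657767762290236514115259141609769922705691858334645:ℝ))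 hp) hp) hp) hB) hh)) (mul_nonneg (mul_nonneg (mul_nonneg (mul_nonneg (by norm_num : (0:ℝ) ≤ (37797317406008615998569710043792803107947436576254252480902981/141731366563288838811451182570576295708048849613528459291673225:ℝ)) hp) hp) hq) hh)) (mul_nonneg (mul_nonneg (mul_nonneg (mul_nonneg (by norm_num : (0:ℝ) ≤ (6104162765386788389116910890421965790387923991998012239628226/141731366563288838811451182570576295708048849613528459291673225:ℝ)) hp) hp) hB) hh)) (mul_nonneg (mul_nonneg (mul_nonneg (mul_nonneg (mul_nonneg (by norm_num : (0:ℝ) ≤ (1874447786913367482761702455667693597066857260258474922791764/47243788854429612937150394190192098569349616537842819763891075:ℝ)) hp) hq) ht) ht) hh)) (mul_nonneg (mul_nonneg (mul_nonneg (mul_nonneg (mul_nonneg (by norm_num : (0:ℝ) ≤ (22589173982569543950990144592141977756912912939046027153498520/17007763987594660657374141908469155484965861953623415115000787:ℝ)) hp) ht) ht) hB) hh)) (mul_nonneg (mul_nonneg (mul_nonneg (by norm_num : (0:ℝ) ≤ (1048835146721767260007471653377996845632092877456669366106079344/4488159941170813229029287448068249364088213571095067877569652125:ℝ)) hq) ht)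 hh)) (mul_nonneg (mul_nonneg (mul_nonneg (mul_nonneg (by norm_num : (0:ℝ) ≤ (2169613398966358033046505921411303675554307852538802733514502/47243788854429612937150394190192098569349616537842819763891075:ℝ)) hq) ht) ht) hh)) (mul_nonneg (mul_nonneg (by norm_num : (0:ℝ) ≤ (328562376407743321894095377814198253582873652646226417475322627992/201967197352686595306317935163071221383969610699278054490634345625:ℝ)) ht) hh)) (mul_nonneg (mul_nonneg (mul_nonneg (mul_nonneg (mul_nonneg (by norm_num : (0:ℝ) ≤ (118814567048671498819648059369088931457942208071735257157054868/425194099689866516434353547711728887124146548840585377875019675:ℝ)) ht) ht) ht) ht) hh)) (mul_nonneg (mul_nonneg (mul_nonneg (mul_nonneg (by norm_num : (0:ℝ) ≤ (149092715295357340406228891715273313979178026985443079392700532/425194099689866516434353547711728887124146548840585377875019675:ℝ)) ht) ht) hA) hh)) (mul_nonneg (mul_nonneg (mul_nonneg (by norm_num : (0:ℝ) ≤ (2815009148957511762363154212459694629445662249994842038355083696/40393439470537319061263587032614244276793922139855610898126869125:ℝ)) ht) hA) hh)) (mul_nonneg (mul_nonneg (by norm_num : (0:ℝ) ≤ (5320546469821061281377797273578899470448135191296963879907902592/1615737578821492762450543481304569771071756885594224435925074765:ℝ))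 hB) hh)) (mul_nonneg (mul_nonneg (mul_nonneg (mul_nonneg (mul_nonneg (mul_nonneg (mul_nonneg (mul_nonneg (by norm_num : (0:ℝ) ≤ (4678545275404099342107088182102988538871485034866704841347/153173421121029762035503277391739215074082837580815367223250:ℝ)) hp) hp) hp) hp) hp) hp) hp) hq)) (mul_nonneg (mul_nonneg (mul_nonneg (mul_nonneg (mul_nonneg (mul_nonneg (mul_nonneg (mul_nonneg (by norm_num : (0:ℝ) ≤ (3755017470926256286999743288387208049167092670142764831208/229760131681544643053254916087608822611124256371223050834875:ℝ)) hp) hp) hp) hp) hp) hp) hp) hB)) (mul_nonneg (mul_nonneg (mul_nonneg (mul_nonneg (mul_nonneg (mul_nonneg (mul_nonneg (mul_nonneg (by norm_num : (0:ℝ) ≤ (13867695757583221354137421397891805508793621714620938753902/229760131681544643053254916087608822611124256371223050834875:ℝ)) hp) hp) hp) hp) hp) hp) ht) hB)) (mul_nonneg (mul_nonneg (mul_nonneg (mul_nonneg (mul_nonneg (mul_nonneg (mul_nonneg (by norm_num : (0:ℝ) ≤ (5643312449379687598090540785464359103842252779832844015041/459520263363089286106509832175217645222248512742446101669750:ℝ))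 hp) hp) hp) hp) hp) hp) hA)) (mul_nonneg (mul_nonneg (mul_nonneg (mul_nonneg (mul_nonneg (mul_nonneg (mul_nonneg (by norm_num : (0:ℝ) ≤ (18245412342783978356502898873714402103035407111738772823893/153173421121029762035503277391739215074082837580815367223250:ℝ)) hp) hp) hp) hp) hp) ht) hA)) (mul_nonneg (mul_nonneg (mul_nonneg (mul_nonneg (mul_nonneg (mul_nonneg (by norm_num : (0:ℝ) ≤ (71084331405910572483542492340456247637552271088905423366211/1746177000779739287204737362265827051844544348421295186345050:ℝ)) hp) hp) hp) hp) hp) hA)) (mul_nonneg (mul_nonneg (mul_nonneg (mul_nonneg (mul_nonneg (mul_nonneg (mul_nonneg (by norm_num : (0:ℝ) ≤ (23235135172755730754953142128521126045275600616160878231343/153173421121029762035503277391739215074082837580815367223250:ℝ)) hp) hp) hp) hp) hq) ht) ht)) (mul_nonneg (mul_nonneg (mul_nonneg (mul_nonneg (mul_nonneg (mul_nonneg (mul_nonneg (mul_nonneg (by norm_num : (0:ℝ) ≤ (2813506794678605473827392423618494624790031397343294627623/76586710560514881017751638695869607537041418790407683611625:ℝ)) hp) hp) hp) hp) hq) ht)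 ht) ht)) (mul_nonneg (mul_nonneg (mul_nonneg (mul_nonneg (mul_nonneg (mul_nonneg (by norm_num : (0:ℝ) ≤ (292594725901433356765532464394826806419044131897317635677369/8730885003898696436023686811329135259222721742106475931725250:ℝ)) hp) hp) hp) hp) ht) ht)) (mul_nonneg (mul_nonneg (mul_nonneg (mul_nonneg (mul_nonneg (mul_nonneg (mul_nonneg (mul_nonneg (by norm_num : (0:ℝ) ≤ (2999768556082596975680895236387665136147821104335572218838/25528903520171627005917212898623202512347139596802561203875:ℝ)) hp) hp) hp) hp) ht) ht) ht) hB)) (mul_nonneg (mul_nonneg (mul_nonneg (mul_nonneg (mul_nonneg (mul_nonneg (by norm_num : (0:ℝ) ≤ (16365942268262147567735604250268990184919644705559160740237/291029500129956547867456227044304508640757391403549197724175:ℝ)) hp) hp) hp) hp) ht) hA)) (mul_nonneg (mul_nonneg (mul_nonneg (mul_nonneg (mul_nonneg (mul_nonneg (mul_nonneg (by norm_num : (0:ℝ) ≤ (6353919246350873200140107700529236184157598035350327016797/459520263363089286106509832175217645222248512742446101669750:ℝ)) hp) hp) hp) ht) ht) ht) ht)) (mul_nonneg (mul_nonneg (mul_nonneg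 (mul_nonneg (mul_nonneg (mul_nonneg (mul_nonneg (mul_nonneg (by norm_num : (0:ℝ) ≤ (51355956881040624034310610353702185535167333406811581662661/459520263363089286106509832175217645222248512742446101669750:ℝ)) hp) hp) hp) ht) ht) ht) ht) ht)) (mul_nonneg (mul_nonneg (mul_nonneg (mul_nonneg (mul_nonneg (mul_nonneg (mul_nonneg (by norm_num : (0:ℝ) ≤ (9125461638430525608415536942310503362663990457938737465421/9190405267261785722130196643504352904444970254848922033395:ℝ)) hp) hp) hp) ht) ht) hA) hA)) (mul_nonneg (mul_nonneg (mul_nonneg (mul_nonneg (mul_nonneg (by norm_num : (0:ℝ) ≤ (22742920772416050968791984466248141464362347795235940049729/58205900025991309573491245408860901728151478280709839544835:ℝ)) hp) hp) hp) hA) hA)) (mul_nonneg (mul_nonneg (mul_nonneg (mul_nonneg (mul_nonneg (mul_nonneg (by norm_num : (0:ℝ) ≤ (3233548552740496338422178689222907466807088701589818566467/38803933350660873048994163605907267818767652187139893029890:ℝ)) hp) hp) hq) ht) ht) ht)) (mul_nonneg (mul_nonneg (mul_nonneg (mul_nonneg (mul_nonneg (mul_nonneg (mul_nonneg (by norm_num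 : (0:ℝ) ≤ (10873217216274755327213589046353146372844533179274519720819/25528903520171627005917212898623202512347139596802561203875:ℝ)) hp) hp) ht) ht) ht) ht) hB)) (mul_nonneg (mul_nonneg (mul_nonneg (mul_nonneg (mul_nonneg (mul_nonneg (mul_nonneg (mul_nonneg (by norm_num : (0:ℝ) ≤ (8729360655883076351597730783839004109209004520262166822732/45952026336308928610650983217521764522224851274244610166975:ℝ)) hp) ht) ht) ht) ht) ht) ht) hA)) (mul_nonneg (mul_nonneg (mul_nonneg (mul_nonneg (mul_nonneg (mul_nonneg (by norm_num : (0:ℝ) ≤ (226181635604875882759778001392270199286261744054825654043068/174617700077973928720473736226582705184454434842129518634505:ℝ)) hp) ht) ht) ht) hA) hA)) (mul_nonneg (mul_nonneg (mul_nonneg (by norm_num : (0:ℝ) ≤ (77599680647661766754698620037627789592128396544022708488678/663547260296300929137800197661014279700926852400092170811119:ℝ)) hp) hA) hA)) (mul_nonneg (mul_nonneg (mul_nonneg (mul_nonneg (mul_nonneg (mul_nonneg (by norm_num : (0:ℝ) ≤ (39487122281758060197399904323945668625344131991170212962539/2910295001299565478674562270443045086407573914035491977241750:ℝ)) hq) ht)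 ht) ht) ht) ht)) (mul_nonneg (mul_nonneg (mul_nonneg (mul_nonneg (mul_nonneg (mul_nonneg (mul_nonneg (by norm_num : (0:ℝ) ≤ (3284741145791687609575609963916942626180547605142979996248/76586710560514881017751638695869607537041418790407683611625:ℝ)) hq) ht) ht) ht) ht) ht) ht)) (mul_nonneg (mul_nonneg (mul_nonneg (mul_nonneg (mul_nonneg (mul_nonneg (mul_nonneg (mul_nonneg (by norm_num : (0:ℝ) ≤ (12798649930768045714577377009955650276864548168626178363568/76586710560514881017751638695869607537041418790407683611625:ℝ)) hq) ht) ht) ht) ht) ht) ht) ht)) (mul_nonneg (mul_nonneg (mul_nonneg (mul_nonneg (mul_nonneg (mul_nonneg (mul_nonneg (mul_nonneg (by norm_num : (0:ℝ) ≤ (11302767323295447286455604194786498569562745579709301465451/229760131681544643053254916087608822611124256371223050834875:ℝ)) ht) ht) ht) ht) ht) ht) ht) ht)) (mul_nonneg (mul_nonneg (mul_nonneg (mul_nonneg (mul_nonneg (mul_nonneg (mul_nonneg (by norm_num : (0:ℝ) ≤ (21852047457850426877448712926101375779981769498283670124936/229760131681544643053254916087608822611124256371223050834875:ℝ)) ht)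 ht) ht) ht) ht) ht) hB)) (mul_nonneg (mul_nonneg (mul_nonneg (mul_nonneg (mul_nonneg (mul_nonneg (by norm_num : (0:ℝ) ≤ (548708563197275673830733739298765113321602734585254286347522/2425245834416304565562135225369204238672978261696243314368125:ℝ)) ht) ht) ht) ht) ht) hB)) (mul_nonneg (mul_nonneg (mul_nonneg (mul_nonneg (mul_nonneg (by norm_num : (0:ℝ) ≤ (32595289622233686640071808923761795472702380504639094525662/34923540015594785744094747245316541036890886968425903726901:ℝ)) ht) ht) ht) hA) hA)) (mul_nonneg (by norm_num : (0:ℝ) ≤ (400083254484553617723551721564195195380172538467624160466867/165886815074075232284450049415253569925231713100023042702779750:ℝ)) hA)) (mul_nonneg (mul_nonneg (mul_nonneg (mul_nonneg (by norm_num : (0:ℝ) ≤ (34588148220272066011340433222516183215477547907770608779013656/16588681507407523228445004941525356992523171310002304270277975:ℝ)) hA) hA) hA) hB)) (mul_nonneg (mul_nonneg (by norm_num : (0:ℝ) ≤ (358253173902738405444787195969994271904145673542174454710737/138239012561729360237041707846044641604359760916685868918983125:ℝ)) hA) hB)) (mul_nonneg (mul_nonneg (by norm_num : (0:ℝ) ≤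 (95805299145848708385972265565206843535921292259032662975598304/323147515764298552490108696260913954214351377118844887185014953:ℝ)) hh) hh))
    linarith [hS]
  rcases le_or_gt ((3*q/2 + (1-p-3*q))) (7/10) with hc4 | hc4
  · -- band [1/2,7/10]
    have hA : (0:ℝ) ≤ (3*q/2 + (1-p-3*q)) - 1/2 := by linarith
    have hB : (0:ℝ) ≤ 7/10 - (3*q/2 + (1-p-3*q)) := by linarith
    have hS : (0:ℝ) ≤ (1667545726251253430582742474844421348343326833867159013662252/1053435475992862234289103563641551692811245847743850438856875:ℝ) * p * (3*q - ((3*q/2 + (1-p-3*q)) * (1 - (3*q/2 + (1-p-3*q))) * (83/50 - 19/50 * ((3*q/2 + (1-p-3*q)) * (1 - (3*q/2 + (1-p-3*q))))))) +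
        (37841590542410028048239091046483274409270930635012942927276/210687095198572446857820712728310338562249169548770087771375:ℝ) * p * p * (3*q - ((3*q/2 + (1-p-3*q)) * (1 - (3*q/2 + (1-p-3*q))) * (83/50 - 19/50 * ((3*q/2 + (1-p-3*q)) * (1 - (3*q/2 + (1-p-3*q))))))) +
        (484152244732540512832439061101966025304233538002172371007/2809161269314299291437609503044137847496655593983601170285:ℝ) * p * p * p * (1-p-3*q) * (3*q - ((3*q/2 + (1-p-3*q)) * (1 - (3*q/2 + (1-p-3*q))) * (83/50 - 19/50 * ((3*q/2 + (1-p-3*q)) * (1 - (3*q/2 + (1-p-3*q))))))) +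
        (1352585083585475598565304582661639196579368797760152303146/2809161269314299291437609503044137847496655593983601170285:ℝ) * p * p * p * (7/10 - (3*q/2 + (1-p-3*q))) * (3*q - ((3*q/2 + (1-p-3*q)) * (1 - (3*q/2 + (1-p-3*q))) * (83/50 - 19/50 * ((3*q/2 + (1-p-3*q)) * (1 - (3*q/2 + (1-p-3*q))))))) +
        (191290680270994090438585624084935540849870480010292254624/2809161269314299291437609503044137847496655593983601170285:ℝ) * p * p * (1-p-3*q) * (1-p-3*q) * (3*q - ((3*q/2 + (1-p-3*q)) * (1 - (3*q/2 + (1-p-3*q))) * (83/50 - 19/50 * ((3*q/2 + (1-p-3*q)) * (1 - (3*q/2 + (1-p-3*q))))))) +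
        (6705294990863583733456128435003683109189324568084131393172/14045806346571496457188047515220689237483277969918005851425:ℝ) * p * p * ((3*q/2 + (1-p-3*q)) - 1/2) * (3*q - ((3*q/2 + (1-p-3*q)) * (1 - (3*q/2 + (1-p-3*q))) * (83/50 - 19/50 * ((3*q/2 + (1-p-3*q)) * (1 - (3*q/2 + (1-p-3*q))))))) +
        (374121514962761819347486978556790584352053153817920329844/936387089771433097145869834348045949165551864661200390095:ℝ) * p * q * (1-p-3*q) * (3*q - ((3*q/2 + (1-p-3*q)) * (1 - (3*q/2 + (1-p-3*q))) * (83/50 - 19/50 * ((3*q/2 + (1-p-3*q)) * (1 - (3*q/2 + (1-p-3*q))))))) +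
        (613118709040687142936391180760588904738810414390829579964/2809161269314299291437609503044137847496655593983601170285:ℝ) * q * (1-p-3*q) * (3*q - ((3*q/2 + (1-p-3*q)) * (1 - (3*q/2 + (1-p-3*q))) * (83/50 - 19/50 * ((3*q/2 + (1-p-3*q)) * (1 - (3*q/2 + (1-p-3*q))))))) +
        (1713676137107012098156131179330801441628384870201786980494/14045806346571496457188047515220689237483277969918005851425:ℝ) * (1-p-3*q) * (1-p-3*q) * (1-p-3*q) * (3*q - ((3*q/2 + (1-p-3*q)) * (1 - (3*q/2 + (1-p-3*q))) * (83/50 - 19/50 * ((3*q/2 + (1-p-3*q)) * (1 - (3*q/2 + (1-p-3*q))))))) +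
        (46109348375514600269682632954554997420770703044655862169/2809161269314299291437609503044137847496655593983601170285:ℝ) * (1-p-3*q) * (1-p-3*q) * (1-p-3*q) * (1-p-3*q) * (3*q - ((3*q/2 + (1-p-3*q)) * (1 - (3*q/2 + (1-p-3*q))) * (83/50 - 19/50 * ((3*q/2 + (1-p-3*q)) * (1 - (3*q/2 + (1-p-3*q))))))) +
        (1331046354264261093466443762746999366015677396711392463208/2809161269314299291437609503044137847496655593983601170285:ℝ) * (1-p-3*q) * (1-p-3*q) * (7/10 - (3*q/2 + (1-p-3*q))) * (7/10 - (3*q/2 + (1-p-3*q))) * (3*q - ((3*q/2 + (1-p-3*q)) * (1 - (3*q/2 + (1-p-3*q))) * (83/50 - 19/50 * ((3*q/2 + (1-p-3*q)) * (1 - (3*q/2 + (1-p-3*q))))))) +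
        (2843497200559549892199641594808454957464524759510287137416/14045806346571496457188047515220689237483277969918005851425:ℝ) * (1-p-3*q) * (7/10 - (3*q/2 + (1-p-3*q))) * (7/10 - (3*q/2 + (1-p-3*q))) * (3*q - ((3*q/2 + (1-p-3*q)) * (1 - (3*q/2 + (1-p-3*q))) * (83/50 - 19/50 * ((3*q/2 + (1-p-3*q)) * (1 - (3*q/2 + (1-p-3*q))))))) +
        (71266975096058252012586805798498391614874482282808408780504/1053435475992862234289103563641551692811245847743850438856875:ℝ) * (7/10 - (3*q/2 + (1-p-3*q))) * (3*q - ((3*q/2 + (1-p-3*q)) * (1 - (3*q/2 + (1-p-3*q))) * (83/50 - 19/50 * ((3*q/2 + (1-p-3*q)) * (1 - (3*q/2 + (1-p-3*q))))))) +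
        (11866916937573927747041775530001811901700950224873751229496/210687095198572446857820712728310338562249169548770087771375:ℝ) * (7/10 - (3*q/2 + (1-p-3*q))) * (7/10 - (3*q/2 + (1-p-3*q))) * (3*q - ((3*q/2 + (1-p-3*q)) * (1 - (3*q/2 + (1-p-3*q))) * (83/50 - 19/50 * ((3*q/2 + (1-p-3*q)) * (1 - (3*q/2 + (1-p-3*q))))))) +
        (406558600238173935533476818140571597598822662476880097/15558479517677712007076012866130197709820584276168487000000:ℝ) +
        (3554143998119495894978837485805153899117746268357115227/11668859638258284005307009649597648282365438207126365250:ℝ) * p * p * p * p * p +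
        (417987861417698505225078410966295052321042894849457329/20744639356903616009434683821506930279760779034891316000:ℝ) * p * p * p * p * p * p * p * q +
        (288375619350994909718814935600360332211900251479150787/93350877106066272042456077196781186258923505657010922000:ℝ) * p * p * p * p * p * p * p * ((3*q/2 + (1-p-3*q)) - 1/2) +
        (940570895467464926089513815447167679009814901296611229/31116959035355424014152025732260395419641168552336974000:ℝ) * p * p * p * p * p * p * q +
        (22902154975615257460905631359117751363311965886004465369/186701754212132544084912154393562372517847011314021844000:ℝ) * p * p * p * p * p * (1-p-3*q) * (1-p-3*q) +
        (32961577803716883017088971058646797322207445477713501/172871994640863466745289031845891085664673158624094300:ℝ) * p * p * p * p * p * (1-p-3*q) * ((3*q/2 + (1-p-3*q)) - 1/2) * ((3*q/2 + (1-p-3*q)) - 1/2) +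
        (366022587798665759067811561505006372962748368276060198/1944809939709714000884501608266274713727573034521060875:ℝ) * p * p * p * p * p * ((3*q/2 + (1-p-3*q)) - 1/2) +
        (531190697869525833439947604058400519187865063649849647/46675438553033136021228038598390593129461752828505461000:ℝ) * p * p * p * p * p * ((3*q/2 + (1-p-3*q)) - 1/2) * ((3*q/2 + (1-p-3*q)) - 1/2) +
        (121214314607756518745566795653394356532604001370288171/1555847951767771200707601286613019770982058427616848700:ℝ) * p * p * p * p * q * (1-p-3*q) * (1-p-3*q) * (1-p-3*q) +
        (4413752517513142443510674100140296089214177017406111033/31116959035355424014152025732260395419641168552336974000:ℝ) * p * p * p * p * (1-p-3*q) * (1-p-3*q) +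
        (77649955738753591372640017231273212990536112711723347/373403508424265088169824308787124745035694022628043688:ℝ) * p * p * p * p * (1-p-3*q) * (1-p-3*q) * (1-p-3*q) * (7/10 - (3*q/2 + (1-p-3*q))) +
        (1334616280565344731214052712580540715286378982480063177/5186159839225904002358670955376732569940194758722829000:ℝ) * p * p * p * q * (1-p-3*q) * (1-p-3*q) * (1-p-3*q) +
        (12660878582451986633171596554259465189749973936218162007/93350877106066272042456077196781186258923505657010922000:ℝ) * p * p * p * (1-p-3*q) * (1-p-3*q) * (1-p-3*q) * (1-p-3*q) * (1-p-3*q) +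
        (1029116696815701323578162814017364711561395284934519387/1944809939709714000884501608266274713727573034521060875:ℝ) * p * p * p * (1-p-3*q) * (1-p-3*q) * (1-p-3*q) * ((3*q/2 + (1-p-3*q)) - 1/2) +
        (37287327661879763783008978010175630338365518848954491451/46675438553033136021228038598390593129461752828505461000:ℝ) * p * p * p * ((3*q/2 + (1-p-3*q)) - 1/2) +
        (385896020507703162787862590361343629284965190881663529/1555847951767771200707601286613019770982058427616848700:ℝ) * p * p * q * (1-p-3*q) * (1-p-3*q) * (1-p-3*q) +
        (74880449317742027890131031324309570301464260054269198/388961987941942800176900321653254942745514606904212175:ℝ) * p * (1-p-3*q) * (1-p-3*q) * (1-p-3*q) * (1-p-3*q) * (1-p-3*q) * (1-p-3*q) * ((3*q/2 + (1-p-3*q)) - 1/2) +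
        (3487429794378757578447726192947924139916828019597577251/9335087710606627204245607719678118625892350565701092200:ℝ) * p * (1-p-3*q) * (1-p-3*q) * (1-p-3*q) * (1-p-3*q) * ((3*q/2 + (1-p-3*q)) - 1/2) +
        (184044938192801975444829805594038981063862472149817119/3889619879419428001769003216532549427455146069042121750:ℝ) * p * (1-p-3*q) * (1-p-3*q) * (1-p-3*q) * (1-p-3*q) * ((3*q/2 + (1-p-3*q)) - 1/2) * ((3*q/2 + (1-p-3*q)) - 1/2) +
        (418699943935242097656357110792846155740095181254746799/5186159839225904002358670955376732569940194758722829000:ℝ) * q * (1-p-3*q) * (1-p-3*q) * (1-p-3*q) * (1-p-3*q) * (1-p-3*q) +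
        (147229882242626603538829186632176276226713887800290831/1728719946408634667452890318458910856646731586240943000:ℝ) * q * (1-p-3*q) * (1-p-3*q) * (1-p-3*q) * (1-p-3*q) * (1-p-3*q) * (1-p-3*q) +
        (34002222374806164362512725636380824191475073305614209/345743989281726933490578063691782171329346317248188600:ℝ) * q * (1-p-3*q) * (1-p-3*q) * (1-p-3*q) * (1-p-3*q) * (1-p-3*q) * (1-p-3*q) * (1-p-3*q) +
        (2008528290050470596659778100308306634355889964642/14058867034046125307598806806744154557066793020634175:ℝ) * (1-p-3*q) +
        (252376541617459035534163229563829189239164457970726351/4667543855303313602122803859839059312946175282850546100:ℝ) * (1-p-3*q) * (1-p-3*q) * (1-p-3*q) * (1-p-3*q) * (1-p-3*q) * (1-p-3*q) * (1-p-3*q) * ((3*q/2 + (1-p-3*q)) - 1/2) +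
        (45705429669070627922396283947162220085340895197631157/373403508424265088169824308787124745035694022628043688:ℝ) * (1-p-3*q) * (1-p-3*q) * (1-p-3*q) * (1-p-3*q) * (1-p-3*q) * (7/10 - (3*q/2 + (1-p-3*q))) +
        (126343240027889753959541025153906116582178527607557129/388961987941942800176900321653254942745514606904212175:ℝ) * (1-p-3*q) * (1-p-3*q) * (1-p-3*q) * ((3*q/2 + (1-p-3*q)) - 1/2) * ((3*q/2 + (1-p-3*q)) - 1/2) +
        (116836730288319674757923215174545387371747672036050172/129653995980647600058966773884418314248504868968070725:ℝ) * ((3*q/2 + (1-p-3*q)) - 1/2) * ((3*q/2 + (1-p-3*q)) - 1/2) * (7/10 - (3*q/2 + (1-p-3*q))) +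
        (806776626569649434594960933297016771099362128959450373/29172149095645710013267524123994120705913595517815913125:ℝ) * ((3*q/2 + (1-p-3*q)) - 1/2) * (7/10 - (3*q/2 + (1-p-3*q))) +
        (32065570855445042097550457839018454828250039390388900/46675438553033136021228038598390593129461752828505461:ℝ) * (7/10 - (3*q/2 + (1-p-3*q))) * (7/10 - (3*q/2 + (1-p-3*q))) * (7/10 - (3*q/2 + (1-p-3*q))) * (7/10 - (3*q/2 + (1-p-3*q))) * (7/10 - (3*q/2 + (1-p-3*q))) * (7/10 - (3*q/2 + (1-p-3*q))) * (7/10 - (3*q/2 + (1-p-3*q))) * (7/10 - (3*q/2 + (1-p-3*q))) +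
        (152325903311316858989574927655719258628617266615606158960/561832253862859858287521900608827569499331118796720234057:ℝ) * (3*q - ((3*q/2 + (1-p-3*q)) * (1 - (3*q/2 + (1-p-3*q))) * (83/50 - 19/50 * ((3*q/2 + (1-p-3*q)) * (1 - (3*q/2 + (1-p-3*q))))))) * (3*q - ((3*q/2 + (1-p-3*q)) * (1 - (3*q/2 + (1-p-3*q))) * (83/50 - 19/50 * ((3*q/2 + (1-p-3*q)) * (1 - (3*q/2 + (1-p-3*q))))))) :=
      (add_nonneg (add_nonneg (add_nonneg (add_nonneg (add_nonneg (add_nonneg (add_nonneg (add_nonneg (add_nonneg (add_nonneg (add_nonneg (add_nonneg (add_nonneg (add_nonneg (add_nonneg (add_nonneg (add_nonneg (add_nonneg (add_nonneg (add_nonneg (add_nonneg (add_nonneg (add_nonneg (add_nonneg (add_nonneg (add_nonneg (add_nonneg (add_nonneg (add_nonneg (add_nonneg (add_nonneg (add_nonneg (add_nonneg (add_nonneg (add_nonneg (add_nonneg (add_nonneg (add_nonneg (add_nonneg (add_nonneg (add_nonneg (add_nonneg (add_nonneg (add_nonneg (mul_nonneg (mul_nonneg (by norm_num : (0:ℝ)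 ≤ (1667545726251253430582742474844421348343326833867159013662252/1053435475992862234289103563641551692811245847743850438856875:ℝ)) hp) hh) (mul_nonneg (mul_nonneg (mul_nonneg (by norm_num : (0:ℝ) ≤ (37841590542410028048239091046483274409270930635012942927276/210687095198572446857820712728310338562249169548770087771375:ℝ)) hp) hp) hh)) (mul_nonneg (mul_nonneg (mul_nonneg (mul_nonneg (mul_nonneg (by norm_num : (0:ℝ) ≤ (484152244732540512832439061101966025304233538002172371007/2809161269314299291437609503044137847496655593983601170285:ℝ)) hp) hp) hp) ht) hh)) (mul_nonneg (mul_nonneg (mul_nonneg (mul_nonneg (mul_nonneg (by norm_num : (0:ℝ) ≤ (1352585083585475598565304582661639196579368797760152303146/2809161269314299291437609503044137847496655593983601170285:ℝ)) hp) hp) hp) hB) hh)) (mul_nonneg (mul_nonneg (mul_nonneg (mul_nonneg (mul_nonneg (by norm_num : (0:ℝ) ≤ (191290680270994090438585624084935540849870480010292254624/2809161269314299291437609503044137847496655593983601170285:ℝ)) hp) hp) ht) ht) hh)) (mul_nonneg (mul_nonneg (mul_nonneg (mul_nonneg (by norm_num : (0:ℝ) ≤ (6705294990863583733456128435003683109189324568084131393172/14045806346571496457188047515220689237483277969918005851425:ℝ))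 hp) hp) hA) hh)) (mul_nonneg (mul_nonneg (mul_nonneg (mul_nonneg (by norm_num : (0:ℝ) ≤ (374121514962761819347486978556790584352053153817920329844/936387089771433097145869834348045949165551864661200390095:ℝ)) hp) hq) ht) hh)) (mul_nonneg (mul_nonneg (mul_nonneg (by norm_num : (0:ℝ) ≤ (613118709040687142936391180760588904738810414390829579964/2809161269314299291437609503044137847496655593983601170285:ℝ)) hq) ht) hh)) (mul_nonneg (mul_nonneg (mul_nonneg (mul_nonneg (by norm_num : (0:ℝ) ≤ (1713676137107012098156131179330801441628384870201786980494/14045806346571496457188047515220689237483277969918005851425:ℝ)) ht) ht) ht) hh)) (mul_nonneg (mul_nonneg (mul_nonneg (mul_nonneg (mul_nonneg (by norm_num : (0:ℝ) ≤ (46109348375514600269682632954554997420770703044655862169/2809161269314299291437609503044137847496655593983601170285:ℝ)) ht) ht) ht) ht) hh)) (mul_nonneg (mul_nonneg (mul_nonneg (mul_nonneg (mul_nonneg (by norm_num : (0:ℝ) ≤ (1331046354264261093466443762746999366015677396711392463208/2809161269314299291437609503044137847496655593983601170285:ℝ)) ht) ht) hB) hB) hh)) (mul_nonneg (mul_nonneg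 (mul_nonneg (mul_nonneg (by norm_num : (0:ℝ) ≤ (2843497200559549892199641594808454957464524759510287137416/14045806346571496457188047515220689237483277969918005851425:ℝ)) ht) hB) hB) hh)) (mul_nonneg (mul_nonneg (by norm_num : (0:ℝ) ≤ (71266975096058252012586805798498391614874482282808408780504/1053435475992862234289103563641551692811245847743850438856875:ℝ)) hB) hh)) (mul_nonneg (mul_nonneg (mul_nonneg (by norm_num : (0:ℝ) ≤ (11866916937573927747041775530001811901700950224873751229496/210687095198572446857820712728310338562249169548770087771375:ℝ)) hB) hB) hh)) (by norm_num : (0:ℝ) ≤ (406558600238173935533476818140571597598822662476880097/15558479517677712007076012866130197709820584276168487000000:ℝ))) (mul_nonneg (mul_nonneg (mul_nonneg (mul_nonneg (mul_nonneg (by norm_num : (0:ℝ) ≤ (3554143998119495894978837485805153899117746268357115227/11668859638258284005307009649597648282365438207126365250:ℝ)) hp) hp) hp) hp) hp)) (mul_nonneg (mul_nonneg (mul_nonneg (mul_nonneg (mul_nonneg (mul_nonneg (mul_nonneg (mul_nonneg (by norm_num : (0:ℝ) ≤ (417987861417698505225078410966295052321042894849457329/20744639356903616009434683821506930279760779034891316000:ℝ))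 hp) hp) hp) hp) hp) hp) hp) hq)) (mul_nonneg (mul_nonneg (mul_nonneg (mul_nonneg (mul_nonneg (mul_nonneg (mul_nonneg (mul_nonneg (by norm_num : (0:ℝ) ≤ (288375619350994909718814935600360332211900251479150787/93350877106066272042456077196781186258923505657010922000:ℝ)) hp) hp) hp) hp) hp) hp) hp) hA)) (mul_nonneg (mul_nonneg (mul_nonneg (mul_nonneg (mul_nonneg (mul_nonneg (mul_nonneg (by norm_num : (0:ℝ) ≤ (940570895467464926089513815447167679009814901296611229/31116959035355424014152025732260395419641168552336974000:ℝ)) hp) hp) hp) hp) hp) hp) hq)) (mul_nonneg (mul_nonneg (mul_nonneg (mul_nonneg (mul_nonneg (mul_nonneg (mul_nonneg (by norm_num : (0:ℝ) ≤ (22902154975615257460905631359117751363311965886004465369/186701754212132544084912154393562372517847011314021844000:ℝ)) hp) hp) hp) hp) hp) ht) ht)) (mul_nonneg (mul_nonneg (mul_nonneg (mul_nonneg (mul_nonneg (mul_nonneg (mul_nonneg (mul_nonneg (by norm_num : (0:ℝ) ≤ (32961577803716883017088971058646797322207445477713501/172871994640863466745289031845891085664673158624094300:ℝ)) hp) hp)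 hp) hp) hp) ht) hA) hA)) (mul_nonneg (mul_nonneg (mul_nonneg (mul_nonneg (mul_nonneg (mul_nonneg (by norm_num : (0:ℝ) ≤ (366022587798665759067811561505006372962748368276060198/1944809939709714000884501608266274713727573034521060875:ℝ)) hp) hp) hp) hp) hp) hA)) (mul_nonneg (mul_nonneg (mul_nonneg (mul_nonneg (mul_nonneg (mul_nonneg (mul_nonneg (by norm_num : (0:ℝ) ≤ (531190697869525833439947604058400519187865063649849647/46675438553033136021228038598390593129461752828505461000:ℝ)) hp) hp) hp) hp) hp) hA) hA)) (mul_nonneg (mul_nonneg (mul_nonneg (mul_nonneg (mul_nonneg (mul_nonneg (mul_nonneg (mul_nonneg (by norm_num : (0:ℝ) ≤ (121214314607756518745566795653394356532604001370288171/1555847951767771200707601286613019770982058427616848700:ℝ)) hp) hp) hp) hp) hq) ht) ht) ht)) (mul_nonneg (mul_nonneg (mul_nonneg (mul_nonneg (mul_nonneg (mul_nonneg (by norm_num : (0:ℝ) ≤ (4413752517513142443510674100140296089214177017406111033/31116959035355424014152025732260395419641168552336974000:ℝ)) hp) hp) hp) hp) ht) ht)) (mul_nonneg (mul_nonneg (mul_nonneg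 (mul_nonneg (mul_nonneg (mul_nonneg (mul_nonneg (mul_nonneg (by norm_num : (0:ℝ) ≤ (77649955738753591372640017231273212990536112711723347/373403508424265088169824308787124745035694022628043688:ℝ)) hp) hp) hp) hp) ht) ht) ht) hB)) (mul_nonneg (mul_nonneg (mul_nonneg (mul_nonneg (mul_nonneg (mul_nonneg (mul_nonneg (by norm_num : (0:ℝ) ≤ (1334616280565344731214052712580540715286378982480063177/5186159839225904002358670955376732569940194758722829000:ℝ)) hp) hp) hp) hq) ht) ht) ht)) (mul_nonneg (mul_nonneg (mul_nonneg (mul_nonneg (mul_nonneg (mul_nonneg (mul_nonneg (mul_nonneg (by norm_num : (0:ℝ) ≤ (12660878582451986633171596554259465189749973936218162007/93350877106066272042456077196781186258923505657010922000:ℝ)) hp) hp) hp) ht) ht) ht) ht) ht)) (mul_nonneg (mul_nonneg (mul_nonneg (mul_nonneg (mul_nonneg (mul_nonneg (mul_nonneg (by norm_num : (0:ℝ) ≤ (1029116696815701323578162814017364711561395284934519387/1944809939709714000884501608266274713727573034521060875:ℝ)) hp) hp) hp) ht) ht) ht) hA)) (mul_nonneg (mul_nonneg (mul_nonneg (mul_nonneg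 (by norm_num : (0:ℝ) ≤ (37287327661879763783008978010175630338365518848954491451/46675438553033136021228038598390593129461752828505461000:ℝ)) hp) hp) hp) hA)) (mul_nonneg (mul_nonneg (mul_nonneg (mul_nonneg (mul_nonneg (mul_nonneg (by norm_num : (0:ℝ) ≤ (385896020507703162787862590361343629284965190881663529/1555847951767771200707601286613019770982058427616848700:ℝ)) hp) hp) hq) ht) ht) ht)) (mul_nonneg (mul_nonneg (mul_nonneg (mul_nonneg (mul_nonneg (mul_nonneg (mul_nonneg (mul_nonneg (by norm_num : (0:ℝ) ≤ (74880449317742027890131031324309570301464260054269198/388961987941942800176900321653254942745514606904212175:ℝ)) hp) ht) ht) ht) ht) ht) ht) hA)) (mul_nonneg (mul_nonneg (mul_nonneg (mul_nonneg (mul_nonneg (mul_nonneg (by norm_num : (0:ℝ) ≤ (3487429794378757578447726192947924139916828019597577251/9335087710606627204245607719678118625892350565701092200:ℝ)) hp) ht) ht) ht) ht) hA)) (mul_nonneg (mul_nonneg (mul_nonneg (mul_nonneg (mul_nonneg (mul_nonneg (mul_nonneg (by norm_num : (0:ℝ) ≤ (184044938192801975444829805594038981063862472149817119/3889619879419428001769003216532549427455146069042121750:ℝ))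 hp) ht) ht) ht) ht) hA) hA)) (mul_nonneg (mul_nonneg (mul_nonneg (mul_nonneg (mul_nonneg (mul_nonneg (by norm_num : (0:ℝ) ≤ (418699943935242097656357110792846155740095181254746799/5186159839225904002358670955376732569940194758722829000:ℝ)) hq) ht) ht) ht) ht) ht)) (mul_nonneg (mul_nonneg (mul_nonneg (mul_nonneg (mul_nonneg (mul_nonneg (mul_nonneg (by norm_num : (0:ℝ) ≤ (147229882242626603538829186632176276226713887800290831/1728719946408634667452890318458910856646731586240943000:ℝ)) hq) ht) ht) ht) ht) ht) ht)) (mul_nonneg (mul_nonneg (mul_nonneg (mul_nonneg (mul_nonneg (mul_nonneg (mul_nonneg (mul_nonneg (by norm_num : (0:ℝ) ≤ (34002222374806164362512725636380824191475073305614209/345743989281726933490578063691782171329346317248188600:ℝ)) hq) ht) ht) ht) ht) ht) ht) ht)) (mul_nonneg (by norm_num : (0:ℝ) ≤ (2008528290050470596659778100308306634355889964642/14058867034046125307598806806744154557066793020634175:ℝ)) ht)) (mul_nonneg (mul_nonneg (mul_nonneg (mul_nonneg (mul_nonneg (mul_nonneg (mul_nonneg (mul_nonneg (by norm_num : (0:ℝ)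 ≤ (252376541617459035534163229563829189239164457970726351/4667543855303313602122803859839059312946175282850546100:ℝ)) ht) ht) ht) ht) ht) ht) ht) hA)) (mul_nonneg (mul_nonneg (mul_nonneg (mul_nonneg (mul_nonneg (mul_nonneg (by norm_num : (0:ℝ) ≤ (45705429669070627922396283947162220085340895197631157/373403508424265088169824308787124745035694022628043688:ℝ)) ht) ht) ht) ht) ht) hB)) (mul_nonneg (mul_nonneg (mul_nonneg (mul_nonneg (mul_nonneg (by norm_num : (0:ℝ) ≤ (126343240027889753959541025153906116582178527607557129/388961987941942800176900321653254942745514606904212175:ℝ)) ht) ht) ht) hA) hA)) (mul_nonneg (mul_nonneg (mul_nonneg (by norm_num : (0:ℝ) ≤ (116836730288319674757923215174545387371747672036050172/129653995980647600058966773884418314248504868968070725:ℝ)) hA) hA) hB)) (mul_nonneg (mul_nonneg (by norm_num : (0:ℝ) ≤ (806776626569649434594960933297016771099362128959450373/29172149095645710013267524123994120705913595517815913125:ℝ)) hA) hB)) (mul_nonneg (mul_nonneg (mul_nonneg (mul_nonneg (mul_nonneg (mul_nonneg (mul_nonneg (mul_nonneg (by norm_num : (0:ℝ) ≤ (32065570855445042097550457839018454828250039390388900/46675438553033136021228038598390593129461752828505461:ℝ))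 hB) hB) hB) hB) hB) hB) hB) hB)) (mul_nonneg (mul_nonneg (by norm_num : (0:ℝ) ≤ (152325903311316858989574927655719258628617266615606158960/561832253862859858287521900608827569499331118796720234057:ℝ)) hh) hh))
    linarith [hS]
  rcases le_or_gt ((3*q/2 + (1-p-3*q))) (9/10) with hc5 | hc5
  · -- band [7/10,9/10]
    have hA : (0:ℝ) ≤ (3*q/2 + (1-p-3*q)) - 7/10 := by linarith
    have hB : (0:ℝ) ≤ 9/10 - (3*q/2 + (1-p-3*q)) := by linarith
    have hS : (0:ℝ) ≤ (115456545528845918587997253493167438965020459165603482948190893549368/92916179540367024631922576888156588108267778935513792126101789708695:ℝ) * p * (3*q - ((3*q/2 + (1-p-3*q)) * (1 - (3*q/2 + (1-p-3*q))) * (83/50 - 19/50 * ((3*q/2 + (1-p-3*q)) * (1 - (3*q/2 + (1-p-3*q))))))) +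
        (11386742787356981767630680375839472034645487444017046086615667025268/92916179540367024631922576888156588108267778935513792126101789708695:ℝ) * p * p * (3*q - ((3*q/2 + (1-p-3*q)) * (1 - (3*q/2 + (1-p-3*q))) * (83/50 - 19/50 * ((3*q/2 + (1-p-3*q)) * (1 - (3*q/2 + (1-p-3*q))))))) +
        (987994236980106021546542889687975652101078895428648268207671957728/92916179540367024631922576888156588108267778935513792126101789708695:ℝ) * p * p * p * p * (3*q - ((3*q/2 + (1-p-3*q)) * (1 - (3*q/2 + (1-p-3*q))) * (83/50 - 19/50 * ((3*q/2 + (1-p-3*q)) * (1 - (3*q/2 + (1-p-3*q))))))) +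
        (2402614354959171913989477360975095757379513391213775585084336445036/10324019948929669403546952987572954234251975437279310236233532189855:ℝ) * p * p * q * (3*q - ((3*q/2 + (1-p-3*q)) * (1 - (3*q/2 + (1-p-3*q))) * (83/50 - 19/50 * ((3*q/2 + (1-p-3*q)) * (1 - (3*q/2 + (1-p-3*q))))))) +
        (12165832249462411476711426759940038328873751507062185111450080308799/30972059846789008210640858962718862702755926311837930708700596569565:ℝ) * p * p * (1-p-3*q) * (1-p-3*q) * (3*q - ((3*q/2 + (1-p-3*q)) * (1 - (3*q/2 + (1-p-3*q))) * (83/50 - 19/50 * ((3*q/2 + (1-p-3*q)) * (1 - (3*q/2 + (1-p-3*q))))))) +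
        (15485293863927545170024794886332754349744651197590027870299092531004/92916179540367024631922576888156588108267778935513792126101789708695:ℝ) * p * (1-p-3*q) * (1-p-3*q) * (3*q - ((3*q/2 + (1-p-3*q)) * (1 - (3*q/2 + (1-p-3*q))) * (83/50 - 19/50 * ((3*q/2 + (1-p-3*q)) * (1 - (3*q/2 + (1-p-3*q))))))) +
        (135831904379849333902726010321394920639240878894024672029194535344/10324019948929669403546952987572954234251975437279310236233532189855:ℝ) * p * (1-p-3*q) * (1-p-3*q) * (1-p-3*q) * (3*q - ((3*q/2 + (1-p-3*q)) * (1 - (3*q/2 + (1-p-3*q))) * (83/50 - 19/50 * ((3*q/2 + (1-p-3*q)) * (1 - (3*q/2 + (1-p-3*q))))))) +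
        (455426237034083354591599623626750512768288768125205278704637808456/6194411969357801642128171792543772540551185262367586141740119313913:ℝ) * q * (1-p-3*q) * (3*q - ((3*q/2 + (1-p-3*q)) * (1 - (3*q/2 + (1-p-3*q))) * (83/50 - 19/50 * ((3*q/2 + (1-p-3*q)) * (1 - (3*q/2 + (1-p-3*q))))))) +
        (742105612220671709128206738886397604065133682620566149088257610447/18583235908073404926384515377631317621653555787102758425220357941739:ℝ) * (1-p-3*q) * (1-p-3*q) * (1-p-3*q) * (1-p-3*q) * (3*q - ((3*q/2 + (1-p-3*q)) * (1 - (3*q/2 + (1-p-3*q))) * (83/50 - 19/50 * ((3*q/2 + (1-p-3*q)) * (1 - (3*q/2 + (1-p-3*q))))))) +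
        (118846711833144408901497151281295923342172490341797600149403938152/6194411969357801642128171792543772540551185262367586141740119313913:ℝ) * (1-p-3*q) * (1-p-3*q) * (9/10 - (3*q/2 + (1-p-3*q))) * (3*q - ((3*q/2 + (1-p-3*q)) * (1 - (3*q/2 + (1-p-3*q))) * (83/50 - 19/50 * ((3*q/2 + (1-p-3*q)) * (1 - (3*q/2 + (1-p-3*q))))))) +
        (2171639244788795190010549686684844824914562339211036531812095424680/6194411969357801642128171792543772540551185262367586141740119313913:ℝ) * (9/10 - (3*q/2 + (1-p-3*q))) * (3*q - ((3*q/2 + (1-p-3*q)) * (1 - (3*q/2 + (1-p-3*q))) * (83/50 - 19/50 * ((3*q/2 + (1-p-3*q)) * (1 - (3*q/2 + (1-p-3*q))))))) +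
        (176670965419506857006440586792622486714597937797872679552290189680477/3716647181614680985276903075526263524330711157420551685044071588347800000:ℝ) +
        (693808856439455005909366545547193480997125667282137845510547121175493/23229044885091756157980644222039147027066944733878448031525447427173750:ℝ) * p * p * p * p * p * p * p +
        (37870748070711641583205966357437193601818731361369113488833200074747/3097205984678900821064085896271886270275592631183793070870059656956500:ℝ) * p * p * p * p * p * p * p * ((3*q/2 + (1-p-3*q)) - 7/10) +
        (122252037178708087299012511054700055392587221986911746917552039907707/2477764787743120656851268717017509016220474104947034456696047725565200:ℝ) * p * p * p * p * p * p * (1-p-3*q) * (9/10 - (3*q/2 + (1-p-3*q))) +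
        (14928970191600958072062072371370005661503510989771375863170947924439/154860299233945041053204294813594313513779631559189653543502982847825:ℝ) * p * p * p * p * p * p * ((3*q/2 + (1-p-3*q)) - 7/10) +
        (11687273134748577726313685765178701807281417730704189617341099894011/1548602992339450410532042948135943135137796315591896535435029828478250:ℝ) * p * p * p * p * p * q +
        (32988961052357932631051822892249627945471419294509954572280791182687/3097205984678900821064085896271886270275592631183793070870059656956500:ℝ) * p * p * p * p * p * q * (1-p-3*q) * (1-p-3*q) +
        (22921816382640435002309964458356284867485568092158098191857440545291/309720598467890082106408589627188627027559263118379307087005965695650:ℝ) * p * p * p * p * p * (1-p-3*q) * (1-p-3*q) * ((3*q/2 + (1-p-3*q)) - 7/10) +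
        (112676791760507490528451067325455691828399942181409200291593929754929/3716647181614680985276903075526263524330711157420551685044071588347800:ℝ) * p * p * p * p * p * ((3*q/2 + (1-p-3*q)) - 7/10) +
        (1470728897509400734747338720478624376065534104881288657781428292216659/18583235908073404926384515377631317621653555787102758425220357941739000:ℝ) * p * p * p * p * (1-p-3*q) +
        (3916427119027796212741253801622685146679794589450019360945261178686699/37166471816146809852769030755262635243307111574205516850440715883478000:ℝ) * p * p * p * p * (1-p-3*q) * (1-p-3*q) +
        (1248504533183917286000760045362691382311210867638200742103200190610127/18583235908073404926384515377631317621653555787102758425220357941739000:ℝ) * p * p * p * p * (1-p-3*q) * (1-p-3*q) * (1-p-3*q) * (9/10 - (3*q/2 + (1-p-3*q))) +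
        (6084233881640743871142325408681805660689666345381237694903438520519359/61944119693578016421281717925437725405511852623675861417401193139130000:ℝ) * p * p * p * q * (1-p-3*q) * (1-p-3*q) * (1-p-3*q) +
        (38514288234144435730982323906861641003388543591284665804336159720431363/929161795403670246319225768881565881082677789355137921261017897086950000:ℝ) * p * p * p * (1-p-3*q) * (1-p-3*q) * (1-p-3*q) +
        (255049211582466007791974681045479135610804925789738304167670086319043/14866588726458723941107612302105054097322844629682206740176286353391200:ℝ) * p * p * p * (1-p-3*q) * (1-p-3*q) * (1-p-3*q) * (1-p-3*q) * (1-p-3*q) +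
        (29828332128763224739450297957103494806036232949064403022412021511966579/92916179540367024631922576888156588108267778935513792126101789708695000:ℝ) * p * p * p * (1-p-3*q) * (1-p-3*q) * (1-p-3*q) * ((3*q/2 + (1-p-3*q)) - 7/10) +
        (8621285673246598233506229079583558713535438844478232638479718854346187/18583235908073404926384515377631317621653555787102758425220357941739000:ℝ) * p * p * p * ((3*q/2 + (1-p-3*q)) - 7/10) +
        (975923104395131553921980185993120641514296070125660581958205368595/6194411969357801642128171792543772540551185262367586141740119313913:ℝ) * p * p * p * (9/10 - (3*q/2 + (1-p-3*q))) * (9/10 - (3*q/2 + (1-p-3*q))) * (9/10 - (3*q/2 + (1-p-3*q))) * (9/10 - (3*q/2 + (1-p-3*q))) * (9/10 - (3*q/2 + (1-p-3*q))) +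
        (755811578392925220303478999476929574194477634979710891424532631060101/1032401994892966940354695298757295423425197543727931023623353218985500:ℝ) * p * p * (1-p-3*q) * (1-p-3*q) * (1-p-3*q) +
        (22154197519129002087571868604214752147848175979608925949962555366612/258100498723241735088673824689323855856299385931982755905838304746375:ℝ) * p * q * (1-p-3*q) * (1-p-3*q) * (1-p-3*q) * (1-p-3*q) +
        (353013786067856788033213023328280229384524036642626203229545058828897/12388823938715603284256343585087545081102370524735172283480238627826000:ℝ) * p * q * (1-p-3*q) * (1-p-3*q) * (1-p-3*q) * (1-p-3*q) * (1-p-3*q) +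
        (54461872998282650493609325971057531662177155812900321128298215880137/6194411969357801642128171792543772540551185262367586141740119313913000:ℝ) * p * q * (1-p-3*q) * (1-p-3*q) * (1-p-3*q) * (1-p-3*q) * (1-p-3*q) * (1-p-3*q) +
        (2022020404034081156512381087886857459322650152981377677554187448215/74332943632293619705538061510525270486614223148411033700881431766956:ℝ) * p * (1-p-3*q) * (1-p-3*q) * (1-p-3*q) * (1-p-3*q) * (1-p-3*q) * (9/10 - (3*q/2 + (1-p-3*q))) * (9/10 - (3*q/2 + (1-p-3*q))) +
        (36994754519949142494527447508411743172335385481438133768416152781753/74332943632293619705538061510525270486614223148411033700881431766956000:ℝ) * (1-p-3*q) * (1-p-3*q) * (1-p-3*q) * (1-p-3*q) * (1-p-3*q) * (1-p-3*q) * (1-p-3*q) * (1-p-3*q) +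
        (787558710571805807689119108179440270322517050473574419855672205561/82592159591437355228375623900583633874015803498234481889868257518840:ℝ) * (1-p-3*q) * (1-p-3*q) * (1-p-3*q) * (1-p-3*q) * (1-p-3*q) * (1-p-3*q) * ((3*q/2 + (1-p-3*q)) - 7/10) * (9/10 - (3*q/2 + (1-p-3*q))) +
        (261685984191128405460656955565590134997118102321040203411170485105/24777647877431206568512687170175090162204741049470344566960477255652:ℝ) * (1-p-3*q) * (1-p-3*q) * (1-p-3*q) * (1-p-3*q) * (1-p-3*q) * (9/10 - (3*q/2 + (1-p-3*q))) * (9/10 - (3*q/2 + (1-p-3*q))) +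
        (11229131084579179569640127167781317541445753965771038465383918877817/371664718161468098527690307552626352433071115742055168504407158834780:ℝ) * (1-p-3*q) * (1-p-3*q) * (1-p-3*q) * (1-p-3*q) * ((3*q/2 + (1-p-3*q)) - 7/10) * (9/10 - (3*q/2 + (1-p-3*q))) +
        (94983735897690743411610171596135595711040354700386494342462964514719/743329436322936197055380615105252704866142231484110337008814317669560:ℝ) * (1-p-3*q) * (1-p-3*q) * (9/10 - (3*q/2 + (1-p-3*q))) * (9/10 - (3*q/2 + (1-p-3*q))) +
        (9007117157914701093707556385187642433363356026472259211556501848337/61944119693578016421281717925437725405511852623675861417401193139130:ℝ) * (1-p-3*q) * ((3*q/2 + (1-p-3*q)) - 7/10) * ((3*q/2 + (1-p-3*q)) - 7/10) * ((3*q/2 + (1-p-3*q)) - 7/10) +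
        (11673663129238211151131420727196624816975449874945234740197381744770/18583235908073404926384515377631317621653555787102758425220357941739:ℝ) * (1-p-3*q) * (9/10 - (3*q/2 + (1-p-3*q))) * (9/10 - (3*q/2 + (1-p-3*q))) * (9/10 - (3*q/2 + (1-p-3*q))) * (9/10 - (3*q/2 + (1-p-3*q))) * (9/10 - (3*q/2 + (1-p-3*q))) +
        (58184480403509597507339526267242004160370233517908480095949495986017/371664718161468098527690307552626352433071115742055168504407158834780:ℝ) * ((3*q/2 + (1-p-3*q)) - 7/10) * (9/10 - (3*q/2 + (1-p-3*q))) +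
        (75484723464425270169744599914927667509567556282372572645579861205813/185832359080734049263845153776313176216535557871027584252203579417390:ℝ) * (9/10 - (3*q/2 + (1-p-3*q))) * (9/10 - (3*q/2 + (1-p-3*q))) * (9/10 - (3*q/2 + (1-p-3*q))) * (9/10 - (3*q/2 + (1-p-3*q))) +
        (5663309093656563216074400711707333655593586301023229941100633973500/18583235908073404926384515377631317621653555787102758425220357941739:ℝ) * (9/10 - (3*q/2 + (1-p-3*q))) * (9/10 - (3*q/2 + (1-p-3*q))) * (9/10 - (3*q/2 + (1-p-3*q))) * (9/10 - (3*q/2 + (1-p-3*q))) * (9/10 - (3*q/2 + (1-p-3*q))) * (9/10 - (3*q/2 + (1-p-3*q))) * (9/10 - (3*q/2 + (1-p-3*q))) * (9/10 - (3*q/2 + (1-p-3*q))) +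
        (1334901201053847126969869445113363743149459844253671792807192040720/18583235908073404926384515377631317621653555787102758425220357941739:ℝ) * (3*q - ((3*q/2 + (1-p-3*q)) * (1 - (3*q/2 + (1-p-3*q))) * (83/50 - 19/50 * ((3*q/2 + (1-p-3*q)) * (1 - (3*q/2 + (1-p-3*q))))))) * (3*q - ((3*q/2 + (1-p-3*q)) * (1 - (3*q/2 + (1-p-3*q))) * (83/50 - 19/50 * ((3*q/2 + (1-p-3*q)) * (1 - (3*q/2 + (1-p-3*q))))))) :=
      (add_nonneg (add_nonneg (add_nonneg (add_nonneg (add_nonneg (add_nonneg (add_nonneg (add_nonneg (add_nonneg (add_nonneg (add_nonneg (add_nonneg (add_nonneg (add_nonneg (add_nonneg (add_nonneg (add_nonneg (add_nonneg (add_nonneg (add_nonneg (add_nonneg (add_nonneg (add_nonneg (add_nonneg (add_nonneg (add_nonneg (add_nonneg (add_nonneg (add_nonneg (add_nonneg (add_nonneg (add_nonneg (add_nonneg (add_nonneg (add_nonneg (add_nonneg (add_nonneg (add_nonneg (add_nonneg (add_nonneg (add_nonneg (add_nonneg (add_nonneg (add_nonneg (mul_nonneg (mul_nonneg (by norm_num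 : (0:ℝ) ≤ (115456545528845918587997253493167438965020459165603482948190893549368/92916179540367024631922576888156588108267778935513792126101789708695:ℝ)) hp) hh) (mul_nonneg (mul_nonneg (mul_nonneg (by norm_num : (0:ℝ) ≤ (11386742787356981767630680375839472034645487444017046086615667025268/92916179540367024631922576888156588108267778935513792126101789708695:ℝ)) hp) hp) hh)) (mul_nonneg (mul_nonneg (mul_nonneg (mul_nonneg (mul_nonneg (by norm_num : (0:ℝ) ≤ (987994236980106021546542889687975652101078895428648268207671957728/92916179540367024631922576888156588108267778935513792126101789708695:ℝ)) hp) hp) hp) hp) hh)) (mul_nonneg (mul_nonneg (mul_nonneg (mul_nonneg (by norm_num : (0:ℝ) ≤ (2402614354959171913989477360975095757379513391213775585084336445036/10324019948929669403546952987572954234251975437279310236233532189855:ℝ)) hp) hp) hq) hh)) (mul_nonneg (mul_nonneg (mul_nonneg (mul_nonneg (mul_nonneg (by norm_num : (0:ℝ) ≤ (12165832249462411476711426759940038328873751507062185111450080308799/30972059846789008210640858962718862702755926311837930708700596569565:ℝ)) hp) hp) ht) ht) hh)) (mul_nonneg (mul_nonneg (mul_nonneg (mul_nonneg (by norm_num :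 (0:ℝ) ≤ (15485293863927545170024794886332754349744651197590027870299092531004/92916179540367024631922576888156588108267778935513792126101789708695:ℝ)) hp) ht) ht) hh)) (mul_nonneg (mul_nonneg (mul_nonneg (mul_nonneg (mul_nonneg (by norm_num : (0:ℝ) ≤ (135831904379849333902726010321394920639240878894024672029194535344/10324019948929669403546952987572954234251975437279310236233532189855:ℝ)) hp) ht) ht) ht) hh)) (mul_nonneg (mul_nonneg (mul_nonneg (by norm_num : (0:ℝ) ≤ (455426237034083354591599623626750512768288768125205278704637808456/6194411969357801642128171792543772540551185262367586141740119313913:ℝ)) hq) ht) hh)) (mul_nonneg (mul_nonneg (mul_nonneg (mul_nonneg (mul_nonneg (by norm_num : (0:ℝ) ≤ (742105612220671709128206738886397604065133682620566149088257610447/18583235908073404926384515377631317621653555787102758425220357941739:ℝ)) ht) ht) ht) ht) hh)) (mul_nonneg (mul_nonneg (mul_nonneg (mul_nonneg (by norm_num : (0:ℝ) ≤ (118846711833144408901497151281295923342172490341797600149403938152/6194411969357801642128171792543772540551185262367586141740119313913:ℝ)) ht) ht) hB) hh)) (mul_nonneg (mul_nonneg (by norm_num : (0:ℝ) ≤ (2171639244788795190010549686684844824914562339211036531812095424680/6194411969357801642128171792543772540551185262367586141740119313913:ℝ))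 hB) hh)) (by norm_num : (0:ℝ) ≤ (176670965419506857006440586792622486714597937797872679552290189680477/3716647181614680985276903075526263524330711157420551685044071588347800000:ℝ))) (mul_nonneg (mul_nonneg (mul_nonneg (mul_nonneg (mul_nonneg (mul_nonneg (mul_nonneg (by norm_num : (0:ℝ) ≤ (693808856439455005909366545547193480997125667282137845510547121175493/23229044885091756157980644222039147027066944733878448031525447427173750:ℝ)) hp) hp) hp) hp) hp) hp) hp)) (mul_nonneg (mul_nonneg (mul_nonneg (mul_nonneg (mul_nonneg (mul_nonneg (mul_nonneg (mul_nonneg (by norm_num : (0:ℝ) ≤ (37870748070711641583205966357437193601818731361369113488833200074747/3097205984678900821064085896271886270275592631183793070870059656956500:ℝ)) hp) hp) hp) hp) hp) hp) hp) hA)) (mul_nonneg (mul_nonneg (mul_nonneg (mul_nonneg (mul_nonneg (mul_nonneg (mul_nonneg (mul_nonneg (by norm_num : (0:ℝ) ≤ (122252037178708087299012511054700055392587221986911746917552039907707/2477764787743120656851268717017509016220474104947034456696047725565200:ℝ)) hp) hp) hp) hp) hp) hp) ht) hB)) (mul_nonneg (mul_nonneg (mul_nonneg (mul_nonneg (mul_nonneg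 (mul_nonneg (mul_nonneg (by norm_num : (0:ℝ) ≤ (14928970191600958072062072371370005661503510989771375863170947924439/154860299233945041053204294813594313513779631559189653543502982847825:ℝ)) hp) hp) hp) hp) hp) hp) hA)) (mul_nonneg (mul_nonneg (mul_nonneg (mul_nonneg (mul_nonneg (mul_nonneg (by norm_num : (0:ℝ) ≤ (11687273134748577726313685765178701807281417730704189617341099894011/1548602992339450410532042948135943135137796315591896535435029828478250:ℝ)) hp) hp) hp) hp) hp) hq)) (mul_nonneg (mul_nonneg (mul_nonneg (mul_nonneg (mul_nonneg (mul_nonneg (mul_nonneg (mul_nonneg (by norm_num : (0:ℝ) ≤ (32988961052357932631051822892249627945471419294509954572280791182687/3097205984678900821064085896271886270275592631183793070870059656956500:ℝ)) hp) hp) hp) hp) hp) hq) ht) ht)) (mul_nonneg (mul_nonneg (mul_nonneg (mul_nonneg (mul_nonneg (mul_nonneg (mul_nonneg (mul_nonneg (by norm_num : (0:ℝ) ≤ (22921816382640435002309964458356284867485568092158098191857440545291/309720598467890082106408589627188627027559263118379307087005965695650:ℝ)) hp) hp) hp) hp) hp) ht) ht) hA)) (mul_nonneg (mul_nonneg (mul_nonneg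 (mul_nonneg (mul_nonneg (mul_nonneg (by norm_num : (0:ℝ) ≤ (112676791760507490528451067325455691828399942181409200291593929754929/3716647181614680985276903075526263524330711157420551685044071588347800:ℝ)) hp) hp) hp) hp) hp) hA)) (mul_nonneg (mul_nonneg (mul_nonneg (mul_nonneg (mul_nonneg (by norm_num : (0:ℝ) ≤ (1470728897509400734747338720478624376065534104881288657781428292216659/18583235908073404926384515377631317621653555787102758425220357941739000:ℝ)) hp) hp) hp) hp) ht)) (mul_nonneg (mul_nonneg (mul_nonneg (mul_nonneg (mul_nonneg (mul_nonneg (by norm_num : (0:ℝ) ≤ (3916427119027796212741253801622685146679794589450019360945261178686699/37166471816146809852769030755262635243307111574205516850440715883478000:ℝ)) hp) hp) hp) hp) ht) ht)) (mul_nonneg (mul_nonneg (mul_nonneg (mul_nonneg (mul_nonneg (mul_nonneg (mul_nonneg (mul_nonneg (by norm_num : (0:ℝ) ≤ (1248504533183917286000760045362691382311210867638200742103200190610127/18583235908073404926384515377631317621653555787102758425220357941739000:ℝ)) hp) hp) hp) hp) ht) ht) ht) hB)) (mul_nonneg (mul_nonneg (mul_nonneg (mul_nonneg (mul_nonneg (mul_nonneg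 (mul_nonneg (by norm_num : (0:ℝ) ≤ (6084233881640743871142325408681805660689666345381237694903438520519359/61944119693578016421281717925437725405511852623675861417401193139130000:ℝ)) hp) hp) hp) hq) ht) ht) ht)) (mul_nonneg (mul_nonneg (mul_nonneg (mul_nonneg (mul_nonneg (mul_nonneg (by norm_num : (0:ℝ) ≤ (38514288234144435730982323906861641003388543591284665804336159720431363/929161795403670246319225768881565881082677789355137921261017897086950000:ℝ)) hp) hp) hp) ht) ht) ht)) (mul_nonneg (mul_nonneg (mul_nonneg (mul_nonneg (mul_nonneg (mul_nonneg (mul_nonneg (mul_nonneg (by norm_num : (0:ℝ) ≤ (255049211582466007791974681045479135610804925789738304167670086319043/14866588726458723941107612302105054097322844629682206740176286353391200:ℝ)) hp) hp) hp) ht) ht) ht) ht) ht)) (mul_nonneg (mul_nonneg (mul_nonneg (mul_nonneg (mul_nonneg (mul_nonneg (mul_nonneg (by norm_num : (0:ℝ) ≤ (29828332128763224739450297957103494806036232949064403022412021511966579/92916179540367024631922576888156588108267778935513792126101789708695000:ℝ)) hp) hp) hp) ht) ht) ht) hA)) (mul_nonneg (mul_nonneg (mul_nonneg (mul_nonneg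 (by norm_num : (0:ℝ) ≤ (8621285673246598233506229079583558713535438844478232638479718854346187/18583235908073404926384515377631317621653555787102758425220357941739000:ℝ)) hp) hp) hp) hA)) (mul_nonneg (mul_nonneg (mul_nonneg (mul_nonneg (mul_nonneg (mul_nonneg (mul_nonneg (mul_nonneg (by norm_num : (0:ℝ) ≤ (975923104395131553921980185993120641514296070125660581958205368595/6194411969357801642128171792543772540551185262367586141740119313913:ℝ)) hp) hp) hp) hB) hB) hB) hB) hB)) (mul_nonneg (mul_nonneg (mul_nonneg (mul_nonneg (mul_nonneg (by norm_num : (0:ℝ) ≤ (755811578392925220303478999476929574194477634979710891424532631060101/1032401994892966940354695298757295423425197543727931023623353218985500:ℝ)) hp) hp) ht) ht) ht)) (mul_nonneg (mul_nonneg (mul_nonneg (mul_nonneg (mul_nonneg (mul_nonneg (by norm_num : (0:ℝ) ≤ (22154197519129002087571868604214752147848175979608925949962555366612/258100498723241735088673824689323855856299385931982755905838304746375:ℝ)) hp) hq) ht) ht) ht) ht)) (mul_nonneg (mul_nonneg (mul_nonneg (mul_nonneg (mul_nonneg (mul_nonneg (mul_nonneg (by norm_num : (0:ℝ) ≤ (353013786067856788033213023328280229384524036642626203229545058828897/12388823938715603284256343585087545081102370524735172283480238627826000:ℝ))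 hp) hq) ht) ht) ht) ht) ht)) (mul_nonneg (mul_nonneg (mul_nonneg (mul_nonneg (mul_nonneg (mul_nonneg (mul_nonneg (mul_nonneg (by norm_num : (0:ℝ) ≤ (54461872998282650493609325971057531662177155812900321128298215880137/6194411969357801642128171792543772540551185262367586141740119313913000:ℝ)) hp) hq) ht) ht) ht) ht) ht) ht)) (mul_nonneg (mul_nonneg (mul_nonneg (mul_nonneg (mul_nonneg (mul_nonneg (mul_nonneg (mul_nonneg (by norm_num : (0:ℝ) ≤ (2022020404034081156512381087886857459322650152981377677554187448215/74332943632293619705538061510525270486614223148411033700881431766956:ℝ)) hp) ht) ht) ht) ht) ht) hB) hB)) (mul_nonneg (mul_nonneg (mul_nonneg (mul_nonneg (mul_nonneg (mul_nonneg (mul_nonneg (mul_nonneg (by norm_num : (0:ℝ) ≤ (36994754519949142494527447508411743172335385481438133768416152781753/74332943632293619705538061510525270486614223148411033700881431766956000:ℝ)) ht) ht) ht) ht) ht) ht) ht) ht)) (mul_nonneg (mul_nonneg (mul_nonneg (mul_nonneg (mul_nonneg (mul_nonneg (mul_nonneg (mul_nonneg (by norm_num : (0:ℝ) ≤ (787558710571805807689119108179440270322517050473574419855672205561/82592159591437355228375623900583633874015803498234481889868257518840:ℝ))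 ht) ht) ht) ht) ht) ht) hA) hB)) (mul_nonneg (mul_nonneg (mul_nonneg (mul_nonneg (mul_nonneg (mul_nonneg (mul_nonneg (by norm_num : (0:ℝ) ≤ (261685984191128405460656955565590134997118102321040203411170485105/24777647877431206568512687170175090162204741049470344566960477255652:ℝ)) ht) ht) ht) ht) ht) hB) hB)) (mul_nonneg (mul_nonneg (mul_nonneg (mul_nonneg (mul_nonneg (mul_nonneg (by norm_num : (0:ℝ) ≤ (11229131084579179569640127167781317541445753965771038465383918877817/371664718161468098527690307552626352433071115742055168504407158834780:ℝ)) ht) ht) ht) ht) hA) hB)) (mul_nonneg (mul_nonneg (mul_nonneg (mul_nonneg (by norm_num : (0:ℝ) ≤ (94983735897690743411610171596135595711040354700386494342462964514719/743329436322936197055380615105252704866142231484110337008814317669560:ℝ)) ht) ht) hB) hB)) (mul_nonneg (mul_nonneg (mul_nonneg (mul_nonneg (by norm_num : (0:ℝ) ≤ (9007117157914701093707556385187642433363356026472259211556501848337/61944119693578016421281717925437725405511852623675861417401193139130:ℝ)) ht) hA) hA) hA)) (mul_nonneg (mul_nonneg (mul_nonneg (mul_nonneg (mul_nonneg (mul_nonneg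 (by norm_num : (0:ℝ) ≤ (11673663129238211151131420727196624816975449874945234740197381744770/18583235908073404926384515377631317621653555787102758425220357941739:ℝ)) ht) hB) hB) hB) hB) hB)) (mul_nonneg (mul_nonneg (by norm_num : (0:ℝ) ≤ (58184480403509597507339526267242004160370233517908480095949495986017/371664718161468098527690307552626352433071115742055168504407158834780:ℝ)) hA) hB)) (mul_nonneg (mul_nonneg (mul_nonneg (mul_nonneg (by norm_num : (0:ℝ) ≤ (75484723464425270169744599914927667509567556282372572645579861205813/185832359080734049263845153776313176216535557871027584252203579417390:ℝ)) hB) hB) hB) hB)) (mul_nonneg (mul_nonneg (mul_nonneg (mul_nonneg (mul_nonneg (mul_nonneg (mul_nonneg (mul_nonneg (by norm_num : (0:ℝ) ≤ (5663309093656563216074400711707333655593586301023229941100633973500/18583235908073404926384515377631317621653555787102758425220357941739:ℝ)) hB) hB) hB) hB) hB) hB) hB) hB)) (mul_nonneg (mul_nonneg (by norm_num : (0:ℝ) ≤ (1334901201053847126969869445113363743149459844253671792807192040720/18583235908073404926384515377631317621653555787102758425220357941739:ℝ)) hh) hh))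
    linarith [hS]
  -- band [9/10,1]
  have hA : (0:ℝ) ≤ (3*q/2 + (1-p-3*q)) - 9/10 := by linarith
  have hB : (0:ℝ) ≤ 1 - (3*q/2 + (1-p-3*q)) := by linarith
  have hS : (0:ℝ) ≤ (270761259248181012301597803988556/226923352764995776368267382557735:ℝ) * p * (3*q - ((3*q/2 + (1-p-3*q)) * (1 - (3*q/2 + (1-p-3*q))) * (83/50 - 19/50 * ((3*q/2 + (1-p-3*q)) * (1 - (3*q/2 + (1-p-3*q))))))) +
    (140804210063484515972997101846173/680770058294987329104802147673205:ℝ) * p * p * (3*q - ((3*q/2 + (1-p-3*q)) * (1 - (3*q/2 + (1-p-3*q))) * (83/50 - 19/50 * ((3*q/2 + (1-p-3*q)) * (1 - (3*q/2 + (1-p-3*q))))))) +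
    (21775311900531500717594671706495/272308023317994931641920859069282:ℝ) * p * p * p * p * (3*q - ((3*q/2 + (1-p-3*q)) * (1 - (3*q/2 + (1-p-3*q))) * (83/50 - 19/50 * ((3*q/2 + (1-p-3*q)) * (1 - (3*q/2 + (1-p-3*q))))))) +
    (12081115178224178286425868005011/30256447035332770182435651007698:ℝ) * p * p * (1-p-3*q) * (1-p-3*q) * (3*q - ((3*q/2 + (1-p-3*q)) * (1 - (3*q/2 + (1-p-3*q))) * (83/50 - 19/50 * ((3*q/2 + (1-p-3*q)) * (1 - (3*q/2 + (1-p-3*q))))))) +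
    (389107320316355537547237289277/226923352764995776368267382557735:ℝ) * p * (1-p-3*q) * (3*q - ((3*q/2 + (1-p-3*q)) * (1 - (3*q/2 + (1-p-3*q))) * (83/50 - 19/50 * ((3*q/2 + (1-p-3*q)) * (1 - (3*q/2 + (1-p-3*q))))))) +
    (197810100386482766796400466812571/1361540116589974658209604295346410:ℝ) * p * (1-p-3*q) * (1-p-3*q) * (3*q - ((3*q/2 + (1-p-3*q)) * (1 - (3*q/2 + (1-p-3*q))) * (83/50 - 19/50 * ((3*q/2 + (1-p-3*q)) * (1 - (3*q/2 + (1-p-3*q))))))) +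
    (28150173138547196746481904675154/75641117588331925456089127519245:ℝ) * (1 - (3*q/2 + (1-p-3*q))) * (3*q - ((3*q/2 + (1-p-3*q)) * (1 - (3*q/2 + (1-p-3*q))) * (83/50 - 19/50 * ((3*q/2 + (1-p-3*q)) * (1 - (3*q/2 + (1-p-3*q))))))) +
    (129942951309362022529029767762303227/1089232093271979726567683436277128000:ℝ) * p * p * p * p +
    (11363247155971606685057204610002749/108923209327197972656768343627712800:ℝ) * p * p * p * p * p +
    (3228342725902262012857262548187831/363077364423993242189227812092376000:ℝ) * p * p * p * p * p * p * p * p +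
    (1402474195682797190297339832732421/45384670552999155273653476511547000:ℝ) * p * p * p * p * p * p * p * q +
    (724874601574011970916487037795889/60512894070665540364871302015396000:ℝ) * p * p * p * p * p * p * p * (1-p-3*q) +
    (293312309088944320068160750337122537/4356928373087918906270733745108512000:ℝ) * p * p * p * p * p * p * (1-p-3*q) * (1-p-3*q) +
    (36971615744847327413795173727123/4538467055299915527365347651154700:ℝ) * p * p * p * p * p * p * ((3*q/2 + (1-p-3*q)) - 9/10) +
    (153571687422832671228442569008804131/4356928373087918906270733745108512000:ℝ) * p * p * p * p * p * (1-p-3*q) * (1-p-3*q) * (1-p-3*q) +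
    (122425320931196974464559149290030593/435692837308791890627073374510851200:ℝ) * p * p * p * p * p * (1-p-3*q) * (1-p-3*q) * ((3*q/2 + (1-p-3*q)) - 9/10) +
    (21828339339979444732087443298225003/136154011658997465820960429534641000:ℝ) * p * p * p * p * p * (1-p-3*q) * (1 - (3*q/2 + (1-p-3*q))) * (1 - (3*q/2 + (1-p-3*q))) +
    (2794616724008429775928061738024381/21784641865439594531353668725542560:ℝ) * p * p * p * p * (1-p-3*q) +
    (66891478479248500805623941166312529/272308023317994931641920859069282000:ℝ) * p * p * p * (1-p-3*q) * (1-p-3*q) * (1-p-3*q) * (1-p-3*q) +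
    (1879033446517019738602732178336497/7261547288479864843784556241847520:ℝ) * p * p * p * (1-p-3*q) * (1-p-3*q) * (1-p-3*q) * (1-p-3*q) * ((3*q/2 + (1-p-3*q)) - 9/10) +
    (2201805611187369987352012501616723/3403850291474936645524010738366025:ℝ) * p * p * p * (1-p-3*q) * ((3*q/2 + (1-p-3*q)) - 9/10) * (1 - (3*q/2 + (1-p-3*q))) * (1 - (3*q/2 + (1-p-3*q))) * (1 - (3*q/2 + (1-p-3*q))) +
    (2731064266017263172722595420142307/6051289407066554036487130201539600:ℝ) * p * p * p * ((3*q/2 + (1-p-3*q)) - 9/10) +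
    (10722088060511861186950750024245127/72615472884798648437845562418475200:ℝ) * p * p * q * (1-p-3*q) * (1-p-3*q) * (1-p-3*q) * (1-p-3*q) * (1-p-3*q) +
    (684662225105971976282798406487393693/1089232093271979726567683436277128000:ℝ) * p * p * (1-p-3*q) * (1-p-3*q) * (1-p-3*q) +
    (1257899948048093470310936193114581/13615401165899746582096042953464100:ℝ) * p * p * (1-p-3*q) * (1-p-3*q) * (1-p-3*q) * (1-p-3*q) * (1-p-3*q) * ((3*q/2 + (1-p-3*q)) - 9/10) +
    (69019712659062847641174620033083993/272308023317994931641920859069282000:ℝ) * p * p * (1 - (3*q/2 + (1-p-3*q))) +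
    (12546139933707359601033593301859/29046189153919459375138224967390080:ℝ) * p * q * (1-p-3*q) * (1-p-3*q) * (1-p-3*q) * (1-p-3*q) +
    (7709925728776702283301037171754959/72615472884798648437845562418475200:ℝ) * p * q * (1-p-3*q) * (1-p-3*q) * (1-p-3*q) * (1-p-3*q) * (1-p-3*q) +
    (2269342112436841063025964106005079/121025788141331080729742604030792000:ℝ) * p * (1-p-3*q) * (1-p-3*q) * (1-p-3*q) * (1-p-3*q) * (1 - (3*q/2 + (1-p-3*q))) +
    (161949883055612670484880109617519929/544616046635989863283841718138564000:ℝ) * p * (1-p-3*q) * (1-p-3*q) * (1-p-3*q) * (1 - (3*q/2 + (1-p-3*q))) +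
    (97873712437292099813646835007606791/544616046635989863283841718138564000:ℝ) * p * (1-p-3*q) * (1-p-3*q) * (1 - (3*q/2 + (1-p-3*q))) +
    (1012499940185637643463882515945984/5673083819124894409206684563943375:ℝ) * p * (1-p-3*q) * (1-p-3*q) * (1 - (3*q/2 + (1-p-3*q))) * (1 - (3*q/2 + (1-p-3*q))) * (1 - (3*q/2 + (1-p-3*q))) * (1 - (3*q/2 + (1-p-3*q))) * (1 - (3*q/2 + (1-p-3*q))) +
    (79168830895746357019782504858071/121025788141331080729742604030792000:ℝ) * q * q * (1-p-3*q) * (1-p-3*q) * (1-p-3*q) * (1-p-3*q) * (1-p-3*q) * (1-p-3*q) +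
    (257198988347783296416284190679271/3361827448370307798048405667522000:ℝ) * q * (1-p-3*q) * (1-p-3*q) * (1-p-3*q) * (1-p-3*q) * (1-p-3*q) * (1 - (3*q/2 + (1-p-3*q))) +
    (151573470633051575781593429987693/90769341105998310547306953023094000:ℝ) * (1-p-3*q) * (1-p-3*q) * (1-p-3*q) * (1-p-3*q) * (1-p-3*q) * (1-p-3*q) * (1 - (3*q/2 + (1-p-3*q))) * (1 - (3*q/2 + (1-p-3*q))) +
    (2841529616751626690659455035721037/22692335276499577636826738255773500:ℝ) * (1-p-3*q) * (1-p-3*q) * (1-p-3*q) * (1-p-3*q) * (1 - (3*q/2 + (1-p-3*q))) * (1 - (3*q/2 + (1-p-3*q))) * (1 - (3*q/2 + (1-p-3*q))) +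
    (1090653165410676384317786250782551/11346167638249788818413369127886750:ℝ) * (1-p-3*q) * (1-p-3*q) * (1-p-3*q) * (1 - (3*q/2 + (1-p-3*q))) * (1 - (3*q/2 + (1-p-3*q))) * (1 - (3*q/2 + (1-p-3*q))) +
    (1596489399583260204627813424824419/68077005829498732910480214767320500:ℝ) * (1-p-3*q) * (1-p-3*q) * (1 - (3*q/2 + (1-p-3*q))) * (1 - (3*q/2 + (1-p-3*q))) * (1 - (3*q/2 + (1-p-3*q))) +
    (23964130192137534323139462774580033/68077005829498732910480214767320500:ℝ) * (1-p-3*q) * ((3*q/2 + (1-p-3*q)) - 9/10) * (1 - (3*q/2 + (1-p-3*q))) * (1 - (3*q/2 + (1-p-3*q))) +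
    (762407126780126794366201994585869/85096257286873416138100268459150625:ℝ) * (1-p-3*q) * (1 - (3*q/2 + (1-p-3*q))) * (1 - (3*q/2 + (1-p-3*q))) +
    (409675267185231896201668074653423/13615401165899746582096042953464100:ℝ) * ((3*q/2 + (1-p-3*q)) - 9/10) * (1 - (3*q/2 + (1-p-3*q))) * (1 - (3*q/2 + (1-p-3*q))) +
    (57204169386592491613323801708416/1134616763824978881841336912788675:ℝ) * ((3*q/2 + (1-p-3*q)) - 9/10) * (1 - (3*q/2 + (1-p-3*q))) * (1 - (3*q/2 + (1-p-3*q))) * (1 - (3*q/2 + (1-p-3*q))) * (1 - (3*q/2 + (1-p-3*q))) * (1 - (3*q/2 + (1-p-3*q))) * (1 - (3*q/2 + (1-p-3*q))) * (1 - (3*q/2 + (1-p-3*q))) :=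
    (add_nonneg (add_nonneg (add_nonneg (add_nonneg (add_nonneg (add_nonneg (add_nonneg (add_nonneg (add_nonneg (add_nonneg (add_nonneg (add_nonneg (add_nonneg (add_nonneg (add_nonneg (add_nonneg (add_nonneg (add_nonneg (add_nonneg (add_nonneg (add_nonneg (add_nonneg (add_nonneg (add_nonneg (add_nonneg (add_nonneg (add_nonneg (add_nonneg (add_nonneg (add_nonneg (add_nonneg (add_nonneg (add_nonneg (add_nonneg (add_nonneg (add_nonneg (add_nonneg (add_nonneg (add_nonneg (add_nonneg (add_nonneg (mul_nonneg (mul_nonneg (by norm_num : (0:ℝ) ≤ (270761259248181012301597803988556/226923352764995776368267382557735:ℝ)) hp) hh) (mul_nonneg (mul_nonneg (mul_nonneg (by norm_num : (0:ℝ) ≤ (140804210063484515972997101846173/680770058294987329104802147673205:ℝ)) hp) hp) hh)) (mul_nonneg (mul_nonneg (mul_nonneg (mul_nonneg (mul_nonneg (by norm_num : (0:ℝ) ≤ (21775311900531500717594671706495/272308023317994931641920859069282:ℝ)) hp) hp) hp) hp) hh)) (mul_nonneg (mul_nonneg (mul_nonneg (mul_nonneg (mul_nonneg (by norm_num : (0:ℝ)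 ≤ (12081115178224178286425868005011/30256447035332770182435651007698:ℝ)) hp) hp) ht) ht) hh)) (mul_nonneg (mul_nonneg (mul_nonneg (by norm_num : (0:ℝ) ≤ (389107320316355537547237289277/226923352764995776368267382557735:ℝ)) hp) ht) hh)) (mul_nonneg (mul_nonneg (mul_nonneg (mul_nonneg (by norm_num : (0:ℝ) ≤ (197810100386482766796400466812571/1361540116589974658209604295346410:ℝ)) hp) ht) ht) hh)) (mul_nonneg (mul_nonneg (by norm_num : (0:ℝ) ≤ (28150173138547196746481904675154/75641117588331925456089127519245:ℝ)) hB) hh)) (mul_nonneg (mul_nonneg (mul_nonneg (mul_nonneg (by norm_num : (0:ℝ) ≤ (129942951309362022529029767762303227/1089232093271979726567683436277128000:ℝ)) hp) hp) hp) hp)) (mul_nonneg (mul_nonneg (mul_nonneg (mul_nonneg (mul_nonneg (by norm_num : (0:ℝ) ≤ (11363247155971606685057204610002749/108923209327197972656768343627712800:ℝ)) hp) hp) hp) hp) hp)) (mul_nonneg (mul_nonneg (mul_nonneg (mul_nonneg (mul_nonneg (mul_nonneg (mul_nonneg (mul_nonneg (by norm_num : (0:ℝ) ≤ (3228342725902262012857262548187831/363077364423993242189227812092376000:ℝ))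 hp) hp) hp) hp) hp) hp) hp) hp)) (mul_nonneg (mul_nonneg (mul_nonneg (mul_nonneg (mul_nonneg (mul_nonneg (mul_nonneg (mul_nonneg (by norm_num : (0:ℝ) ≤ (1402474195682797190297339832732421/45384670552999155273653476511547000:ℝ)) hp) hp) hp) hp) hp) hp) hp) hq)) (mul_nonneg (mul_nonneg (mul_nonneg (mul_nonneg (mul_nonneg (mul_nonneg (mul_nonneg (mul_nonneg (by norm_num : (0:ℝ) ≤ (724874601574011970916487037795889/60512894070665540364871302015396000:ℝ)) hp) hp) hp) hp) hp) hp) hp) ht)) (mul_nonneg (mul_nonneg (mul_nonneg (mul_nonneg (mul_nonneg (mul_nonneg (mul_nonneg (mul_nonneg (by norm_num : (0:ℝ) ≤ (293312309088944320068160750337122537/4356928373087918906270733745108512000:ℝ)) hp) hp) hp) hp) hp) hp) ht) ht)) (mul_nonneg (mul_nonneg (mul_nonneg (mul_nonneg (mul_nonneg (mul_nonneg (mul_nonneg (by norm_num : (0:ℝ) ≤ (36971615744847327413795173727123/4538467055299915527365347651154700:ℝ)) hp) hp) hp) hp) hp) hp) hA)) (mul_nonneg (mul_nonneg (mul_nonneg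 (mul_nonneg (mul_nonneg (mul_nonneg (mul_nonneg (mul_nonneg (by norm_num : (0:ℝ) ≤ (153571687422832671228442569008804131/4356928373087918906270733745108512000:ℝ)) hp) hp) hp) hp) hp) ht) ht) ht)) (mul_nonneg (mul_nonneg (mul_nonneg (mul_nonneg (mul_nonneg (mul_nonneg (mul_nonneg (mul_nonneg (by norm_num : (0:ℝ) ≤ (122425320931196974464559149290030593/435692837308791890627073374510851200:ℝ)) hp) hp) hp) hp) hp) ht) ht) hA)) (mul_nonneg (mul_nonneg (mul_nonneg (mul_nonneg (mul_nonneg (mul_nonneg (mul_nonneg (mul_nonneg (by norm_num : (0:ℝ) ≤ (21828339339979444732087443298225003/136154011658997465820960429534641000:ℝ)) hp) hp) hp) hp) hp) ht) hB) hB)) (mul_nonneg (mul_nonneg (mul_nonneg (mul_nonneg (mul_nonneg (by norm_num : (0:ℝ) ≤ (2794616724008429775928061738024381/21784641865439594531353668725542560:ℝ)) hp) hp) hp) hp) ht)) (mul_nonneg (mul_nonneg (mul_nonneg (mul_nonneg (mul_nonneg (mul_nonneg (mul_nonneg (by norm_num : (0:ℝ) ≤ (66891478479248500805623941166312529/272308023317994931641920859069282000:ℝ))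 hp) hp) hp) ht) ht) ht) ht)) (mul_nonneg (mul_nonneg (mul_nonneg (mul_nonneg (mul_nonneg (mul_nonneg (mul_nonneg (mul_nonneg (by norm_num : (0:ℝ) ≤ (1879033446517019738602732178336497/7261547288479864843784556241847520:ℝ)) hp) hp) hp) ht) ht) ht) ht) hA)) (mul_nonneg (mul_nonneg (mul_nonneg (mul_nonneg (mul_nonneg (mul_nonneg (mul_nonneg (mul_nonneg (by norm_num : (0:ℝ) ≤ (2201805611187369987352012501616723/3403850291474936645524010738366025:ℝ)) hp) hp) hp) ht) hA) hB) hB) hB)) (mul_nonneg (mul_nonneg (mul_nonneg (mul_nonneg (by norm_num : (0:ℝ) ≤ (2731064266017263172722595420142307/6051289407066554036487130201539600:ℝ)) hp) hp) hp) hA)) (mul_nonneg (mul_nonneg (mul_nonneg (mul_nonneg (mul_nonneg (mul_nonneg (mul_nonneg (mul_nonneg (by norm_num : (0:ℝ) ≤ (10722088060511861186950750024245127/72615472884798648437845562418475200:ℝ)) hp) hp) hq) ht) ht) ht) ht) ht)) (mul_nonneg (mul_nonneg (mul_nonneg (mul_nonneg (mul_nonneg (by norm_num : (0:ℝ) ≤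 (684662225105971976282798406487393693/1089232093271979726567683436277128000:ℝ)) hp) hp) ht) ht) ht)) (mul_nonneg (mul_nonneg (mul_nonneg (mul_nonneg (mul_nonneg (mul_nonneg (mul_nonneg (mul_nonneg (by norm_num : (0:ℝ) ≤ (1257899948048093470310936193114581/13615401165899746582096042953464100:ℝ)) hp) hp) ht) ht) ht) ht) ht) hA)) (mul_nonneg (mul_nonneg (mul_nonneg (by norm_num : (0:ℝ) ≤ (69019712659062847641174620033083993/272308023317994931641920859069282000:ℝ)) hp) hp) hB)) (mul_nonneg (mul_nonneg (mul_nonneg (mul_nonneg (mul_nonneg (mul_nonneg (by norm_num : (0:ℝ) ≤ (12546139933707359601033593301859/29046189153919459375138224967390080:ℝ)) hp) hq) ht) ht) ht) ht)) (mul_nonneg (mul_nonneg (mul_nonneg (mul_nonneg (mul_nonneg (mul_nonneg (mul_nonneg (by norm_num : (0:ℝ) ≤ (7709925728776702283301037171754959/72615472884798648437845562418475200:ℝ)) hp) hq) ht) ht) ht) ht) ht)) (mul_nonneg (mul_nonneg (mul_nonneg (mul_nonneg (mul_nonneg (mul_nonneg (by norm_num : (0:ℝ) ≤ (2269342112436841063025964106005079/121025788141331080729742604030792000:ℝ))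 hp) ht) ht) ht) ht) hB)) (mul_nonneg (mul_nonneg (mul_nonneg (mul_nonneg (mul_nonneg (by norm_num : (0:ℝ) ≤ (161949883055612670484880109617519929/544616046635989863283841718138564000:ℝ)) hp) ht) ht) ht) hB)) (mul_nonneg (mul_nonneg (mul_nonneg (mul_nonneg (by norm_num : (0:ℝ) ≤ (97873712437292099813646835007606791/544616046635989863283841718138564000:ℝ)) hp) ht) ht) hB)) (mul_nonneg (mul_nonneg (mul_nonneg (mul_nonneg (mul_nonneg (mul_nonneg (mul_nonneg (mul_nonneg (by norm_num : (0:ℝ) ≤ (1012499940185637643463882515945984/5673083819124894409206684563943375:ℝ)) hp) ht) ht) hB) hB) hB) hB) hB)) (mul_nonneg (mul_nonneg (mul_nonneg (mul_nonneg (mul_nonneg (mul_nonneg (mul_nonneg (mul_nonneg (by norm_num : (0:ℝ) ≤ (79168830895746357019782504858071/121025788141331080729742604030792000:ℝ)) hq) hq) ht) ht) ht) ht) ht) ht)) (mul_nonneg (mul_nonneg (mul_nonneg (mul_nonneg (mul_nonneg (mul_nonneg (mul_nonneg (by norm_num : (0:ℝ) ≤ (257198988347783296416284190679271/3361827448370307798048405667522000:ℝ))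 hq) ht) ht) ht) ht) ht) hB)) (mul_nonneg (mul_nonneg (mul_nonneg (mul_nonneg (mul_nonneg (mul_nonneg (mul_nonneg (mul_nonneg (by norm_num : (0:ℝ) ≤ (151573470633051575781593429987693/90769341105998310547306953023094000:ℝ)) ht) ht) ht) ht) ht) ht) hB) hB)) (mul_nonneg (mul_nonneg (mul_nonneg (mul_nonneg (mul_nonneg (mul_nonneg (mul_nonneg (by norm_num : (0:ℝ) ≤ (2841529616751626690659455035721037/22692335276499577636826738255773500:ℝ)) ht) ht) ht) ht) hB) hB) hB)) (mul_nonneg (mul_nonneg (mul_nonneg (mul_nonneg (mul_nonneg (mul_nonneg (by norm_num : (0:ℝ) ≤ (1090653165410676384317786250782551/11346167638249788818413369127886750:ℝ)) ht) ht) ht) hB) hB) hB)) (mul_nonneg (mul_nonneg (mul_nonneg (mul_nonneg (mul_nonneg (by norm_num : (0:ℝ) ≤ (1596489399583260204627813424824419/68077005829498732910480214767320500:ℝ)) ht) ht) hB) hB) hB)) (mul_nonneg (mul_nonneg (mul_nonneg (mul_nonneg (by norm_num : (0:ℝ) ≤ (23964130192137534323139462774580033/68077005829498732910480214767320500:ℝ))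 ht) hA) hB) hB)) (mul_nonneg (mul_nonneg (mul_nonneg (by norm_num : (0:ℝ) ≤ (762407126780126794366201994585869/85096257286873416138100268459150625:ℝ)) ht) hB) hB)) (mul_nonneg (mul_nonneg (mul_nonneg (by norm_num : (0:ℝ) ≤ (409675267185231896201668074653423/13615401165899746582096042953464100:ℝ)) hA) hB) hB)) (mul_nonneg (mul_nonneg (mul_nonneg (mul_nonneg (mul_nonneg (mul_nonneg (mul_nonneg (mul_nonneg (by norm_num : (0:ℝ) ≤ (57204169386592491613323801708416/1134616763824978881841336912788675:ℝ)) hA) hB) hB) hB) hB) hB) hB) hB))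
  linarith [hS]

set_option maxHeartbeats 2000000 in
lemma core_g (p q : ℝ) (hp : 0 ≤ p) (hq : 0 ≤ q) (ht : 0 ≤ 1-p-3*q)
    (h : 3*q ≤ gOuter (3*q/2 + (1-p-3*q))) :
    3*q*(2*p+q) ≤ gOuter (1 - p^2 - 3*q*(2*p+q)/2) := by
  rw [gOuter_eq] at h ⊢
  have hh : (0:ℝ) ≤ (((3*q/2 + (1-p-3*q)) * (1 - (3*q/2 + (1-p-3*q))) * (2 - 2/3 * ((3*q/2 + (1-p-3*q)) * (1 - (3*q/2 + (1-p-3*q)))))) - 3*q) := sub_nonneg.2 h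
  have hS : (0:ℝ) ≤ (11497/9648:ℝ) * p^0 * q^2 * (1-p-3*q)^1 * (((3*q/2 + (1-p-3*q)) * (1 - (3*q/2 + (1-p-3*q))) * (2 - 2/3 * ((3*q/2 + (1-p-3*q)) * (1 - (3*q/2 + (1-p-3*q)))))) - 3*q) +
      (1783/402:ℝ) * p^0 * q^3 * (1-p-3*q)^0 * (((3*q/2 + (1-p-3*q)) * (1 - (3*q/2 + (1-p-3*q))) * (2 - 2/3 * ((3*q/2 + (1-p-3*q)) * (1 - (3*q/2 + (1-p-3*q)))))) - 3*q) +
      (575/4824:ℝ) * p^0 * q^3 * (1-p-3*q)^1 * (((3*q/2 + (1-p-3*q)) * (1 - (3*q/2 + (1-p-3*q))) * (2 - 2/3 * ((3*q/2 + (1-p-3*q)) * (1 - (3*q/2 + (1-p-3*q)))))) - 3*q) +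
      (11497/28944:ℝ) * p^1 * q^0 * (1-p-3*q)^2 * (((3*q/2 + (1-p-3*q)) * (1 - (3*q/2 + (1-p-3*q))) * (2 - 2/3 * ((3*q/2 + (1-p-3*q)) * (1 - (3*q/2 + (1-p-3*q)))))) - 3*q) +
      (29/6:ℝ) * p^1 * q^1 * (1-p-3*q)^0 * (((3*q/2 + (1-p-3*q)) * (1 - (3*q/2 + (1-p-3*q))) * (2 - 2/3 * ((3*q/2 + (1-p-3*q)) * (1 - (3*q/2 + (1-p-3*q)))))) - 3*q) +
      (88033/57888:ℝ) * p^1 * q^1 * (1-p-3*q)^1 * (((3*q/2 + (1-p-3*q)) * (1 - (3*q/2 + (1-p-3*q))) * (2 - 2/3 * ((3*q/2 + (1-p-3*q)) * (1 - (3*q/2 + (1-p-3*q)))))) - 3*q) +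
      (22633/28944:ℝ) * p^1 * q^1 * (1-p-3*q)^2 * (((3*q/2 + (1-p-3*q)) * (1 - (3*q/2 + (1-p-3*q))) * (2 - 2/3 * ((3*q/2 + (1-p-3*q)) * (1 - (3*q/2 + (1-p-3*q)))))) - 3*q) +
      (19/24:ℝ) * p^1 * q^3 * (1-p-3*q)^0 * (((3*q/2 + (1-p-3*q)) * (1 - (3*q/2 + (1-p-3*q))) * (2 - 2/3 * ((3*q/2 + (1-p-3*q)) * (1 - (3*q/2 + (1-p-3*q)))))) - 3*q) +
      (10291/14472:ℝ) * p^2 * q^0 * (1-p-3*q)^2 * (((3*q/2 + (1-p-3*q)) * (1 - (3*q/2 + (1-p-3*q))) * (2 - 2/3 * ((3*q/2 + (1-p-3*q)) * (1 - (3*q/2 + (1-p-3*q)))))) - 3*q) +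
      (127/24:ℝ) * p^2 * q^1 * (1-p-3*q)^0 * (((3*q/2 + (1-p-3*q)) * (1 - (3*q/2 + (1-p-3*q))) * (2 - 2/3 * ((3*q/2 + (1-p-3*q)) * (1 - (3*q/2 + (1-p-3*q)))))) - 3*q) +
      (36865/28944:ℝ) * p^2 * q^1 * (1-p-3*q)^1 * (((3*q/2 + (1-p-3*q)) * (1 - (3*q/2 + (1-p-3*q))) * (2 - 2/3 * ((3*q/2 + (1-p-3*q)) * (1 - (3*q/2 + (1-p-3*q)))))) - 3*q) +
      (47/24:ℝ) * p^3 * q^0 * (1-p-3*q)^0 * (((3*q/2 + (1-p-3*q)) * (1 - (3*q/2 + (1-p-3*q))) * (2 - 2/3 * ((3*q/2 + (1-p-3*q)) * (1 - (3*q/2 + (1-p-3*q)))))) - 3*q) +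
      (1/24:ℝ) * p^4 * q^0 * (1-p-3*q)^0 * (((3*q/2 + (1-p-3*q)) * (1 - (3*q/2 + (1-p-3*q))) * (2 - 2/3 * ((3*q/2 + (1-p-3*q)) * (1 - (3*q/2 + (1-p-3*q)))))) - 3*q) +
      (1849/1608:ℝ) * p^0 * q^4 * (1-p-3*q)^1 +
      (25501/6432:ℝ) * p^0 * q^5 * (1-p-3*q)^0 +
      (16879/8576:ℝ) * p^0 * q^6 * (1-p-3*q)^2 +
      (19923/2144:ℝ) * p^0 * q^7 * (1-p-3*q)^0 +
      (63735/8576:ℝ) * p^0 * q^7 * (1-p-3*q)^1 +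
      (66269/6432:ℝ) * p^1 * q^3 * (1-p-3*q)^3 +
      (2324437/77184:ℝ) * p^1 * q^4 * (1-p-3*q)^2 +
      (4085/12864:ℝ) * p^1 * q^4 * (1-p-3*q)^3 +
      (64061/6432:ℝ) * p^1 * q^5 * (1-p-3*q)^0 +
      (755225/51456:ℝ) * p^1 * q^5 * (1-p-3*q)^1 +
      (2941/4288:ℝ) * p^1 * q^6 * (1-p-3*q)^0 +
      (17447/14472:ℝ) * p^2 * q^0 * (1-p-3*q)^5 +
      (120307/14472:ℝ) * p^2 * q^1 * (1-p-3*q)^2 +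
      (33215/9648:ℝ) * p^2 * q^1 * (1-p-3*q)^4 +
      (22513/14472:ℝ) * p^2 * q^2 * (1-p-3*q)^4 +
      (3:ℝ) * p^2 * q^3 * (1-p-3*q)^0 +
      (104107/14472:ℝ) * p^2 * q^3 * (1-p-3*q)^3 +
      (120443/12864:ℝ) * p^2 * q^4 * (1-p-3*q)^2 +
      (37411/12864:ℝ) * p^2 * q^5 * (1-p-3*q)^1 +
      (19/4:ℝ) * p^3 * q^0 * (1-p-3*q)^2 +
      (3761/1608:ℝ) * p^3 * q^0 * (1-p-3*q)^3 +
      (1789/10854:ℝ) * p^3 * q^0 * (1-p-3*q)^5 +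
      (14899/28944:ℝ) * p^3 * q^1 * (1-p-3*q)^2 :=
    (add_nonneg (add_nonneg (add_nonneg (add_nonneg (add_nonneg (add_nonneg (add_nonneg (add_nonneg (add_nonneg (add_nonneg (add_nonneg (add_nonneg (add_nonneg (add_nonneg (add_nonneg (add_nonneg (add_nonneg (add_nonneg (add_nonneg (add_nonneg (add_nonneg (add_nonneg (add_nonneg (add_nonneg (add_nonneg (add_nonneg (add_nonneg (add_nonneg (add_nonneg (add_nonneg (add_nonneg (add_nonneg (add_nonneg (add_nonneg (add_nonneg (mul_nonneg (mul_nonneg (mul_nonneg (mul_nonneg (by norm_num : (0:ℝ) ≤ (11497/9648:ℝ)) (pow_nonneg hp 0)) (pow_nonneg hq 2)) (pow_nonneg ht 1)) hh) (mul_nonneg (mul_nonneg (mul_nonneg (mul_nonneg (by norm_num : (0:ℝ) ≤ (1783/402:ℝ)) (pow_nonneg hp 0)) (pow_nonneg hq 3)) (pow_nonneg ht 0)) hh)) (mul_nonneg (mul_nonneg (mul_nonneg (mul_nonneg (by norm_num : (0:ℝ) ≤ (575/4824:ℝ)) (pow_nonneg hp 0)) (pow_nonneg hq 3)) (pow_nonneg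 ht 1)) hh)) (mul_nonneg (mul_nonneg (mul_nonneg (mul_nonneg (by norm_num : (0:ℝ) ≤ (11497/28944:ℝ)) (pow_nonneg hp 1)) (pow_nonneg hq 0)) (pow_nonneg ht 2)) hh)) (mul_nonneg (mul_nonneg (mul_nonneg (mul_nonneg (by norm_num : (0:ℝ) ≤ (29/6:ℝ)) (pow_nonneg hp 1)) (pow_nonneg hq 1)) (pow_nonneg ht 0)) hh)) (mul_nonneg (mul_nonneg (mul_nonneg (mul_nonneg (by norm_num : (0:ℝ) ≤ (88033/57888:ℝ)) (pow_nonneg hp 1)) (pow_nonneg hq 1)) (pow_nonneg ht 1)) hh)) (mul_nonneg (mul_nonneg (mul_nonneg (mul_nonneg (by norm_num : (0:ℝ) ≤ (22633/28944:ℝ)) (pow_nonneg hp 1)) (pow_nonneg hq 1)) (pow_nonneg ht 2)) hh)) (mul_nonneg (mul_nonneg (mul_nonneg (mul_nonneg (by norm_num : (0:ℝ) ≤ (19/24:ℝ)) (pow_nonneg hp 1)) (pow_nonneg hq 3)) (pow_nonneg ht 0)) hh)) (mul_nonneg (mul_nonneg (mul_nonneg (mul_nonneg (by norm_num : (0:ℝ)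 ≤ (10291/14472:ℝ)) (pow_nonneg hp 2)) (pow_nonneg hq 0)) (pow_nonneg ht 2)) hh)) (mul_nonneg (mul_nonneg (mul_nonneg (mul_nonneg (by norm_num : (0:ℝ) ≤ (127/24:ℝ)) (pow_nonneg hp 2)) (pow_nonneg hq 1)) (pow_nonneg ht 0)) hh)) (mul_nonneg (mul_nonneg (mul_nonneg (mul_nonneg (by norm_num : (0:ℝ) ≤ (36865/28944:ℝ)) (pow_nonneg hp 2)) (pow_nonneg hq 1)) (pow_nonneg ht 1)) hh)) (mul_nonneg (mul_nonneg (mul_nonneg (mul_nonneg (by norm_num : (0:ℝ) ≤ (47/24:ℝ)) (pow_nonneg hp 3)) (pow_nonneg hq 0)) (pow_nonneg ht 0)) hh)) (mul_nonneg (mul_nonneg (mul_nonneg (mul_nonneg (by norm_num : (0:ℝ) ≤ (1/24:ℝ)) (pow_nonneg hp 4)) (pow_nonneg hq 0)) (pow_nonneg ht 0)) hh)) (mul_nonneg (mul_nonneg (mul_nonneg (by norm_num : (0:ℝ) ≤ (1849/1608:ℝ)) (pow_nonneg hp 0)) (pow_nonneg hq 4)) (pow_nonneg ht 1))) (mul_nonneg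 (mul_nonneg (mul_nonneg (by norm_num : (0:ℝ) ≤ (25501/6432:ℝ)) (pow_nonneg hp 0)) (pow_nonneg hq 5)) (pow_nonneg ht 0))) (mul_nonneg (mul_nonneg (mul_nonneg (by norm_num : (0:ℝ) ≤ (16879/8576:ℝ)) (pow_nonneg hp 0)) (pow_nonneg hq 6)) (pow_nonneg ht 2))) (mul_nonneg (mul_nonneg (mul_nonneg (by norm_num : (0:ℝ) ≤ (19923/2144:ℝ)) (pow_nonneg hp 0)) (pow_nonneg hq 7)) (pow_nonneg ht 0))) (mul_nonneg (mul_nonneg (mul_nonneg (by norm_num : (0:ℝ) ≤ (63735/8576:ℝ)) (pow_nonneg hp 0)) (pow_nonneg hq 7)) (pow_nonneg ht 1))) (mul_nonneg (mul_nonneg (mul_nonneg (by norm_num : (0:ℝ) ≤ (66269/6432:ℝ)) (pow_nonneg hp 1)) (pow_nonneg hq 3)) (pow_nonneg ht 3))) (mul_nonneg (mul_nonneg (mul_nonneg (by norm_num : (0:ℝ) ≤ (2324437/77184:ℝ)) (pow_nonneg hp 1)) (pow_nonneg hq 4)) (pow_nonneg ht 2))) (mul_nonneg (mul_nonneg (mul_nonneg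 (by norm_num : (0:ℝ) ≤ (4085/12864:ℝ)) (pow_nonneg hp 1)) (pow_nonneg hq 4)) (pow_nonneg ht 3))) (mul_nonneg (mul_nonneg (mul_nonneg (by norm_num : (0:ℝ) ≤ (64061/6432:ℝ)) (pow_nonneg hp 1)) (pow_nonneg hq 5)) (pow_nonneg ht 0))) (mul_nonneg (mul_nonneg (mul_nonneg (by norm_num : (0:ℝ) ≤ (755225/51456:ℝ)) (pow_nonneg hp 1)) (pow_nonneg hq 5)) (pow_nonneg ht 1))) (mul_nonneg (mul_nonneg (mul_nonneg (by norm_num : (0:ℝ) ≤ (2941/4288:ℝ)) (pow_nonneg hp 1)) (pow_nonneg hq 6)) (pow_nonneg ht 0))) (mul_nonneg (mul_nonneg (mul_nonneg (by norm_num : (0:ℝ) ≤ (17447/14472:ℝ)) (pow_nonneg hp 2)) (pow_nonneg hq 0)) (pow_nonneg ht 5))) (mul_nonneg (mul_nonneg (mul_nonneg (by norm_num : (0:ℝ) ≤ (120307/14472:ℝ)) (pow_nonneg hp 2)) (pow_nonneg hq 1)) (pow_nonneg ht 2))) (mul_nonneg (mul_nonneg (mul_nonneg (by norm_num : (0:ℝ)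 ≤ (33215/9648:ℝ)) (pow_nonneg hp 2)) (pow_nonneg hq 1)) (pow_nonneg ht 4))) (mul_nonneg (mul_nonneg (mul_nonneg (by norm_num : (0:ℝ) ≤ (22513/14472:ℝ)) (pow_nonneg hp 2)) (pow_nonneg hq 2)) (pow_nonneg ht 4))) (mul_nonneg (mul_nonneg (mul_nonneg (by norm_num : (0:ℝ) ≤ (3:ℝ)) (pow_nonneg hp 2)) (pow_nonneg hq 3)) (pow_nonneg ht 0))) (mul_nonneg (mul_nonneg (mul_nonneg (by norm_num : (0:ℝ) ≤ (104107/14472:ℝ)) (pow_nonneg hp 2)) (pow_nonneg hq 3)) (pow_nonneg ht 3))) (mul_nonneg (mul_nonneg (mul_nonneg (by norm_num : (0:ℝ) ≤ (120443/12864:ℝ)) (pow_nonneg hp 2)) (pow_nonneg hq 4)) (pow_nonneg ht 2))) (mul_nonneg (mul_nonneg (mul_nonneg (by norm_num : (0:ℝ) ≤ (37411/12864:ℝ)) (pow_nonneg hp 2)) (pow_nonneg hq 5)) (pow_nonneg ht 1))) (mul_nonneg (mul_nonneg (mul_nonneg (by norm_num : (0:ℝ) ≤ (19/4:ℝ)) (pow_nonneg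 hp 3)) (pow_nonneg hq 0)) (pow_nonneg ht 2))) (mul_nonneg (mul_nonneg (mul_nonneg (by norm_num : (0:ℝ) ≤ (3761/1608:ℝ)) (pow_nonneg hp 3)) (pow_nonneg hq 0)) (pow_nonneg ht 3))) (mul_nonneg (mul_nonneg (mul_nonneg (by norm_num : (0:ℝ) ≤ (1789/10854:ℝ)) (pow_nonneg hp 3)) (pow_nonneg hq 0)) (pow_nonneg ht 5))) (mul_nonneg (mul_nonneg (mul_nonneg (by norm_num : (0:ℝ) ≤ (14899/28944:ℝ)) (pow_nonneg hp 3)) (pow_nonneg hq 1)) (pow_nonneg ht 2)))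
  linarith [hS]


theorem tighter_trapping_region (W : TECQuint) (hW : W.IsTEC) (hbal : W.Balanced) :
    (fInner (entropy W) ≤ edgeMass W →
      fInner (entropy (ser W)) ≤ edgeMass (ser W) ∧
        fInner (entropy (par W)) ≤ edgeMass (par W)) ∧
    (edgeMass W ≤ gOuter (entropy W) →
      edgeMass (ser W) ≤ gOuter (entropy (ser W)) ∧
        edgeMass (par W) ≤ gOuter (entropy (par W))) := by
  obtain ⟨hp, hq, hr, hs, ht0, hsum⟩ := hW
  obtain ⟨hqr, hrs⟩ := hbal
  have hr' : W.r = W.q := hqr.symm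
  have hs' : W.s = W.q := by rw [← hrs, ← hqr]
  rw [hr', hs'] at hsum
  have hT : W.t = 1 - W.p - 3 * W.q := by linarith
  have hEW : edgeMass W = 3 * W.q := by
    simp only [edgeMass, hr', hs']; ring
  have hHW : entropy W = 3 * W.q / 2 + (1 - W.p - 3 * W.q) := by
    simp only [entropy, hr', hs', hT]; ring
  have hES : edgeMass (ser W) = 3 * W.q * (2 * W.p + W.q) := by
    simp only [edgeMass, ser, hr', hs']; ring
  have hHS : entropy (ser W) = 1 - W.p ^ 2 - 3 * W.q * (2 * W.p + W.q) / 2 := by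
    simp only [entropy, ser, hr', hs']; ring
  have hEP : edgeMass (par W) = 3 * W.q * (2 * W.t + W.q) := by
    simp only [edgeMass, par, hr', hs']; ring
  have hHP : entropy (par W) = 1 - (1 - W.t ^ 2 - 3 * W.q * (2 * W.t + W.q) / 2) := by
    simp only [entropy, par, hr', hs']; ring
  have htp : 0 ≤ 1 - W.p - 3 * W.q := by linarith
  have hpp : 0 ≤ 1 - W.t - 3 * W.q := by linarith
  have hflip : (3 * W.q / 2 + (1 - W.t - 3 * W.q)) =
      1 - (3 * W.q / 2 + (1 - W.p - 3 * W.q)) := by linarith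
  constructor
  · intro h
    rw [hHW, hEW] at h
    constructor
    · rw [hHS, hES]
      exact core_f W.p W.q hp hq htp h
    · rw [hHP, hEP, fInner_symm]
      apply core_f W.t W.q ht0 hq hpp
      rw [hflip, fInner_symm]
      exact h
  · intro h
    rw [hHW, hEW] at h
    constructor
    · rw [hHS, hES]
      exact core_g W.p W.q hp hq htp h
    · rw [hHP, hEP, gOuter_symm]
      apply core_g W.t W.q ht0 hq hpp
      rw [hflip, gOuter_symm]
      exact h
end
end

section
/- For tetrahedral erasure channels U = (p,q,r,s,t) and V = (p',q',r',s',t'), define the dual U* = (t,s,r,q,p). Then H(U*) = 1 − H(U), E(U*) = E(U), A(U*) = A(U), and duality swaps serial with parallel combination: (U Ｓ V)* = U* Ｐ V*. -/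
noncomputable section

open TECQuint

/-- The dual channel `W* = (t, s, r, q, p)`. -/
def dual (W : TECQuint) : TECQuint := ⟨W.t, W.s, W.r, W.q, W.p⟩

/-- The serial combination `U Ｓ V`. -/
def serComb (U V : TECQuint) : TECQuint where
  p := U.p * V.p
  q := U.p * V.q + U.q * V.q + U.q * V.p
  r := U.p * V.r + U.r * V.r + U.r * V.p
  s := U.p * V.s + U.s * V.s + U.s * V.p
  t := 1 - (U.p * V.p + (U.p * V.q + U.q * V.q + U.q * V.p)
      + (U.p * V.r + U.r * V.r + U.r * V.p)
      + (U.p * V.s + U.s * V.s + U.s * V.p))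

/-- The parallel combination `U Ｐ V`. -/
def parComb (U V : TECQuint) : TECQuint where
  p := 1 - ((U.t * V.q + U.q * V.q + U.q * V.t)
      + (U.t * V.r + U.r * V.r + U.r * V.t)
      + (U.t * V.s + U.s * V.s + U.s * V.t) + U.t * V.t)
  q := U.t * V.q + U.q * V.q + U.q * V.t
  r := U.t * V.r + U.r * V.r + U.r * V.t
  s := U.t * V.s + U.s * V.s + U.s * V.t
  t := U.t * V.t

theorem duality (U V : TECQuint) (hU : U.IsTEC) (hV : V.IsTEC) :
    entropy (dual U) = 1 - entropy U ∧
      edgeMass (dual U) = edgeMass U ∧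
      inertia (dual U) = inertia U ∧
      dual (serComb U V) = parComb (dual U) (dual V) := by
  obtain ⟨_,_,_,_,_,h⟩ := hU
  refine ⟨?_, ?_, ?_, ?_⟩
  · simp only [entropy, dual]; linarith
  · simp only [edgeMass, dual]; ring
  · simp only [inertia, dual]; ring
  · simp only [dual, serComb, parComb, TECQuint.mk.injEq]
    refine ⟨by ring, trivial, trivial, trivial, trivial⟩
end
end
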